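/- arXiv:2207.12366 — 9 statements merged into one kernel-verified Lean document; each statement's English description precedes it below -/
import Mathlib

section
/- For all positive integers k and n, the number of partitions of n into parts not divisible by k equals the number of partitions of n in which every part occurs fewer than k times. -/
open Multiset Finset

namespace GlaisherAux

/-! ### Base-`k` digit lemmas -/

lemma sum_digits_eq_mod {k : ℕ} (hk : 2 ≤ k) (T : ℕ) :
    ∀ m : ℕ, ∑ e ∈ Finset.range T, (m / k ^ e % k) * k ^ e = m % k ^ T := by
  induction T with
  | zero => intro m; simp [Nat.mod_one]
  | succ T ih =>
    intro m
    rw [Finset.sum_range_succ']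
    have h2 : ∑ e ∈ Finset.range T, (m / k ^ (e + 1) % k) * k ^ (e + 1)
        = (∑ e ∈ Finset.range T, ((m / k) / k ^ e % k) * k ^ e) * k := by
      rw [Finset.sum_mul]
      refine Finset.sum_congr rfl fun e _ => ?_
      have hdd : m / k ^ (e + 1) = m / k / k ^ e := by
        rw [Nat.div_div_eq_div_mul, ← pow_succ']
      rw [hdd, pow_succ]; ring
    rw [h2, ih (m / k)]
    have hmm := @Nat.mod_mul k (k ^ T) m
    rw [pow_succ', hmm]
    simp only [pow_zero, Nat.div_one, mul_one]
    ring

lemma digit_of_sum {k : ℕ} (hk : 2 ≤ k) :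
    ∀ (T : ℕ) (a : ℕ → ℕ), (∀ e, a e < k) → ∀ f, f < T →
      (∑ e ∈ Finset.range T, a e * k ^ e) / k ^ f % k = a f := by
  intro T
  induction T with
  | zero => intro a ha f hf; omega
  | succ T ih =>
    intro a ha f hf
    have hkpos : 0 < k := by omega
    have hsplit : ∑ e ∈ Finset.range (T + 1), a e * k ^ e
        = k * (∑ e ∈ Finset.range T, a (e + 1) * k ^ e) + a 0 := by
      rw [Finset.sum_range_succ']
      simp only [pow_zero, mul_one]
      congr 1
      rw [Finset.mul_sum]
      refine Finset.sum_congr rfl fun e _ => ?_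
      rw [pow_succ']; ring
    rw [hsplit]
    match f with
    | 0 =>
      simp only [pow_zero, Nat.div_one]
      rw [Nat.mul_add_mod, Nat.mod_eq_of_lt (ha 0)]
    | f + 1 =>
      have h3 : (k * (∑ e ∈ Finset.range T, a (e + 1) * k ^ e) + a 0) / k ^ (f + 1)
          = (∑ e ∈ Finset.range T, a (e + 1) * k ^ e) / k ^ f := by
        rw [pow_succ', ← Nat.div_div_eq_div_mul, Nat.mul_add_div hkpos,
          Nat.div_eq_of_lt (ha 0), add_zero]
      rw [h3]
      exact ih (fun e => a (e + 1)) (fun e => ha (e + 1)) f (by omega)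

/-! ### `maxPowDiv` facts -/

lemma pow_maxPowDiv_dvd (k i : ℕ) : k ^ (k.maxPowDiv i) ∣ i :=
  Nat.maxPowDiv.pow_dvd

lemma div_maxPowDiv_mul {k i : ℕ} :
    i / k ^ (k.maxPowDiv i) * k ^ (k.maxPowDiv i) = i :=
  Nat.div_mul_cancel (pow_maxPowDiv_dvd k i)

lemma maxPowDiv_div_pos {k i : ℕ} (hi : 0 < i) : 0 < i / k ^ (k.maxPowDiv i) := by
  rcases Nat.eq_zero_or_pos (i / k ^ (k.maxPowDiv i)) with h | h
  · exfalso
    have h2 := @div_maxPowDiv_mul k i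
    rw [h] at h2
    simp at h2
    omega
  · exact h

lemma not_dvd_maxPowDiv_div {k i : ℕ} (hk : 2 ≤ k) (hi : 0 < i) :
    ¬ k ∣ i / k ^ (k.maxPowDiv i) := by
  rintro ⟨c, hc⟩
  have h2 : i = k ^ (k.maxPowDiv i + 1) * c :=
    calc i = i / k ^ (k.maxPowDiv i) * k ^ (k.maxPowDiv i) := div_maxPowDiv_mul.symm
      _ = k * c * k ^ (k.maxPowDiv i) := by rw [hc]
      _ = k ^ (k.maxPowDiv i + 1) * c := by rw [pow_succ]; ring
  have : k.maxPowDiv i + 1 ≤ k.maxPowDiv i :=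
    (Nat.pow_dvd_iff_le_padicValNat (by omega : k ≠ 1) hi.ne').mp ⟨c, h2⟩
  omega

lemma maxPowDiv_eq_zero {k j : ℕ} (hjk : ¬ k ∣ j) : k.maxPowDiv j = 0 := by
  by_contra h
  exact hjk (dvd_trans (dvd_pow_self k h) (pow_maxPowDiv_dvd k j))

lemma maxPowDiv_mul_pow {k j : ℕ} (hk : 2 ≤ k) (hj : 0 < j) (hjk : ¬ k ∣ j) (e : ℕ) :
    k.maxPowDiv (j * k ^ e) = e := by
  rw [mul_comm, show k.maxPowDiv (k ^ e * j) = k.maxPowDiv j + e from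
    Nat.maxPowDiv.base_pow_mul (by omega) hj.ne' e, maxPowDiv_eq_zero hjk, zero_add]

/-- uniqueness of the factorization `i = j * k ^ e` with `¬ k ∣ j` -/
lemma factor_unique {k j e i : ℕ} (hk : 2 ≤ k) (hj : 0 < j) (hjk : ¬ k ∣ j)
    (h : j * k ^ e = i) : e = k.maxPowDiv i ∧ j = i / k ^ (k.maxPowDiv i) := by
  have he : k.maxPowDiv i = e := by rw [← h, maxPowDiv_mul_pow hk hj hjk]
  refine ⟨he.symm, ?_⟩
  rw [he, ← h, Nat.mul_div_cancel j (pow_pos (by omega : 0 < k) e)]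

/-! ### generalities -/

lemma sum_finsetSum {ι : Type*} (s : Finset ι) (f : ι → Multiset ℕ) :
    (∑ i ∈ s, f i).sum = ∑ i ∈ s, (f i).sum :=
  map_sum Multiset.sumAddMonoidHom f s

lemma card_le_sum' (s : Multiset ℕ) (h : ∀ x ∈ s, 1 ≤ x) : Multiset.card s ≤ s.sum := by
  induction s using Multiset.induction_on with
  | empty => simp
  | cons a s ih =>
    simp only [Multiset.card_cons, Multiset.sum_cons]
    have h1 := h a (Multiset.mem_cons_self a s)
    have h2 := ih fun x hx => h x (Multiset.mem_cons_of_mem hx)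
    omega

lemma part_le {n : ℕ} (p : n.Partition) {a : ℕ} (ha : a ∈ p.parts) : a ≤ n :=
  (Multiset.le_sum_of_mem ha).trans_eq p.parts_sum

lemma sum_eq_sum_count {n : ℕ} (p : n.Partition) :
    ∑ a ∈ p.parts.toFinset, p.parts.count a * a = n := by
  have h := congrArg Multiset.sum (Multiset.toFinset_sum_count_nsmul_eq p.parts)
  rw [p.parts_sum, sum_finsetSum] at h
  have h2 : ∀ a ∈ p.parts.toFinset,
      p.parts.count a * a = (p.parts.count a • ({a} : Multiset ℕ)).sum := by
    intro a _
    rw [Multiset.nsmul_singleton, Multiset.sum_replicate, smul_eq_mul]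
  rw [Finset.sum_congr rfl h2]
  exact h

lemma count_le {n : ℕ} (p : n.Partition) (a : ℕ) : p.parts.count a ≤ n := by
  calc p.parts.count a ≤ Multiset.card p.parts := Multiset.count_le_card _ _
    _ ≤ p.parts.sum := card_le_sum' _ fun x hx => p.parts_pos hx
    _ = n := p.parts_sum

lemma n_lt_pow {k n : ℕ} (hk : 2 ≤ k) : n < k ^ (n + 1) :=
  calc n < 2 ^ n := Nat.lt_two_pow_self
    _ ≤ 2 ^ (n + 1) := Nat.pow_le_pow_right (by omega) (by omega)
    _ ≤ k ^ (n + 1) := Nat.pow_le_pow_left hk _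

/-! ### The two maps -/

/-- Glaisher map from partitions with no part divisible by `k` to partitions with all
multiplicities `< k`: spread each multiplicity out in base `k`. -/
def Fmap {n : ℕ} (k : ℕ) (hk : 2 ≤ k) (p : n.Partition) : n.Partition where
  parts := ∑ j ∈ p.parts.toFinset, ∑ e ∈ Finset.range (n + 1),
    Multiset.replicate (p.parts.count j / k ^ e % k) (j * k ^ e)
  parts_pos := by
    intro i hi
    rw [Multiset.mem_sum] at hi
    obtain ⟨j, hj, hi⟩ := hi
    rw [Multiset.mem_sum] at hi
    obtain ⟨e, he, hi⟩ := hi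
    rw [Multiset.eq_of_mem_replicate hi]
    exact Nat.mul_pos (p.parts_pos (Multiset.mem_toFinset.mp hj)) (pow_pos (by omega) e)
  parts_sum := by
    rw [sum_finsetSum]
    have h : ∀ j ∈ p.parts.toFinset,
        (∑ e ∈ Finset.range (n + 1),
          Multiset.replicate (p.parts.count j / k ^ e % k) (j * k ^ e)).sum
        = p.parts.count j * j := by
      intro j hj
      rw [sum_finsetSum]
      have h2 : ∀ e ∈ Finset.range (n + 1),
          (Multiset.replicate (p.parts.count j / k ^ e % k) (j * k ^ e)).sum
          = (p.parts.count j / k ^ e % k) * k ^ e * j := by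
        intro e he
        rw [Multiset.sum_replicate, smul_eq_mul]; ring
      rw [Finset.sum_congr rfl h2, ← Finset.sum_mul, sum_digits_eq_mod hk,
        Nat.mod_eq_of_lt (lt_of_le_of_lt (count_le p j) (n_lt_pow hk))]
    rw [Finset.sum_congr rfl h, sum_eq_sum_count]

/-- Glaisher's inverse map: merge all parts `j * k ^ e` (with `¬ k ∣ j`) into copies of `j`. -/
def Gmap {n : ℕ} (k : ℕ) (hk : 2 ≤ k) (q : n.Partition) : n.Partition where
  parts := ∑ i ∈ q.parts.toFinset,
    Multiset.replicate (q.parts.count i * k ^ (k.maxPowDiv i)) (i / k ^ (k.maxPowDiv i))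
  parts_pos := by
    intro a ha
    rw [Multiset.mem_sum] at ha
    obtain ⟨i, hi, ha⟩ := ha
    rw [Multiset.eq_of_mem_replicate ha]
    exact maxPowDiv_div_pos (q.parts_pos (Multiset.mem_toFinset.mp hi))
  parts_sum := by
    rw [sum_finsetSum]
    have h : ∀ i ∈ q.parts.toFinset,
        (Multiset.replicate (q.parts.count i * k ^ (k.maxPowDiv i))
          (i / k ^ (k.maxPowDiv i))).sum = q.parts.count i * i := by
      intro i hi
      rw [Multiset.sum_replicate, smul_eq_mul, mul_assoc, mul_comm (k ^ (k.maxPowDiv i)) _,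
        div_maxPowDiv_mul]
    rw [Finset.sum_congr rfl h, sum_eq_sum_count]

/-! ### Count formulas -/

lemma count_Fmap {n : ℕ} (k : ℕ) (hk : 2 ≤ k) (p : n.Partition)
    (hp : ∀ j ∈ p.parts, ¬ k ∣ j) (i : ℕ) (hi : 0 < i) :
    ((Fmap k hk p).parts).count i
      = p.parts.count (i / k ^ (k.maxPowDiv i)) / k ^ (k.maxPowDiv i) % k := by
  set w := k.maxPowDiv i with hw
  set c := i / k ^ w with hc
  have hcmul : c * k ^ w = i := div_maxPowDiv_mul
  have hcpos : 0 < c := maxPowDiv_div_pos hi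
  have hckd : ¬ k ∣ c := not_dvd_maxPowDiv_div hk hi
  show Multiset.count i (∑ j ∈ p.parts.toFinset, ∑ e ∈ Finset.range (n + 1),
    Multiset.replicate (p.parts.count j / k ^ e % k) (j * k ^ e)) = _
  rw [Multiset.count_sum']
  have hinner : ∀ j ∈ p.parts.toFinset,
      Multiset.count i (∑ e ∈ Finset.range (n + 1),
        Multiset.replicate (p.parts.count j / k ^ e % k) (j * k ^ e))
      = if j = c then p.parts.count c / k ^ w % k else 0 := by
    intro j hj
    have hjmem := Multiset.mem_toFinset.mp hj
    have hjpos : 0 < j := p.parts_pos hjmem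
    have hjkd : ¬ k ∣ j := hp j hjmem
    rw [Multiset.count_sum']
    simp only [Multiset.count_replicate]
    by_cases hjc : j = c
    · subst hjc
      rw [if_pos rfl]
      by_cases hwn : w < n + 1
      · rw [Finset.sum_eq_single_of_mem w (Finset.mem_range.mpr hwn)]
        · rw [if_pos hcmul]
        · intro e he hne
          rw [if_neg]
          intro hcontra
          have h4 := (factor_unique hk hjpos hjkd hcontra).1
          rw [← hw] at h4
          exact hne h4
      · rw [Finset.sum_eq_zero]
        · have h1 : p.parts.count c < k ^ w :=
            lt_of_le_of_lt (count_le p c)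
              (lt_of_lt_of_le (n_lt_pow hk) (Nat.pow_le_pow_right (by omega) (by omega)))
          rw [Nat.div_eq_of_lt h1, Nat.zero_mod]
        · intro e he
          rw [if_neg]
          intro hcontra
          have h4 := (factor_unique hk hjpos hjkd hcontra).1
          rw [← hw] at h4
          rw [Finset.mem_range] at he
          omega
    · rw [Finset.sum_eq_zero]
      · rw [if_neg hjc]
      · intro e he
        rw [if_neg]
        intro hcontra
        have h4 := (factor_unique hk hjpos hjkd hcontra).2
        rw [← hw, ← hc] at h4
        exact hjc h4
  rw [Finset.sum_congr rfl hinner, Finset.sum_ite_eq']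
  by_cases hcmem : c ∈ p.parts.toFinset
  · rw [if_pos hcmem]
  · rw [if_neg hcmem,
      Multiset.count_eq_zero_of_notMem (fun h => hcmem (Multiset.mem_toFinset.mpr h))]
    simp

lemma mem_Gmap {n : ℕ} (k : ℕ) (hk : 2 ≤ k) (q : n.Partition) {a : ℕ}
    (ha : a ∈ (Gmap k hk q).parts) : ¬ k ∣ a := by
  have : a ∈ ∑ i ∈ q.parts.toFinset,
      Multiset.replicate (q.parts.count i * k ^ (k.maxPowDiv i)) (i / k ^ (k.maxPowDiv i)) := ha
  rw [Multiset.mem_sum] at this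
  obtain ⟨i, hi, hmem⟩ := this
  rw [Multiset.eq_of_mem_replicate hmem]
  exact not_dvd_maxPowDiv_div hk (q.parts_pos (Multiset.mem_toFinset.mp hi))

lemma count_Gmap {n : ℕ} (k : ℕ) (hk : 2 ≤ k) (q : n.Partition) (j : ℕ)
    (hj : 0 < j) (hjk : ¬ k ∣ j) :
    ((Gmap k hk q).parts).count j
      = ∑ e ∈ Finset.range (n + 1), q.parts.count (j * k ^ e) * k ^ e := by
  show Multiset.count j (∑ i ∈ q.parts.toFinset,
    Multiset.replicate (q.parts.count i * k ^ (k.maxPowDiv i)) (i / k ^ (k.maxPowDiv i))) = _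
  rw [Multiset.count_sum']
  simp only [Multiset.count_replicate]
  have hrhs : ∀ e ∈ Finset.range (n + 1), q.parts.count (j * k ^ e) * k ^ e
      = ∑ i ∈ q.parts.toFinset, if i = j * k ^ e then q.parts.count i * k ^ e else 0 := by
    intro e he
    rw [Finset.sum_ite_eq']
    by_cases hmem : j * k ^ e ∈ q.parts.toFinset
    · rw [if_pos hmem]
    · rw [if_neg hmem,
        Multiset.count_eq_zero_of_notMem (fun h => hmem (Multiset.mem_toFinset.mpr h)),
        zero_mul]
  rw [Finset.sum_congr rfl hrhs, Finset.sum_comm]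
  refine Finset.sum_congr rfl fun i hi => ?_
  have himem := Multiset.mem_toFinset.mp hi
  have hipos : 0 < i := q.parts_pos himem
  have hiw : k.maxPowDiv i < n + 1 := by
    have h1 : k ^ (k.maxPowDiv i) ≤ i := Nat.le_of_dvd hipos (pow_maxPowDiv_dvd k i)
    have h2 : k.maxPowDiv i < 2 ^ (k.maxPowDiv i) := Nat.lt_two_pow_self
    have h3 : 2 ^ (k.maxPowDiv i) ≤ k ^ (k.maxPowDiv i) := Nat.pow_le_pow_left hk _
    have h4 := part_le q himem
    omega
  by_cases hic : i / k ^ (k.maxPowDiv i) = j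
  · rw [if_pos hic, Finset.sum_eq_single_of_mem (k.maxPowDiv i) (Finset.mem_range.mpr hiw)]
    · rw [if_pos (by rw [← hic, div_maxPowDiv_mul])]
    · intro e he hne
      rw [if_neg]
      intro hcontra
      exact hne (factor_unique hk hj hjk hcontra.symm).1
  · rw [if_neg hic, Finset.sum_eq_zero]
    intro e he
    rw [if_neg]
    intro hcontra
    exact hic ((factor_unique hk hj hjk hcontra.symm).2.symm)

lemma count_Gmap_of_dvd {n : ℕ} (k : ℕ) (hk : 2 ≤ k) (q : n.Partition) (j : ℕ)
    (hjk : k ∣ j) : ((Gmap k hk q).parts).count j = 0 :=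
  Multiset.count_eq_zero_of_notMem fun h => mem_Gmap k hk q h hjk

/-! ### The two maps are mutually inverse on the relevant sets -/

lemma Gmap_Fmap {n : ℕ} (k : ℕ) (hk : 2 ≤ k) (p : n.Partition)
    (hp : ∀ j ∈ p.parts, ¬ k ∣ j) : Gmap k hk (Fmap k hk p) = p := by
  ext1
  ext a
  rcases Nat.eq_zero_or_pos a with rfl | hapos
  · rw [Multiset.count_eq_zero_of_notMem (fun h => absurd ((Gmap k hk (Fmap k hk p)).parts_pos h) (by omega)),
      Multiset.count_eq_zero_of_notMem (fun h => absurd (p.parts_pos h) (by omega))]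
  by_cases hak : k ∣ a
  · rw [count_Gmap_of_dvd k hk _ a hak,
      Multiset.count_eq_zero_of_notMem (fun h => hp a h hak)]
  · rw [count_Gmap k hk _ a hapos hak]
    have hF : ∀ e ∈ Finset.range (n + 1),
        ((Fmap k hk p).parts).count (a * k ^ e) * k ^ e
        = (p.parts.count a / k ^ e % k) * k ^ e := by
      intro e he
      rw [count_Fmap k hk p hp (a * k ^ e) (Nat.mul_pos hapos (pow_pos (by omega) e))]
      rw [maxPowDiv_mul_pow hk hapos hak e, Nat.mul_div_cancel a (pow_pos (by omega : 0 < k) e)]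
    rw [Finset.sum_congr rfl hF, sum_digits_eq_mod hk,
      Nat.mod_eq_of_lt (lt_of_le_of_lt (count_le p a) (n_lt_pow hk))]

lemma Fmap_Gmap {n : ℕ} (k : ℕ) (hk : 2 ≤ k) (q : n.Partition)
    (hq : ∀ i : ℕ, 1 ≤ i → q.parts.count i < k) : Fmap k hk (Gmap k hk q) = q := by
  ext1
  ext a
  rcases Nat.eq_zero_or_pos a with rfl | hapos
  · rw [Multiset.count_eq_zero_of_notMem (fun h => absurd ((Fmap k hk (Gmap k hk q)).parts_pos h) (by omega)),
      Multiset.count_eq_zero_of_notMem (fun h => absurd (q.parts_pos h) (by omega))]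
  set w := k.maxPowDiv a with hw
  set c := a / k ^ w with hc
  have hcmul : c * k ^ w = a := div_maxPowDiv_mul
  have hcpos : 0 < c := maxPowDiv_div_pos hapos
  have hckd : ¬ k ∣ c := not_dvd_maxPowDiv_div hk hapos
  rw [count_Fmap k hk _ (fun j hj => mem_Gmap k hk q hj) a hapos, ← hw, ← hc,
    count_Gmap k hk q c hcpos hckd]
  by_cases hwn : w < n + 1
  · rw [digit_of_sum hk (n + 1) (fun e => q.parts.count (c * k ^ e))
      (fun e => hq (c * k ^ e) (Nat.mul_pos hcpos (pow_pos (by omega) e))) w hwn, hcmul]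
  · have hsum : (∑ e ∈ Finset.range (n + 1), q.parts.count (c * k ^ e) * k ^ e) < k ^ w := by
      rw [← count_Gmap k hk q c hcpos hckd]
      calc ((Gmap k hk q).parts).count c ≤ n := count_le _ _
        _ < k ^ (n + 1) := n_lt_pow hk
        _ ≤ k ^ w := Nat.pow_le_pow_right (by omega) (by omega)
    rw [Nat.div_eq_of_lt hsum, Nat.zero_mod, eq_comm]
    apply Multiset.count_eq_zero_of_notMem
    intro hmem
    have h1 : k ^ w ≤ a := Nat.le_of_dvd hapos (hw ▸ pow_maxPowDiv_dvd k a)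
    have h2 : k ^ (n + 1) ≤ k ^ w := Nat.pow_le_pow_right (by omega) (by omega)
    have h3 := part_le q hmem
    have h4 := n_lt_pow (n := n) hk
    omega

end GlaisherAux

open GlaisherAux in
/-- **Glaisher's theorem.** For all positive integers `k` and `n`, the number of partitions
of `n` into parts not divisible by `k` equals the number of partitions of `n` in which
every part occurs fewer than `k` times. -/
theorem glaisher_theorem (k n : ℕ) (hk : 0 < k) (hn : 0 < n) :
    Nat.card {p : n.Partition // ∀ i : ℕ, 1 ≤ i → Multiset.count (i * k) p.parts = 0} =
    Nat.card {p : n.Partition // ∀ i : ℕ, 1 ≤ i → Multiset.count i p.parts < k} := by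
  by_cases hk1 : k = 1
  · subst hk1
    have hA : IsEmpty {p : n.Partition // ∀ i : ℕ, 1 ≤ i → Multiset.count (i * 1) p.parts = 0} := by
      constructor
      rintro ⟨p, hp⟩
      have : p.parts = 0 := by
        rw [Multiset.eq_zero_iff_forall_notMem]
        intro a ha
        have h1 : 0 < a := p.parts_pos ha
        have h2 := hp a h1
        rw [mul_one] at h2
        exact absurd (Multiset.count_pos.mpr ha) (by omega)
      have hps := p.parts_sum
      rw [this] at hps
      simp at hps
      omega
    have hB : IsEmpty {p : n.Partition // ∀ i : ℕ, 1 ≤ i → Multiset.count i p.parts < 1} := by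
      constructor
      rintro ⟨p, hp⟩
      have : p.parts = 0 := by
        rw [Multiset.eq_zero_iff_forall_notMem]
        intro a ha
        have h1 : 0 < a := p.parts_pos ha
        have h2 := hp a h1
        exact absurd (Multiset.count_pos.mpr ha) (by omega)
      have hps := p.parts_sum
      rw [this] at hps
      simp at hps
      omega
    rw [Nat.card_of_isEmpty, Nat.card_of_isEmpty]
  · have hk2 : 2 ≤ k := by omega
    refine Nat.card_congr ?_
    refine
      { toFun := fun p => ⟨Fmap k hk2 p.1, ?_⟩
        invFun := fun q => ⟨Gmap k hk2 q.1, ?_⟩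
        left_inv := ?_
        right_inv := ?_ }
    · intro i hi
      have hpnd : ∀ j ∈ p.1.parts, ¬ k ∣ j := by
        intro j hj ⟨m, hm⟩
        have hjpos : 0 < j := p.1.parts_pos hj
        have hmpos : 1 ≤ m := by
          rcases Nat.eq_zero_or_pos m with rfl | h
          · omega
          · exact h
        have := p.2 m hmpos
        rw [mul_comm m k, ← hm] at this
        exact absurd (Multiset.count_pos.mpr hj) (by omega)
      rw [count_Fmap k hk2 p.1 hpnd i hi]
      exact Nat.mod_lt _ (by omega)
    · intro i hi
      exact count_Gmap_of_dvd k hk2 q.1 (i * k) (Dvd.intro_left i rfl)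
    · rintro ⟨p, hp⟩
      have hpnd : ∀ j ∈ p.parts, ¬ k ∣ j := by
        intro j hj ⟨m, hm⟩
        have hjpos : 0 < j := p.parts_pos hj
        have hmpos : 1 ≤ m := by
          rcases Nat.eq_zero_or_pos m with rfl | h
          · omega
          · exact h
        have := hp m hmpos
        rw [mul_comm m k, ← hm] at this
        exact absurd (Multiset.count_pos.mpr hj) (by omega)
      exact Subtype.ext (Gmap_Fmap k hk2 p hpnd)
    · rintro ⟨q, hq⟩
      exact Subtype.ext (Fmap_Gmap k hk2 q hq)
end

section
/- For every positive integer k, the following identity of formal power series in q (over the integers) holds: the product over all i ≥ 1 with k not dividing i of (1 - q^i)^{-1} equals the product over all i ≥ 1 of (1 + q^i + q^{2i} + ... + q^{(k-1)i}). Equivalently, in cleared-denominator form, (∏_{i ≥ 1} (1 - q^{ki})) · ∏_{i ≥ 1} (1 + q^i + ... + q^{(k-1)i}) · ∏_{i ≥ 1, k ∤ i} (1 - q^i) = ∏_{i ≥ 1} (1 - q^{ki}). -/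
open Finset PowerSeries

private lemma dvd_prod_sub_one' {R : Type*} [CommRing R] {d : R} {ι : Type*} (s : Finset ι)
    (f : ι → R) (h : ∀ i ∈ s, d ∣ f i - 1) : d ∣ (∏ i ∈ s, f i) - 1 := by
  classical
  induction s using Finset.induction_on with
  | empty => simp
  | insert a s' hx ih =>
    rw [Finset.prod_insert hx]
    have h1 := h a (mem_insert_self a s')
    have h2 := ih (fun i hi => h i (mem_insert_of_mem hi))
    have key : f a * ∏ i ∈ s', f i - 1 = f a * ((∏ i ∈ s', f i) - 1) + (f a - 1) := by ring
    rw [key]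
    exact dvd_add (h2.mul_left _) h1

/-- **Glaisher's theorem, generating function form (cleared denominators).**
In `ℤ[[q]]` one has
`(∏_{i≥1} (1 - q^{ki})) · (∏_{i≥1} (1 + q^i + ⋯ + q^{(k-1)i})) · (∏_{i≥1, k∤i} (1 - q^i))
  = ∏_{i≥1} (1 - q^{ki})`.
An equality of formal power series given by infinite products is expressed
coefficientwise: for each `n`, the coefficient of `q^n` is unchanged if every factor
indexed by `i > n` is dropped (such a factor is `1 + O(q^{n+1})`), so the identity is
stated using the truncated products over `1 ≤ i ≤ n`. -/
theorem glaisher_q_series (k : ℕ) (hk : 0 < k) (n : ℕ) :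
    PowerSeries.coeff n
      ((∏ i ∈ Icc 1 n, (1 - (PowerSeries.X : PowerSeries ℤ) ^ (k * i))) *
        (∏ i ∈ Icc 1 n, ∑ j ∈ range k, (PowerSeries.X : PowerSeries ℤ) ^ (j * i)) *
        (∏ i ∈ (Icc 1 n).filter (fun i => ¬ k ∣ i),
          (1 - (PowerSeries.X : PowerSeries ℤ) ^ i))) =
    PowerSeries.coeff n
      (∏ i ∈ Icc 1 n, (1 - (PowerSeries.X : PowerSeries ℤ) ^ (k * i))) := by
  classical
  set X : PowerSeries ℤ := PowerSeries.X with hX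
  set A : PowerSeries ℤ := ∏ i ∈ Icc 1 n, (1 - X ^ (k * i)) with hA
  set B : PowerSeries ℤ := ∏ i ∈ Icc 1 n, ∑ j ∈ range k, X ^ (j * i) with hB
  set C : PowerSeries ℤ := ∏ i ∈ (Icc 1 n).filter (fun i => ¬ k ∣ i), (1 - X ^ i) with hC
  set D : PowerSeries ℤ := ∏ i ∈ (Icc 1 n).filter (fun i => k ∣ i), (1 - X ^ i) with hD
  set R : PowerSeries ℤ := ∏ i ∈ (Icc 1 n).filter (fun i => ¬ k * i ≤ n), (1 - X ^ (k * i))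
    with hR
  -- geometric series identity
  have hgeom : ∀ i : ℕ, (∑ j ∈ range k, X ^ (j * i)) * (1 - X ^ i) = 1 - X ^ (k * i) := by
    intro i
    have := geom_sum_mul (X ^ i) k
    have h2 : ∀ j : ℕ, (X ^ i) ^ j = X ^ (j * i) := by
      intro j; rw [← pow_mul, Nat.mul_comm]
    calc (∑ j ∈ range k, X ^ (j * i)) * (1 - X ^ i)
        = -((∑ j ∈ range k, (X ^ i) ^ j) * (X ^ i - 1)) := by
          simp only [h2]; ring
      _ = -((X ^ i) ^ k - 1) := by rw [this]
      _ = 1 - X ^ (k * i) := by rw [← pow_mul, Nat.mul_comm i k]; ring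
  -- B * (C * D) = A
  have hBCD : B * (C * D) = A := by
    have hCD : C * D = ∏ i ∈ Icc 1 n, (1 - X ^ i) := by
      rw [hC, hD, mul_comm,
        prod_filter_mul_prod_filter_not (Icc 1 n) (fun i => k ∣ i) (fun i => 1 - X ^ i)]
    rw [hCD, hB, hA, ← prod_mul_distrib]
    exact Finset.prod_congr rfl fun i _ => hgeom i
  -- A = D * R
  have hADR : A = D * R := by
    have hsplit : A = (∏ i ∈ (Icc 1 n).filter (fun i => k * i ≤ n), (1 - X ^ (k * i))) * R := by
      rw [hA, hR, prod_filter_mul_prod_filter_not]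
    have hreindex : (∏ i ∈ (Icc 1 n).filter (fun i => k * i ≤ n), (1 - X ^ (k * i))) = D := by
      rw [hD]
      refine Finset.prod_nbij' (fun i => k * i) (fun j => j / k) ?_ ?_ ?_ ?_ ?_
      · intro i hi
        simp only [mem_filter, mem_Icc] at hi ⊢
        refine ⟨⟨?_, hi.2⟩, Dvd.intro i rfl⟩
        exact Nat.one_le_iff_ne_zero.2 (Nat.mul_ne_zero hk.ne' (Nat.one_le_iff_ne_zero.1 hi.1.1))
      · intro j hj
        simp only [mem_filter, mem_Icc] at hj ⊢
        obtain ⟨⟨h1, h2⟩, m, rfl⟩ := hj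
        rw [Nat.mul_div_cancel_left m hk]
        have hm1 : 1 ≤ m := Nat.one_le_iff_ne_zero.2 (by rintro rfl; simp at h1)
        exact ⟨⟨hm1, le_trans (Nat.le_mul_of_pos_left m hk) h2⟩, h2⟩
      · intro i hi; exact Nat.mul_div_cancel_left i hk
      · intro j hj
        simp only [mem_filter] at hj
        exact Nat.mul_div_cancel' hj.2
      · intro i hi; rfl
    rw [hsplit, hreindex]
  -- cancel D
  have hDne : D ≠ 0 := by
    intro h
    have : PowerSeries.constantCoeff D = 1 := by
      rw [hD, map_prod]
      refine Finset.prod_eq_one fun i hi => ?_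
      simp only [mem_filter, mem_Icc] at hi
      rw [map_sub, map_one, map_pow, constantCoeff_X,
        zero_pow (Nat.one_le_iff_ne_zero.1 hi.1.1), sub_zero]
    rw [h, map_zero] at this
    exact one_ne_zero this.symm
  have hABC : A * B * C = A * R := by
    apply mul_left_cancel₀ hDne
    calc D * (A * B * C) = A * (B * (C * D)) := by ring
      _ = A * A := by rw [hBCD]
      _ = A * (D * R) := by rw [← hADR]
      _ = D * (A * R) := by ring
  rw [hABC]
  -- coeff n (A * R) = coeff n A
  have hRdvd : (X : PowerSeries ℤ) ^ (n + 1) ∣ R - 1 := by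
    apply dvd_prod_sub_one'
    intro i hi
    simp only [mem_filter, not_le] at hi
    have : (1 : PowerSeries ℤ) - X ^ (k * i) - 1 = -(X ^ (k * i)) := by ring
    rw [this]
    exact (pow_dvd_pow X hi.2).neg_right
  have : PowerSeries.coeff n (A * R - A) = 0 := by
    have hdvd : (X : PowerSeries ℤ) ^ (n + 1) ∣ A * R - A := by
      have : A * R - A = A * (R - 1) := by ring
      rw [this]
      exact hRdvd.mul_left A
    exact (PowerSeries.X_pow_dvd_iff.1 hdvd) n (Nat.lt_succ_self n)
  rw [← sub_eq_zero, ← map_sub]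
  exact this
end

section
/- For all positive integers k, l, n, the number of partitions of n into parts not divisible by k in which every part occurs fewer than l times equals the number of partitions of n into parts not divisible by l in which every part occurs fewer than k times. -/
open PowerSeries Finset

namespace LittleGlaisherProof

noncomputable section

variable {α : Type*}

open Finset.HasAntidiagonal

open scoped Classical

/-- A convenience constructor for the power series whose coefficients indicate a subset. -/
def indicatorSeries (α : Type*) [Semiring α] (s : Set ℕ) : PowerSeries α :=
  PowerSeries.mk fun n => if n ∈ s then 1 else 0

theorem coeff_indicator (s : Set ℕ) [Semiring α] (n : ℕ) :
    coeff n (indicatorSeries α s) = if n ∈ s then 1 else 0 :=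
  coeff_mk _ _

theorem coeff_indicator_pos (s : Set ℕ) [Semiring α] (n : ℕ) (h : n ∈ s) :
    coeff n (indicatorSeries α s) = 1 := by rw [coeff_indicator, if_pos h]

theorem coeff_indicator_neg (s : Set ℕ) [Semiring α] (n : ℕ) (h : n ∉ s) :
    coeff n (indicatorSeries α s) = 0 := by rw [coeff_indicator, if_neg h]

theorem constantCoeff_indicator (s : Set ℕ) [Semiring α] :
    constantCoeff (indicatorSeries α s) = if 0 ∈ s then 1 else 0 :=
  rfl

theorem two_series (i : ℕ) [Semiring α] :
    1 + (X : PowerSeries α) ^ i.succ = indicatorSeries α {0, i.succ} := by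
  ext n
  simp only [coeff_indicator, coeff_one, coeff_X_pow, Set.mem_insert_iff, Set.mem_singleton_iff,
    map_add]
  cases' n with d
  · simp [(Nat.succ_ne_zero i).symm]
  · simp [Nat.succ_ne_zero d]

theorem num_series' [Field α] (i : ℕ) :
    (1 - (X : PowerSeries α) ^ (i + 1))⁻¹ = indicatorSeries α {k | i + 1 ∣ k} := by
  rw [PowerSeries.inv_eq_iff_mul_eq_one]
  · ext n
    cases n with
    | zero => simp [mul_sub, zero_pow, constantCoeff_indicator]
    | succ n =>
      simp only [coeff_one, if_false, mul_sub, mul_one, coeff_indicator,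
        LinearMap.map_sub, reduceCtorEq]
      simp_rw [coeff_mul, coeff_X_pow, coeff_indicator, @boole_mul _ _ _ _]
      erw [@sum_ite _ _ _ _ _ (Classical.decPred _), sum_ite]
      simp_rw [@filter_filter _ _ _ _ _, sum_const_zero, add_zero, sum_const, nsmul_eq_mul, mul_one,
        sub_eq_iff_eq_add, zero_add]
      symm
      split_ifs with h
      · suffices #{a ∈ antidiagonal (n + 1) | i + 1 ∣ a.fst ∧ a.snd = i + 1} = 1 by
          simp only [Set.mem_setOf_eq]; convert congr_arg ((↑) : ℕ → α) this; norm_cast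
        rw [card_eq_one]
        cases' h with p hp
        refine ⟨((i + 1) * (p - 1), i + 1), ?_⟩
        ext ⟨a₁, a₂⟩
        simp only [mem_filter, Prod.mk_inj, HasAntidiagonal.mem_antidiagonal, mem_singleton]
        constructor
        · rintro ⟨a_left, ⟨a, rfl⟩, rfl⟩
          refine ⟨?_, rfl⟩
          rw [Nat.mul_sub_left_distrib, ← hp, ← a_left, mul_one, Nat.add_sub_cancel]
        · rintro ⟨rfl, rfl⟩
          match p with
          | 0 => rw [mul_zero] at hp; cases hp
          | p + 1 => rw [hp]; simp [mul_add]
      · suffices #{a ∈ antidiagonal (n + 1) | i + 1 ∣ a.fst ∧ a.snd = i + 1} = 0 by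
          simp only [Set.mem_setOf_eq]; convert congr_arg ((↑) : ℕ → α) this; norm_cast
        rw [card_eq_zero]
        apply eq_empty_of_forall_notMem
        simp only [Prod.forall, mem_filter, not_and, HasAntidiagonal.mem_antidiagonal]
        rintro _ h₁ h₂ ⟨a, rfl⟩ rfl
        apply h
        simp [← h₂]
  · simp [zero_pow]

def mkOdd : ℕ ↪ ℕ :=
  ⟨fun i => 2 * i + 1, fun x y h => by linarith⟩

-- The main workhorse of the partition theorem proof.
theorem partialGF_prop (α : Type*) [CommSemiring α] (n : ℕ) (s : Finset ℕ) (hs : ∀ i ∈ s, 0 < i)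
    (c : ℕ → Set ℕ) (hc : ∀ i, i ∉ s → 0 ∈ c i) :
    #{p : n.Partition | (∀ j, p.parts.count j ∈ c j) ∧ ∀ j ∈ p.parts, j ∈ s} =
      coeff n (∏ i ∈ s, indicatorSeries α ((· * i) '' c i)) := by
  simp_rw [coeff_prod, coeff_indicator, prod_boole, sum_boole]
  apply congr_arg
  simp only [mem_univ, forall_true_left, not_and, not_forall, exists_prop,
    Set.mem_image, not_exists]
  set φ : (a : Nat.Partition n) →
    a ∈ filter (fun p ↦ (∀ (j : ℕ), Multiset.count j p.parts ∈ c j) ∧ ∀ j ∈ p.parts, j ∈ s) univ →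
    ℕ →₀ ℕ := fun p _ => {
      toFun := fun i => Multiset.count i p.parts • i
      support := Finset.filter (fun i => i ≠ 0) p.parts.toFinset
      mem_support_toFun := fun a => by
        simp only [smul_eq_mul, ne_eq, mul_eq_zero, Multiset.count_eq_zero]
        rw [not_or, not_not]
        simp only [Multiset.mem_toFinset, not_not, mem_filter] }
  refine Finset.card_bij φ ?_ ?_ ?_
  · intro a ha
    simp only [φ, not_forall, not_exists, not_and, exists_prop, mem_filter]
    rw [mem_finsuppAntidiag]
    dsimp only [ne_eq, smul_eq_mul, id_eq, eq_mpr_eq_cast, le_eq_subset, Finsupp.coe_mk]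
    simp only [mem_univ, forall_true_left, not_and, not_forall, exists_prop,
      mem_filter, true_and] at ha
    refine ⟨⟨?_, fun i ↦ ?_⟩, fun i _ ↦ ⟨a.parts.count i, ha.1 i, rfl⟩⟩
    · conv_rhs => simp [← a.parts_sum]
      rw [sum_multiset_count_of_subset _ s]
      · simp only [smul_eq_mul]
      · intro i
        simp only [Multiset.mem_toFinset, not_not, mem_filter]
        apply ha.2
    · simp only [ne_eq, Multiset.mem_toFinset, not_not, mem_filter, and_imp]
      exact fun hi _ ↦ ha.2 i hi
  · intro p₁ hp₁ p₂ hp₂ h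
    apply Nat.Partition.ext
    simp only [true_and, mem_univ, mem_filter] at hp₁ hp₂
    ext i
    simp only [φ, ne_eq, Multiset.mem_toFinset, not_not, smul_eq_mul, Finsupp.mk.injEq] at h
    by_cases hi : i = 0
    · rw [hi]
      rw [Multiset.count_eq_zero_of_notMem]
      · rw [Multiset.count_eq_zero_of_notMem]
        intro a; exact Nat.lt_irrefl 0 (hs 0 (hp₂.2 0 a))
      intro a; exact Nat.lt_irrefl 0 (hs 0 (hp₁.2 0 a))
    · rw [← mul_left_inj' hi]
      rw [funext_iff] at h
      exact h.2 i
  · simp only [φ, mem_filter, mem_finsuppAntidiag, mem_univ, exists_prop, true_and, and_assoc]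
    rintro f ⟨hf, hf₃, hf₄⟩
    have hf' : f ∈ finsuppAntidiag s n := mem_finsuppAntidiag.mpr ⟨hf, hf₃⟩
    simp only [mem_finsuppAntidiag] at hf'
    refine ⟨⟨∑ i ∈ s, Multiset.replicate (f i / i) i, ?_, ?_⟩, ?_, ?_, ?_⟩
    · intro i hi
      simp only [exists_prop, Multiset.mem_sum, mem_map, Function.Embedding.coeFn_mk] at hi
      rcases hi with ⟨t, ht, z⟩
      apply hs
      rwa [Multiset.eq_of_mem_replicate z]
    · simp_rw [Multiset.sum_sum, Multiset.sum_replicate, Nat.nsmul_eq_mul]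
      rw [← hf'.1]
      refine sum_congr rfl fun i hi => Nat.div_mul_cancel ?_
      rcases hf₄ i hi with ⟨w, _, hw₂⟩
      rw [← hw₂]
      exact dvd_mul_left _ _
    · intro i
      simp_rw [Multiset.count_sum', Multiset.count_replicate, sum_ite_eq']
      split_ifs with h
      · rcases hf₄ i h with ⟨w, hw₁, hw₂⟩
        rwa [← hw₂, Nat.mul_div_cancel _ (hs i h)]
      · exact hc _ h
    · intro i hi
      rw [Multiset.mem_sum] at hi
      rcases hi with ⟨j, hj₁, hj₂⟩
      rwa [Multiset.eq_of_mem_replicate hj₂]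
    · ext i
      simp_rw [Multiset.count_sum', Multiset.count_replicate, sum_ite_eq']
      simp only [ne_eq, Multiset.mem_toFinset, not_not, smul_eq_mul, ite_mul,
        zero_mul, Finsupp.coe_mk]
      split_ifs with h
      · apply Nat.div_mul_cancel
        rcases hf₄ i h with ⟨w, _, hw₂⟩
        apply Dvd.intro_left _ hw₂
      · apply symm
        rw [← Finsupp.notMem_support_iff]
        exact notMem_mono hf'.2 h


theorem indicator_eq_geom (i l : ℕ) (hi : 0 < i) :
    indicatorSeries ℚ ((· * i) '' {f | f < l}) = ∑ f ∈ range l, (X : PowerSeries ℚ) ^ (i * f) := by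
  ext m
  rw [coeff_indicator]
  simp only [map_sum, coeff_X_pow]
  by_cases h : ∃ f, f < l ∧ f * i = m
  · obtain ⟨f, hf, rfl⟩ := h
    rw [if_pos ⟨f, hf, rfl⟩]
    have key : ∀ x, (f * i = i * x) ↔ (x = f) := by
      intro x
      constructor
      · intro hx
        exact (Nat.eq_of_mul_eq_mul_left hi (by rw [← hx, mul_comm])).symm
      · rintro rfl
        exact mul_comm _ _
    simp only [key]
    rw [Finset.sum_ite_eq' (range l) f (fun _ => (1 : ℚ)), if_pos (mem_range.2 hf)]
  · rw [if_neg]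
    · refine (Finset.sum_eq_zero ?_).symm
      intro x hx
      rw [if_neg]
      intro hm
      exact h ⟨x, mem_range.1 hx, by rw [mul_comm, ← hm]⟩
    · rintro ⟨f, hf, rfl⟩
      exact h ⟨f, hf, rfl⟩

theorem geom_factor (i l : ℕ) :
    (1 - (X : PowerSeries ℚ) ^ i) * ∑ f ∈ range l, (X : PowerSeries ℚ) ^ (i * f) =
      1 - X ^ (i * l) := by
  simp_rw [pow_mul]
  linear_combination -(geom_sum_mul ((X : PowerSeries ℚ) ^ i) l)

theorem reindex_dvd (k m : ℕ) (hk : 0 < k) (f : ℕ → PowerSeries ℚ) :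
    ∏ i ∈ (Icc 1 m).filter (fun i => k ∣ i), f i = ∏ j ∈ Icc 1 (m / k), f (j * k) := by
  refine Finset.prod_nbij' (fun i => i / k) (fun j => j * k) ?_ ?_ ?_ ?_ ?_
  · intro i hi
    simp only [mem_filter, mem_Icc] at hi
    obtain ⟨⟨h1, h2⟩, q, rfl⟩ := hi
    simp only [mem_Icc, Nat.mul_div_cancel_left _ hk]
    constructor
    · rcases Nat.eq_zero_or_pos q with rfl | hq
      · simp at h1
      · exact hq
    · exact (Nat.le_div_iff_mul_le hk).2 (by rwa [mul_comm])
  · intro j hj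
    simp only [mem_Icc] at hj
    simp only [mem_filter, mem_Icc]
    refine ⟨⟨?_, (Nat.le_div_iff_mul_le hk).1 hj.2⟩, ⟨j, mul_comm _ _⟩⟩
    calc 1 ≤ j := hj.1
    _ ≤ j * k := Nat.le_mul_of_pos_right _ hk
  · intro i hi
    simp only [mem_filter, mem_Icc] at hi
    exact Nat.div_mul_cancel hi.2
  · intro j _
    exact Nat.mul_div_cancel _ hk
  · intro i hi
    simp only [mem_filter, mem_Icc] at hi
    rw [Nat.div_mul_cancel hi.2]

/-- The (truncated) generating function for `k,l`-regular partitions of `n`. -/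
def ggf (n k l : ℕ) : PowerSeries ℚ :=
  ∏ i ∈ (Icc 1 n).filter (fun i => ¬ k ∣ i), ∑ f ∈ range l, (X : PowerSeries ℚ) ^ (i * f)

theorem key (k l n : ℕ) (hk : 0 < k) (hl : 0 < l) :
    ggf n k l * (∏ i ∈ Icc 1 n, (1 - (X : PowerSeries ℚ) ^ i)) *
        (∏ j ∈ Icc 1 (n / (k * l)), (1 - (X : PowerSeries ℚ) ^ (j * (k * l)))) =
      ((∏ i ∈ Icc 1 (n / l), (1 - (X : PowerSeries ℚ) ^ (i * l))) *
          ∏ i ∈ Icc 1 (n / k), (1 - (X : PowerSeries ℚ) ^ (i * k))) *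
        ∏ i ∈ ((Icc 1 n).filter (fun i => ¬ k ∣ i)).filter (fun i => ¬ i * l ≤ n),
          (1 - (X : PowerSeries ℚ) ^ (i * l)) := by
  have hD : (∏ i ∈ Icc 1 n, (1 - (X : PowerSeries ℚ) ^ i)) =
      (∏ i ∈ (Icc 1 n).filter (fun i => k ∣ i), (1 - (X : PowerSeries ℚ) ^ i)) *
        ∏ i ∈ (Icc 1 n).filter (fun i => ¬ k ∣ i), (1 - (X : PowerSeries ℚ) ^ i) :=
    (Finset.prod_filter_mul_prod_filter_not _ _ _).symm
  have step2 : (∏ i ∈ (Icc 1 n).filter (fun i => ¬ k ∣ i), (1 - (X : PowerSeries ℚ) ^ i)) *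
      ggf n k l = ∏ i ∈ (Icc 1 n).filter (fun i => ¬ k ∣ i),
        (1 - (X : PowerSeries ℚ) ^ (i * l)) := by
    rw [ggf, ← prod_mul_distrib]
    exact prod_congr rfl fun i _ => geom_factor i l
  have step3 : (∏ i ∈ (Icc 1 n).filter (fun i => ¬ k ∣ i),
      (1 - (X : PowerSeries ℚ) ^ (i * l))) =
      (∏ i ∈ ((Icc 1 n).filter (fun i => ¬ k ∣ i)).filter (fun i => i * l ≤ n),
        (1 - (X : PowerSeries ℚ) ^ (i * l))) *
      ∏ i ∈ ((Icc 1 n).filter (fun i => ¬ k ∣ i)).filter (fun i => ¬ i * l ≤ n),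
        (1 - (X : PowerSeries ℚ) ^ (i * l)) :=
    (Finset.prod_filter_mul_prod_filter_not _ _ _).symm
  have hset : ((Icc 1 n).filter (fun i => ¬ k ∣ i)).filter (fun i => i * l ≤ n) =
      (Icc 1 (n / l)).filter (fun i => ¬ k ∣ i) := by
    ext i
    simp only [mem_filter, mem_Icc]
    constructor
    · rintro ⟨⟨⟨h1, h2⟩, hd⟩, hle⟩
      exact ⟨⟨h1, (Nat.le_div_iff_mul_le hl).2 hle⟩, hd⟩
    · rintro ⟨⟨h1, h2⟩, hd⟩
      have hle := (Nat.le_div_iff_mul_le hl).1 h2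
      exact ⟨⟨⟨h1, le_trans (Nat.le_mul_of_pos_right _ hl) hle⟩, hd⟩, hle⟩
  have step5 : (∏ i ∈ (Icc 1 (n / l)).filter (fun i => ¬ k ∣ i),
      (1 - (X : PowerSeries ℚ) ^ (i * l))) *
      (∏ j ∈ Icc 1 (n / (k * l)), (1 - (X : PowerSeries ℚ) ^ (j * (k * l)))) =
      ∏ i ∈ Icc 1 (n / l), (1 - (X : PowerSeries ℚ) ^ (i * l)) := by
    have hr := reindex_dvd k (n / l) hk (fun i => 1 - (X : PowerSeries ℚ) ^ (i * l))
    have hdiv : n / l / k = n / (k * l) := by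
      rw [Nat.div_div_eq_div_mul, mul_comm]
    rw [hdiv] at hr
    simp only [mul_assoc] at hr
    rw [mul_comm, ← hr]
    have hsplit := Finset.prod_filter_mul_prod_filter_not (Icc 1 (n / l)) (fun i => k ∣ i)
      (fun i => 1 - (X : PowerSeries ℚ) ^ (i * l))
    linear_combination hsplit
  have step6 : (∏ i ∈ (Icc 1 n).filter (fun i => k ∣ i), (1 - (X : PowerSeries ℚ) ^ i)) =
      ∏ j ∈ Icc 1 (n / k), (1 - (X : PowerSeries ℚ) ^ (j * k)) :=
    reindex_dvd k n hk _
  rw [hset] at step3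
  linear_combination ggf n k l *
      (∏ j ∈ Icc 1 (n / (k * l)), (1 - (X : PowerSeries ℚ) ^ (j * (k * l)))) * hD +
    (∏ j ∈ Icc 1 (n / (k * l)), (1 - (X : PowerSeries ℚ) ^ (j * (k * l)))) *
      (∏ i ∈ (Icc 1 n).filter (fun i => k ∣ i), (1 - (X : PowerSeries ℚ) ^ i)) * step2 +
    (∏ j ∈ Icc 1 (n / (k * l)), (1 - (X : PowerSeries ℚ) ^ (j * (k * l)))) *
      (∏ i ∈ (Icc 1 n).filter (fun i => k ∣ i), (1 - (X : PowerSeries ℚ) ^ i)) * step3 +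
    (∏ i ∈ (Icc 1 n).filter (fun i => k ∣ i), (1 - (X : PowerSeries ℚ) ^ i)) *
      (∏ i ∈ ((Icc 1 n).filter (fun i => ¬ k ∣ i)).filter (fun i => ¬ i * l ≤ n),
        (1 - (X : PowerSeries ℚ) ^ (i * l))) * step5 +
    (∏ i ∈ Icc 1 (n / l), (1 - (X : PowerSeries ℚ) ^ (i * l))) *
      (∏ i ∈ ((Icc 1 n).filter (fun i => ¬ k ∣ i)).filter (fun i => ¬ i * l ≤ n),
        (1 - (X : PowerSeries ℚ) ^ (i * l))) * step6

theorem prod_one_sub_ne_zero (s : Finset ℕ) (e : ℕ → ℕ) (he : ∀ i ∈ s, 0 < e i) :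
    (∏ i ∈ s, (1 - (X : PowerSeries ℚ) ^ e i)) ≠ 0 := by
  intro h
  have h0 := congrArg constantCoeff h
  rw [map_prod, map_zero] at h0
  rw [Finset.prod_eq_zero_iff] at h0
  obtain ⟨i, hi, hzero⟩ := h0
  rw [map_sub, map_one, map_pow, constantCoeff_X, zero_pow (he i hi).ne', sub_zero] at hzero
  exact one_ne_zero hzero

theorem coeff_ggf_symm (k l n : ℕ) (hk : 0 < k) (hl : 0 < l) :
    coeff n (ggf n k l) = coeff n (ggf n l k) := by
  have h1 := key k l n hk hl
  have h2 := key l k n hl hk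
  rw [mul_comm l k] at h2
  have hDV : ((∏ i ∈ Icc 1 n, (1 - (X : PowerSeries ℚ) ^ i)) *
      (∏ j ∈ Icc 1 (n / (k * l)), (1 - (X : PowerSeries ℚ) ^ (j * (k * l))))) ≠ 0 := by
    apply mul_ne_zero
    · exact prod_one_sub_ne_zero _ (fun i => i) (fun i hi => (mem_Icc.1 hi).1)
    · exact prod_one_sub_ne_zero _ (fun j => j * (k * l))
        (fun j hj => Nat.mul_pos (mem_Icc.1 hj).1 (Nat.mul_pos hk hl))
  have hmain : ggf n k l *
      (∏ i ∈ ((Icc 1 n).filter (fun i => ¬ l ∣ i)).filter (fun i => ¬ i * k ≤ n),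
        (1 - (X : PowerSeries ℚ) ^ (i * k))) *
      ((∏ i ∈ Icc 1 n, (1 - (X : PowerSeries ℚ) ^ i)) *
        (∏ j ∈ Icc 1 (n / (k * l)), (1 - (X : PowerSeries ℚ) ^ (j * (k * l))))) =
      ggf n l k *
      (∏ i ∈ ((Icc 1 n).filter (fun i => ¬ k ∣ i)).filter (fun i => ¬ i * l ≤ n),
        (1 - (X : PowerSeries ℚ) ^ (i * l))) *
      ((∏ i ∈ Icc 1 n, (1 - (X : PowerSeries ℚ) ^ i)) *
        (∏ j ∈ Icc 1 (n / (k * l)), (1 - (X : PowerSeries ℚ) ^ (j * (k * l))))) := by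
    linear_combination (∏ i ∈ ((Icc 1 n).filter (fun i => ¬ l ∣ i)).filter
        (fun i => ¬ i * k ≤ n), (1 - (X : PowerSeries ℚ) ^ (i * k))) * h1 -
      (∏ i ∈ ((Icc 1 n).filter (fun i => ¬ k ∣ i)).filter (fun i => ¬ i * l ≤ n),
        (1 - (X : PowerSeries ℚ) ^ (i * l))) * h2
  have hcancel := mul_right_cancel₀ hDV hmain
  have c1 : coeff n (ggf n k l *
      ∏ i ∈ ((Icc 1 n).filter (fun i => ¬ l ∣ i)).filter (fun i => ¬ i * k ≤ n),
        (1 - (X : PowerSeries ℚ) ^ (i * k))) = coeff n (ggf n k l) := by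
    apply coeff_mul_prod_one_sub_of_lt_order
    intro i hi
    simp only [mem_filter, mem_Icc, not_le] at hi
    rw [order_X_pow]
    exact_mod_cast hi.2
  have c2 : coeff n (ggf n l k *
      ∏ i ∈ ((Icc 1 n).filter (fun i => ¬ k ∣ i)).filter (fun i => ¬ i * l ≤ n),
        (1 - (X : PowerSeries ℚ) ^ (i * l))) = coeff n (ggf n l k) := by
    apply coeff_mul_prod_one_sub_of_lt_order
    intro i hi
    simp only [mem_filter, mem_Icc, not_le] at hi
    rw [order_X_pow]
    exact_mod_cast hi.2
  rw [← c1, ← c2, hcancel]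

theorem card_eq_coeff (k l n : ℕ) (hk : 0 < k) (hl : 0 < l) :
    ((Nat.card {p : n.Partition //
      (∀ i : ℕ, 1 ≤ i → Multiset.count (i * k) p.parts = 0) ∧
      (∀ i : ℕ, 1 ≤ i → Multiset.count i p.parts < l)}) : ℚ) = coeff n (ggf n k l) := by
  have hs : ∀ i ∈ (Icc 1 n).filter (fun i => ¬ k ∣ i), 0 < i := fun i hi =>
    (mem_Icc.1 (mem_filter.1 hi).1).1
  have hgf := partialGF_prop ℚ n ((Icc 1 n).filter (fun i => ¬ k ∣ i)) hs
    (fun _ => {f | f < l}) (fun i _ => hl)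
  have hprod : (∏ i ∈ (Icc 1 n).filter (fun i => ¬ k ∣ i),
      indicatorSeries ℚ ((· * i) '' {f | f < l})) = ggf n k l :=
    prod_congr rfl fun i hi => indicator_eq_geom i l (hs i hi)
  rw [hprod] at hgf
  rw [← hgf]
  norm_cast
  rw [Nat.card_eq_fintype_card, Fintype.card_subtype]
  congr 1
  apply Finset.filter_congr
  intro p _
  constructor
  · rintro ⟨h1, h2⟩
    constructor
    · intro j
      rcases Nat.eq_zero_or_pos j with rfl | hj
      · have : Multiset.count 0 p.parts = 0 :=
          Multiset.count_eq_zero.2 fun h => (p.parts_pos h).ne' rfl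
        simpa [this] using hl
      · exact h2 j hj
    · intro j hj
      simp only [mem_filter, mem_Icc]
      refine ⟨⟨p.parts_pos hj, ?_⟩, ?_⟩
      · calc j ≤ p.parts.sum := Multiset.single_le_sum (fun _ _ => Nat.zero_le _) _ hj
        _ = n := p.parts_sum
      · rintro ⟨c, rfl⟩
        have hc : 1 ≤ c := by
          rcases Nat.eq_zero_or_pos c with rfl | hc
          · rw [mul_zero] at hj
            exact absurd (p.parts_pos hj) (lt_irrefl 0)
          · exact hc
        have := h1 c hc
        rw [mul_comm c k] at this
        exact (Multiset.count_eq_zero.1 this) hj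
  · rintro ⟨h1, h2⟩
    constructor
    · intro i _
      refine Multiset.count_eq_zero.2 fun hmem => ?_
      have := h2 _ hmem
      simp only [mem_filter] at this
      exact this.2 ⟨i, mul_comm i k⟩
    · intro i _
      exact h1 i

end

end LittleGlaisherProof

/-- **Little Glaisher theorem.** For all positive integers `k`, `l`, `n`, the number of
partitions of `n` into parts not divisible by `k` in which every part occurs fewer than
`l` times equals the number of partitions of `n` into parts not divisible by `l` in
which every part occurs fewer than `k` times. -/
theorem little_glaisher_theorem (k l n : ℕ) (hk : 0 < k) (hl : 0 < l) (hn : 0 < n) :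
    Nat.card {p : n.Partition //
      (∀ i : ℕ, 1 ≤ i → Multiset.count (i * k) p.parts = 0) ∧
      (∀ i : ℕ, 1 ≤ i → Multiset.count i p.parts < l)} =
    Nat.card {p : n.Partition //
      (∀ i : ℕ, 1 ≤ i → Multiset.count (i * l) p.parts = 0) ∧
      (∀ i : ℕ, 1 ≤ i → Multiset.count i p.parts < k)} := by
  have h1 := LittleGlaisherProof.card_eq_coeff k l n hk hl
  have h2 := LittleGlaisherProof.card_eq_coeff l k n hl hk
  have h3 := LittleGlaisherProof.coeff_ggf_symm k l n hk hl
  exact_mod_cast h1.trans (h3.trans h2.symm)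
end

section
/- For all positive integers k and l, the following identity of formal power series in q (over the integers) holds: ∏_{i ≥ 1, k ∤ i} (1 + q^i + q^{2i} + ... + q^{(l-1)i}) = ∏_{i ≥ 1, l ∤ i} (1 + q^i + q^{2i} + ... + q^{(k-1)i}). -/
open Finset PowerSeries


namespace LGaux

abbrev R := PowerSeries ℤ

/-- congruence mod X^(n+1) -/
def Cng (n : ℕ) (f g : R) : Prop := (X : R)^(n+1) ∣ f - g

lemma Cng.refl (n : ℕ) (f : R) : Cng n f f := by simp [Cng]

lemma Cng.symm {n : ℕ} {f g : R} (h : Cng n f g) : Cng n g f := by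
  have := dvd_neg.mpr h
  simpa [Cng, neg_sub] using this

lemma Cng.trans {n : ℕ} {f g h : R} (h1 : Cng n f g) (h2 : Cng n g h) : Cng n f h := by
  have := dvd_add h1 h2
  simpa [Cng] using this

lemma Cng.mul {n : ℕ} {f g f' g' : R} (h : Cng n f g) (h' : Cng n f' g') :
    Cng n (f * f') (g * g') := by
  have e : f * f' - g * g' = f * (f' - g') + (f - g) * g' := by ring
  unfold Cng at *
  rw [e]
  exact dvd_add (h'.mul_left f) (h.mul_right g')

lemma Cng.coeff {n : ℕ} {f g : R} (h : Cng n f g) :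
    PowerSeries.coeff (R := ℤ) n f = PowerSeries.coeff (R := ℤ) n g := by
  have := (PowerSeries.X_pow_dvd_iff.mp h) n (Nat.lt_succ_self n)
  rw [map_sub, sub_eq_zero] at this
  exact this

lemma cng_one_of_gt {n m : ℕ} (hm : n < m) : Cng n (1 - (X : R)^m) 1 := by
  unfold Cng
  simpa using (pow_dvd_pow (X : R) hm).neg_right

lemma prod_cng_one {n : ℕ} {s : Finset ℕ} {f : ℕ → R} (h : ∀ i ∈ s, Cng n (f i) 1) :
    Cng n (∏ i ∈ s, f i) 1 := by
  refine Finset.prod_induction f (fun x => Cng n x 1) (fun a b ha hb => ?_) (Cng.refl n 1) h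
  simpa using ha.mul hb

lemma geom (m i : ℕ) :
    (∑ j ∈ range m, (X : R)^(j*i)) * (1 - (X : R)^i) = 1 - (X : R)^(m*i) := by
  have h := geom_sum_mul ((X : R)^i) m
  have e : ∀ j : ℕ, ((X : R)^i)^j = (X : R)^(j*i) := fun j => by
    rw [← pow_mul, Nat.mul_comm]
  simp_rw [e] at h
  have : (∑ j ∈ range m, (X : R)^(j*i)) * (1 - (X : R)^i)
      = -((∑ j ∈ range m, (X : R)^(j*i)) * ((X : R)^i - 1)) := by ring
  rw [this, h]
  ring

lemma filter_dvd_eq_image (k n : ℕ) (hk : 0 < k) :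
    (Icc 1 n).filter (fun i => k ∣ i) = (Icc 1 (n/k)).image (fun j => k*j) := by
  ext i
  simp only [mem_filter, mem_image, mem_Icc]
  constructor
  · rintro ⟨⟨h1, h2⟩, c, rfl⟩
    refine ⟨c, ⟨?_, ?_⟩, rfl⟩
    · rcases Nat.eq_zero_or_pos c with rfl | hc
      · omega
      · exact hc
    · exact (Nat.le_div_iff_mul_le hk).mpr (by rw [Nat.mul_comm]; omega)
  · rintro ⟨j, ⟨hj1, hj2⟩, rfl⟩
    have h2 := (Nat.le_div_iff_mul_le hk).mp hj2
    rw [Nat.mul_comm] at h2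
    exact ⟨⟨by nlinarith, by omega⟩, ⟨j, rfl⟩⟩

end LGaux

namespace LGaux2
open LGaux

lemma key (k l n : ℕ) (hk : 0 < k) :
    (∏ i ∈ (Icc 1 n).filter (fun i => ¬ k ∣ i), ∑ j ∈ range l, (X : R)^(j*i))
      * ((∏ i ∈ Icc 1 n, (1 - (X : R)^i))
      * (∏ j ∈ Icc 1 (n/k), (1 - (X : R)^(l*(k*j))))) =
    (∏ i ∈ Icc 1 n, (1 - (X : R)^(l*i)))
      * (∏ j ∈ Icc 1 (n/k), (1 - (X : R)^(k*j))) := by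
  have himg := filter_dvd_eq_image k n hk
  have hsplit : ∀ f : ℕ → R, ∏ i ∈ Icc 1 n, f i =
      (∏ i ∈ (Icc 1 n).filter (fun i => ¬ k ∣ i), f i) * (∏ j ∈ Icc 1 (n/k), f (k*j)) := by
    intro f
    rw [← Finset.prod_filter_mul_prod_filter_not (Icc 1 n) (fun i => ¬ k ∣ i) f]
    congr 1
    rw [show (Icc 1 n).filter (fun i => ¬¬ k ∣ i) = (Icc 1 n).filter (fun i => k ∣ i) by simp,
      himg, Finset.prod_image (fun a _ b _ h => Nat.eq_of_mul_eq_mul_left hk h)]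
  rw [hsplit (fun i => 1 - (X:R)^i), hsplit (fun i => 1 - (X:R)^(l*i))]
  have hA : (∏ i ∈ (Icc 1 n).filter (fun i => ¬ k ∣ i), ∑ j ∈ range l, (X : R)^(j*i))
      * (∏ i ∈ (Icc 1 n).filter (fun i => ¬ k ∣ i), (1 - (X:R)^i))
      = ∏ i ∈ (Icc 1 n).filter (fun i => ¬ k ∣ i), (1 - (X:R)^(l*i)) := by
    rw [← Finset.prod_mul_distrib]
    exact Finset.prod_congr rfl (fun i _ => geom l i)
  rw [← hA]
  ring

lemma trunc_prod (k m n : ℕ) (hk : 0 < k) (hm : k ≤ m) :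
    Cng n (∏ i ∈ Icc 1 n, (1 - (X:R)^(m*i))) (∏ j ∈ Icc 1 (n/k), (1 - (X:R)^(m*j))) := by
  have h1 : (0:ℕ) ≤ n/k := Nat.zero_le _
  have h2 : n/k ≤ n := Nat.div_le_self n k
  rw [show (1:ℕ) = 0 + 1 from rfl, Finset.Icc_add_one_left_eq_Ioc, Finset.Icc_add_one_left_eq_Ioc,
    ← Finset.prod_Ioc_consecutive (fun i => 1 - (X:R)^(m*i)) h1 h2]
  have htail : Cng n (∏ i ∈ Ioc (n/k) n, (1 - (X:R)^(m*i))) 1 := by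
    apply prod_cng_one
    intro i hi
    rw [Finset.mem_Ioc] at hi
    apply cng_one_of_gt
    calc n < i * k := (Nat.div_lt_iff_lt_mul hk).mp hi.1
    _ = k * i := Nat.mul_comm i k
    _ ≤ m * i := Nat.mul_le_mul_right i hm
  have := (Cng.refl n (∏ j ∈ Ioc 0 (n/k), (1 - (X:R)^(m*j)))).mul htail
  simpa using this

lemma constCoeff_prod (s : Finset ℕ) (e : ℕ → ℕ) (he : ∀ i ∈ s, 0 < e i) :
    constantCoeff (R := ℤ) (∏ i ∈ s, (1 - (X:R)^(e i))) = 1 := by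
  rw [map_prod, Finset.prod_eq_one]
  intro i hi
  simp [zero_pow (he i hi).ne']

end LGaux2

open LGaux LGaux2

/-- **Little Glaisher theorem, generating function form.** In `ℤ[[q]]` one has
`∏_{i≥1, k∤i} (1 + q^i + ⋯ + q^{(l-1)i}) = ∏_{i≥1, l∤i} (1 + q^i + ⋯ + q^{(k-1)i})`.
An equality of formal power series given by infinite products is expressed
coefficientwise: for each `n`, the coefficient of `q^n` is unchanged if every factor
indexed by `i > n` is dropped (such a factor is `1 + O(q^{n+1})`), so the identity is
stated using the truncated products over `1 ≤ i ≤ n`. -/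
theorem little_glaisher_q_series (k l : ℕ) (hk : 0 < k) (hl : 0 < l) (n : ℕ) :
    PowerSeries.coeff (R := ℤ) n
      (∏ i ∈ (Icc 1 n).filter (fun i => ¬ k ∣ i),
        ∑ j ∈ range l, (PowerSeries.X : PowerSeries ℤ) ^ (j * i)) =
    PowerSeries.coeff (R := ℤ) n
      (∏ i ∈ (Icc 1 n).filter (fun i => ¬ l ∣ i),
        ∑ j ∈ range k, (PowerSeries.X : PowerSeries ℤ) ^ (j * i)) := by
  have hkl : 0 < k * l := Nat.mul_pos hk hl
  have key1 := LGaux2.key k l n hk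
  have key2 := LGaux2.key l k n hl
  have e1 : ∀ j : ℕ, l*(k*j) = k*l*j := fun j => by ring
  have e2 : ∀ j : ℕ, k*(l*j) = k*l*j := fun j => by ring
  simp only [e1] at key1
  simp only [e2] at key2
  have cW1 : Cng n (∏ i ∈ Icc 1 n, (1 - (X:R)^(k*l*i)))
      (∏ j ∈ Icc 1 (n/k), (1 - (X:R)^(k*l*j))) :=
    trunc_prod k (k*l) n hk (Nat.le_mul_of_pos_right k hl)
  have cW2 : Cng n (∏ i ∈ Icc 1 n, (1 - (X:R)^(k*l*i)))
      (∏ j ∈ Icc 1 (n/l), (1 - (X:R)^(k*l*j))) :=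
    trunc_prod l (k*l) n hl (Nat.le_mul_of_pos_left l hk)
  have cP1 := trunc_prod k k n hk le_rfl
  have cP2 := trunc_prod l l n hl le_rfl
  -- step 1 : A * (U * W) ≡ Vl * Vk
  have c1 : Cng n
      ((∏ i ∈ (Icc 1 n).filter (fun i => ¬ k ∣ i), ∑ j ∈ range l, (X:R)^(j*i))
        * ((∏ i ∈ Icc 1 n, (1 - (X:R)^i)) * (∏ i ∈ Icc 1 n, (1 - (X:R)^(k*l*i)))))
      ((∏ i ∈ Icc 1 n, (1 - (X:R)^(l*i))) * (∏ i ∈ Icc 1 n, (1 - (X:R)^(k*i)))) := by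
    have step1 := (Cng.refl n (∏ i ∈ (Icc 1 n).filter (fun i => ¬ k ∣ i),
        ∑ j ∈ range l, (X:R)^(j*i))).mul
      ((Cng.refl n (∏ i ∈ Icc 1 n, (1 - (X:R)^i))).mul cW1)
    rw [key1] at step1
    exact step1.trans ((Cng.refl n (∏ i ∈ Icc 1 n, (1 - (X:R)^(l*i)))).mul cP1.symm)
  have c2 : Cng n
      ((∏ i ∈ (Icc 1 n).filter (fun i => ¬ l ∣ i), ∑ j ∈ range k, (X:R)^(j*i))
        * ((∏ i ∈ Icc 1 n, (1 - (X:R)^i)) * (∏ i ∈ Icc 1 n, (1 - (X:R)^(k*l*i)))))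
      ((∏ i ∈ Icc 1 n, (1 - (X:R)^(k*i))) * (∏ i ∈ Icc 1 n, (1 - (X:R)^(l*i)))) := by
    have step1 := (Cng.refl n (∏ i ∈ (Icc 1 n).filter (fun i => ¬ l ∣ i),
        ∑ j ∈ range k, (X:R)^(j*i))).mul
      ((Cng.refl n (∏ i ∈ Icc 1 n, (1 - (X:R)^i))).mul cW2)
    rw [key2] at step1
    exact step1.trans ((Cng.refl n (∏ i ∈ Icc 1 n, (1 - (X:R)^(k*i)))).mul cP2.symm)
  have cswap : Cng n
      ((∏ i ∈ Icc 1 n, (1 - (X:R)^(l*i))) * (∏ i ∈ Icc 1 n, (1 - (X:R)^(k*i))))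
      ((∏ i ∈ Icc 1 n, (1 - (X:R)^(k*i))) * (∏ i ∈ Icc 1 n, (1 - (X:R)^(l*i)))) := by
    rw [mul_comm (∏ i ∈ Icc 1 n, (1 - (X:R)^(l*i)))]
    exact Cng.refl n _
  have c : Cng n
      ((∏ i ∈ (Icc 1 n).filter (fun i => ¬ k ∣ i), ∑ j ∈ range l, (X:R)^(j*i))
        * ((∏ i ∈ Icc 1 n, (1 - (X:R)^i)) * (∏ i ∈ Icc 1 n, (1 - (X:R)^(k*l*i)))))
      ((∏ i ∈ (Icc 1 n).filter (fun i => ¬ l ∣ i), ∑ j ∈ range k, (X:R)^(j*i))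
        * ((∏ i ∈ Icc 1 n, (1 - (X:R)^i)) * (∏ i ∈ Icc 1 n, (1 - (X:R)^(k*l*i))))) :=
    (c1.trans cswap).trans c2.symm
  unfold Cng at c
  rw [show ∀ a b u : R, a * u - b * u = (a - b) * u from fun a b u => by ring] at c
  have hU : IsUnit ((∏ i ∈ Icc 1 n, (1 - (X:R)^i)) * (∏ i ∈ Icc 1 n, (1 - (X:R)^(k*l*i)))) := by
    rw [PowerSeries.isUnit_iff_constantCoeff, map_mul]
    have h1 : constantCoeff (R := ℤ) (∏ i ∈ Icc 1 n, (1 - (X:R)^i)) = 1 :=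
      constCoeff_prod _ (fun i => i) (fun i hi => (mem_Icc.mp hi).1)
    have h2 : constantCoeff (R := ℤ) (∏ i ∈ Icc 1 n, (1 - (X:R)^(k*l*i))) = 1 :=
      constCoeff_prod _ (fun i => k*l*i) (fun i hi => Nat.mul_pos hkl (mem_Icc.mp hi).1)
    rw [h1, h2]
    simp
  have hd : (X:R)^(n+1) ∣
      (∏ i ∈ (Icc 1 n).filter (fun i => ¬ k ∣ i), ∑ j ∈ range l, (X:R)^(j*i))
      - (∏ i ∈ (Icc 1 n).filter (fun i => ¬ l ∣ i), ∑ j ∈ range k, (X:R)^(j*i)) :=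
    (hU.dvd_mul_right).mp c
  exact Cng.coeff hd
end

section
/- For all positive integers k and l, the following identity of formal power series in q (over the integers) holds: (∏_{i ≥ 1} (1 - q^i)) · (∏_{i ≥ 1} (1 - q^{kli})) · ∏_{i ≥ 1, k ∤ i} (1 + q^i + q^{2i} + ... + q^{(l-1)i}) = (∏_{i ≥ 1} (1 - q^{ki})) · (∏_{i ≥ 1} (1 - q^{li})). -/
open Finset PowerSeries

private lemma lg_filter_dvd_image (k n : ℕ) (hk : 0 < k) :
    (Icc 1 n).filter (fun i => k ∣ i) =
      ((Icc 1 n).filter (fun j => k * j ≤ n)).image (fun j => k * j) := by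
  ext i
  simp only [mem_image, mem_filter, mem_Icc]
  constructor
  · rintro ⟨⟨h1, h2⟩, j, rfl⟩
    refine ⟨j, ⟨⟨?_, le_trans (Nat.le_mul_of_pos_left j hk) h2⟩, h2⟩, rfl⟩
    rcases Nat.eq_zero_or_pos j with rfl | h
    · simp at h1
    · exact h
  · rintro ⟨j, ⟨⟨hj1, _⟩, hjn⟩, rfl⟩
    exact ⟨⟨le_trans hj1 (Nat.le_mul_of_pos_left j hk), hjn⟩, j, rfl⟩

/-- **Little Glaisher theorem, cleared-denominator generating function form.**
In `ℤ[[q]]` one has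
`(∏_{i≥1} (1 - q^i)) · (∏_{i≥1} (1 - q^{kli})) · (∏_{i≥1, k∤i} (1 + q^i + ⋯ + q^{(l-1)i}))
  = (∏_{i≥1} (1 - q^{ki})) · (∏_{i≥1} (1 - q^{li}))`.
An equality of formal power series given by infinite products is expressed
coefficientwise: for each `n`, the coefficient of `q^n` is unchanged if every factor
indexed by `i > n` is dropped (such a factor is `1 + O(q^{n+1})`), so the identity is
stated using the truncated products over `1 ≤ i ≤ n`. -/
theorem little_glaisher_q_series_cleared (k l : ℕ) (hk : 0 < k) (hl : 0 < l) (n : ℕ) :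
    PowerSeries.coeff n
      ((∏ i ∈ Icc 1 n, (1 - (PowerSeries.X : PowerSeries ℤ) ^ i)) *
        (∏ i ∈ Icc 1 n, (1 - (PowerSeries.X : PowerSeries ℤ) ^ (k * l * i))) *
        (∏ i ∈ (Icc 1 n).filter (fun i => ¬ k ∣ i),
          ∑ j ∈ range l, (PowerSeries.X : PowerSeries ℤ) ^ (j * i))) =
    PowerSeries.coeff n
      ((∏ i ∈ Icc 1 n, (1 - (PowerSeries.X : PowerSeries ℤ) ^ (k * i))) *
        (∏ i ∈ Icc 1 n, (1 - (PowerSeries.X : PowerSeries ℤ) ^ (l * i)))) := by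
  classical
  set I : Ideal (PowerSeries ℤ) :=
    Ideal.span {(PowerSeries.X : PowerSeries ℤ) ^ (n + 1)} with hI
  set φ : PowerSeries ℤ →+* PowerSeries ℤ ⧸ I := Ideal.Quotient.mk I with hφ
  have hX0 : ∀ m : ℕ, n < m → φ ((PowerSeries.X : PowerSeries ℤ) ^ m) = 0 := by
    intro m hm
    rw [hφ, Ideal.Quotient.eq_zero_iff_mem, hI, Ideal.mem_span_singleton]
    exact pow_dvd_pow _ hm
  have hfac1 : ∀ m : ℕ, n < m → φ (1 - (PowerSeries.X : PowerSeries ℤ) ^ m) = 1 := by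
    intro m hm
    rw [map_sub, map_one, hX0 m hm, sub_zero]
  set A : Finset ℕ := Icc 1 n with hA
  set D : Finset ℕ := A.filter (fun i => k ∣ i) with hD
  set N : Finset ℕ := A.filter (fun i => ¬ k ∣ i) with hN
  set T : Finset ℕ := A.filter (fun j => k * j ≤ n) with hT
  -- geometric factor identity
  have geom : ∀ i : ℕ, (1 - (PowerSeries.X : PowerSeries ℤ) ^ i) *
      (∑ j ∈ range l, (PowerSeries.X : PowerSeries ℤ) ^ (j * i)) =
      1 - (PowerSeries.X : PowerSeries ℤ) ^ (l * i) := by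
    intro i
    have h1 : ∀ j : ℕ, (PowerSeries.X : PowerSeries ℤ) ^ (j * i) =
        ((PowerSeries.X : PowerSeries ℤ) ^ i) ^ j := by
      intro j; rw [← pow_mul, mul_comm]
    have h2 := geom_sum_mul ((PowerSeries.X : PowerSeries ℤ) ^ i) l
    simp only [h1]
    rw [← pow_mul, mul_comm i l] at *
    linear_combination -h2
  -- reindexing over multiples of k
  have reD : ∀ f : ℕ → PowerSeries ℤ, ∏ i ∈ D, f i = ∏ j ∈ T, f (k * j) := by
    intro f
    rw [hD, lg_filter_dvd_image k n hk, prod_image]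
    intro a _ b _ h
    exact Nat.eq_of_mul_eq_mul_left hk h
  -- step (a): φ ∏_{i∈D}(1 - X^i) = φ ∏_{j∈A}(1 - X^{k j})
  have stepA : φ (∏ i ∈ D, (1 - (PowerSeries.X : PowerSeries ℤ) ^ i)) =
      φ (∏ j ∈ A, (1 - (PowerSeries.X : PowerSeries ℤ) ^ (k * j))) := by
    rw [reD, map_prod, map_prod]
    refine Finset.prod_subset (filter_subset _ _) ?_
    intro j hjA hjT
    apply hfac1
    by_contra hle
    exact hjT (mem_filter.mpr ⟨hjA, not_lt.mp hle⟩)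
  -- step (b): φ ∏_{i∈A}(1 - X^{k l i}) = φ ∏_{i∈D}(1 - X^{l i})
  have stepB : φ (∏ i ∈ A, (1 - (PowerSeries.X : PowerSeries ℤ) ^ (k * l * i))) =
      φ (∏ i ∈ D, (1 - (PowerSeries.X : PowerSeries ℤ) ^ (l * i))) := by
    have hre : ∏ i ∈ D, (1 - (PowerSeries.X : PowerSeries ℤ) ^ (l * i)) =
        ∏ j ∈ T, (1 - (PowerSeries.X : PowerSeries ℤ) ^ (k * l * j)) := by
      rw [reD]
      refine Finset.prod_congr rfl fun j _ => ?_
      ring_nf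
    rw [hre, map_prod, map_prod]
    set T' : Finset ℕ := A.filter (fun j => k * l * j ≤ n) with hT'
    have e1 : ∏ j ∈ A, φ (1 - (PowerSeries.X : PowerSeries ℤ) ^ (k * l * j)) =
        ∏ j ∈ T', φ (1 - (PowerSeries.X : PowerSeries ℤ) ^ (k * l * j)) := by
      symm
      refine Finset.prod_subset (filter_subset _ _) ?_
      intro j hjA hjT'
      apply hfac1
      by_contra hle
      exact hjT' (mem_filter.mpr ⟨hjA, not_lt.mp hle⟩)
    have e2 : ∏ j ∈ T, φ (1 - (PowerSeries.X : PowerSeries ℤ) ^ (k * l * j)) =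
        ∏ j ∈ T', φ (1 - (PowerSeries.X : PowerSeries ℤ) ^ (k * l * j)) := by
      symm
      refine Finset.prod_subset ?_ ?_
      · intro j hj
        rw [hT'] at hj
        rw [hT]
        rcases mem_filter.mp hj with ⟨hjA, hjle⟩
        refine mem_filter.mpr ⟨hjA, ?_⟩
        calc k * j ≤ k * l * j := by
              have : k * j ≤ k * j * l := Nat.le_mul_of_pos_right _ hl
              calc k * j ≤ k * j * l := this
                _ = k * l * j := by ring
          _ ≤ n := hjle
      · intro j hjT hjT'
        apply hfac1
        by_contra hle
        exact hjT' (mem_filter.mpr ⟨(mem_filter.mp hjT).1, not_lt.mp hle⟩)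
    rw [e1, e2]
  -- split products over A into D and N parts
  have splitA : ∀ f : ℕ → PowerSeries ℤ,
      ∏ i ∈ A, f i = (∏ i ∈ D, f i) * ∏ i ∈ N, f i := by
    intro f
    rw [hD, hN]
    exact (Finset.prod_filter_mul_prod_filter_not A _ f).symm
  -- geometric step: ∏_N (1 - X^i) * ∏_N Σ = ∏_N (1 - X^{l i})
  have stepG : (∏ i ∈ N, (1 - (PowerSeries.X : PowerSeries ℤ) ^ i)) *
      (∏ i ∈ N, ∑ j ∈ range l, (PowerSeries.X : PowerSeries ℤ) ^ (j * i)) =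
      ∏ i ∈ N, (1 - (PowerSeries.X : PowerSeries ℤ) ^ (l * i)) := by
    rw [← Finset.prod_mul_distrib]
    exact Finset.prod_congr rfl fun i _ => geom i
  -- the main quotient-level equality
  have main : φ ((∏ i ∈ A, (1 - (PowerSeries.X : PowerSeries ℤ) ^ i)) *
        (∏ i ∈ A, (1 - (PowerSeries.X : PowerSeries ℤ) ^ (k * l * i))) *
        (∏ i ∈ N, ∑ j ∈ range l, (PowerSeries.X : PowerSeries ℤ) ^ (j * i))) =
      φ ((∏ i ∈ A, (1 - (PowerSeries.X : PowerSeries ℤ) ^ (k * i))) *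
        (∏ i ∈ A, (1 - (PowerSeries.X : PowerSeries ℤ) ^ (l * i)))) := by
    rw [splitA (fun i => 1 - (PowerSeries.X : PowerSeries ℤ) ^ i)]
    rw [splitA (fun i => 1 - (PowerSeries.X : PowerSeries ℤ) ^ (l * i))]
    have lhs_re : (∏ i ∈ D, (1 - (PowerSeries.X : PowerSeries ℤ) ^ i)) *
        (∏ i ∈ N, (1 - (PowerSeries.X : PowerSeries ℤ) ^ i)) *
        (∏ i ∈ A, (1 - (PowerSeries.X : PowerSeries ℤ) ^ (k * l * i))) *
        (∏ i ∈ N, ∑ j ∈ range l, (PowerSeries.X : PowerSeries ℤ) ^ (j * i)) =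
        (∏ i ∈ D, (1 - (PowerSeries.X : PowerSeries ℤ) ^ i)) *
        (∏ i ∈ A, (1 - (PowerSeries.X : PowerSeries ℤ) ^ (k * l * i))) *
        ∏ i ∈ N, (1 - (PowerSeries.X : PowerSeries ℤ) ^ (l * i)) := by
      rw [← stepG]; ring
    rw [lhs_re, map_mul, map_mul, map_mul, map_mul, stepA, stepB]
    ring
  -- descend to the coefficient statement
  have hdvd : (PowerSeries.X : PowerSeries ℤ) ^ (n + 1) ∣
      ((∏ i ∈ A, (1 - (PowerSeries.X : PowerSeries ℤ) ^ i)) *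
        (∏ i ∈ A, (1 - (PowerSeries.X : PowerSeries ℤ) ^ (k * l * i))) *
        (∏ i ∈ N, ∑ j ∈ range l, (PowerSeries.X : PowerSeries ℤ) ^ (j * i)) -
      ((∏ i ∈ A, (1 - (PowerSeries.X : PowerSeries ℤ) ^ (k * i))) *
        (∏ i ∈ A, (1 - (PowerSeries.X : PowerSeries ℤ) ^ (l * i))))) := by
    rw [← Ideal.mem_span_singleton, ← hI]
    exact Ideal.Quotient.eq.mp main
  have hc := (PowerSeries.X_pow_dvd_iff.mp hdvd) n (lt_add_one n)
  rw [map_sub] at hc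
  exact sub_eq_zero.mp hc
end

section
/- For all positive integers l and n, the number of partitions of n into odd parts in which every part occurs fewer than l times equals the number of partitions of n into distinct parts none of which is divisible by l. -/
open PowerSeries

namespace Theorems100

noncomputable section

variable {α : Type*}

open Finset

open scoped Classical

/-- The partial product for the generating function for odd partitions.
TODO: As `m` tends to infinity, this converges (in the `X`-adic topology).

If `m` is sufficiently large, the `i`th coefficient gives the number of odd partitions of the
natural number `i`: proved in `oddGF_prop`.
It is stated for an arbitrary field `α`, though it usually suffices to use `ℚ` or `ℝ`.
-/
def partialOddGF (m : ℕ) [Field α] :=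
  ∏ i ∈ range m, (1 - (X : PowerSeries α) ^ (2 * i + 1))⁻¹

/-- The partial product for the generating function for distinct partitions.
TODO: As `m` tends to infinity, this converges (in the `X`-adic topology).

If `m` is sufficiently large, the `i`th coefficient gives the number of distinct partitions of the
natural number `i`: proved in `distinctGF_prop`.
It is stated for an arbitrary commutative semiring `α`, though it usually suffices to use `ℕ`, `ℚ`
or `ℝ`.
-/
def partialDistinctGF (m : ℕ) [CommSemiring α] :=
  ∏ i ∈ range m, (1 + (X : PowerSeries α) ^ (i + 1))

open Finset.HasAntidiagonal

universe u
variable {ι : Type u}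

/-- A convenience constructor for the power series whose coefficients indicate a subset. -/
def indicatorSeries (α : Type*) [Semiring α] (s : Set ℕ) : PowerSeries α :=
  PowerSeries.mk fun n => if n ∈ s then 1 else 0

theorem coeff_indicator (s : Set ℕ) [Semiring α] (n : ℕ) :
    coeff (R := α) n (indicatorSeries _ s) = if n ∈ s then 1 else 0 :=
  coeff_mk _ _

theorem coeff_indicator_pos (s : Set ℕ) [Semiring α] (n : ℕ) (h : n ∈ s) :
    coeff (R := α) n (indicatorSeries _ s) = 1 := by rw [coeff_indicator, if_pos h]

theorem coeff_indicator_neg (s : Set ℕ) [Semiring α] (n : ℕ) (h : n ∉ s) :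
    coeff (R := α) n (indicatorSeries _ s) = 0 := by rw [coeff_indicator, if_neg h]

theorem constantCoeff_indicator (s : Set ℕ) [Semiring α] :
    constantCoeff (R := α) (indicatorSeries _ s) = if 0 ∈ s then 1 else 0 :=
  rfl

theorem two_series (i : ℕ) [Semiring α] :
    1 + (X : PowerSeries α) ^ i.succ = indicatorSeries α {0, i.succ} := by
  ext n
  simp only [coeff_indicator, coeff_one, coeff_X_pow, Set.mem_insert_iff, Set.mem_singleton_iff,
    map_add]
  cases' n with d
  · simp [(Nat.succ_ne_zero i).symm]
  · simp [Nat.succ_ne_zero d]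

theorem num_series' [Field α] (i : ℕ) :
    (1 - (X : PowerSeries α) ^ (i + 1))⁻¹ = indicatorSeries α {k | i + 1 ∣ k} := by
  rw [PowerSeries.inv_eq_iff_mul_eq_one]
  · ext n
    cases n with
    | zero => simp [mul_sub, zero_pow, constantCoeff_indicator]
    | succ n =>
      simp only [coeff_one, if_false, mul_sub, mul_one, coeff_indicator,
        LinearMap.map_sub, reduceCtorEq]
      simp_rw [coeff_mul, coeff_X_pow, coeff_indicator, @boole_mul _ _ _ _]
      erw [@sum_ite _ _ _ _ _ (fun _ => Classical.propDecidable _), sum_ite]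
      simp_rw [@filter_filter _ _ _ _ _, sum_const_zero, add_zero, sum_const, nsmul_eq_mul, mul_one,
        sub_eq_iff_eq_add, zero_add]
      symm
      split_ifs with h
      · suffices #{a ∈ antidiagonal (n + 1) | i + 1 ∣ a.fst ∧ a.snd = i + 1} = 1 by
          simp only [Set.mem_setOf_eq]; convert congr_arg ((↑) : ℕ → α) this; norm_cast
        rw [card_eq_one]
        cases' h with p hp
        refine ⟨((i + 1) * (p - 1), i + 1), ?_⟩
        ext ⟨a₁, a₂⟩
        simp only [mem_filter, Prod.mk.injEq, Finset.HasAntidiagonal.mem_antidiagonal, mem_singleton]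
        constructor
        · rintro ⟨a_left, ⟨a, rfl⟩, rfl⟩
          refine ⟨?_, rfl⟩
          rw [Nat.mul_sub_left_distrib, ← hp, ← a_left, mul_one, Nat.add_sub_cancel]
        · rintro ⟨rfl, rfl⟩
          match p with
          | 0 => rw [mul_zero] at hp; cases hp
          | p + 1 => rw [hp]; simp [mul_add]
      · suffices #{a ∈ antidiagonal (n + 1) | i + 1 ∣ a.fst ∧ a.snd = i + 1} = 0 by
          simp only [Set.mem_setOf_eq]; convert congr_arg ((↑) : ℕ → α) this; norm_cast
        rw [card_eq_zero]
        apply eq_empty_of_forall_notMem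
        simp only [Prod.forall, mem_filter, not_and, Finset.HasAntidiagonal.mem_antidiagonal]
        rintro _ h₁ h₂ ⟨a, rfl⟩ rfl
        apply h
        simp [← h₂]
  · simp [zero_pow]

def mkOdd : ℕ ↪ ℕ :=
  ⟨fun i => 2 * i + 1, fun x y h => by linarith⟩

-- The main workhorse of the partition theorem proof.
theorem partialGF_prop (α : Type*) [CommSemiring α] (n : ℕ) (s : Finset ℕ) (hs : ∀ i ∈ s, 0 < i)
    (c : ℕ → Set ℕ) (hc : ∀ i, i ∉ s → 0 ∈ c i) :
    #{p : n.Partition | (∀ j, p.parts.count j ∈ c j) ∧ ∀ j ∈ p.parts, j ∈ s} =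
      coeff (R := α) n (∏ i ∈ s, indicatorSeries α ((· * i) '' c i)) := by
  simp_rw [coeff_prod, coeff_indicator, prod_boole, sum_boole]
  apply congr_arg
  simp only [mem_univ, forall_true_left, not_and, not_forall, exists_prop,
    Set.mem_image, not_exists]
  set φ : (a : Nat.Partition n) →
    a ∈ filter (fun p ↦ (∀ (j : ℕ), Multiset.count j p.parts ∈ c j) ∧ ∀ j ∈ p.parts, j ∈ s) univ →
    ℕ →₀ ℕ := fun p _ => {
      toFun := fun i => Multiset.count i p.parts • i
      support := Finset.filter (fun i => i ≠ 0) p.parts.toFinset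
      mem_support_toFun := fun a => by
        simp only [smul_eq_mul, ne_eq, mul_eq_zero, Multiset.count_eq_zero]
        rw [not_or, not_not]
        simp only [Multiset.mem_toFinset, not_not, mem_filter] }
  refine Finset.card_bij φ ?_ ?_ ?_
  · intro a ha
    simp only [φ, not_forall, not_exists, not_and, exists_prop, mem_filter]
    rw [mem_finsuppAntidiag]
    dsimp only [ne_eq, smul_eq_mul, id_eq, eq_mpr_eq_cast, le_eq_subset, Finsupp.coe_mk]
    simp only [mem_univ, forall_true_left, not_and, not_forall, exists_prop,
      mem_filter, true_and] at ha
    refine ⟨⟨?_, fun i ↦ ?_⟩, fun i _ ↦ ⟨a.parts.count i, ha.1 i, rfl⟩⟩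
    · conv_rhs => simp [← a.parts_sum]
      rw [sum_multiset_count_of_subset _ s]
      · simp only [smul_eq_mul]
      · intro i
        simp only [Multiset.mem_toFinset, not_not, mem_filter]
        apply ha.2
    · simp only [ne_eq, Multiset.mem_toFinset, not_not, mem_filter, and_imp]
      exact fun hi _ ↦ ha.2 i hi
  · intro p₁ hp₁ p₂ hp₂ h
    apply Nat.Partition.ext
    simp only [true_and, mem_univ, mem_filter] at hp₁ hp₂
    ext i
    simp only [φ, ne_eq, Multiset.mem_toFinset, not_not, smul_eq_mul, Finsupp.mk.injEq] at h
    by_cases hi : i = 0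
    · rw [hi]
      rw [Multiset.count_eq_zero_of_notMem]
      · rw [Multiset.count_eq_zero_of_notMem]
        intro a; exact Nat.lt_irrefl 0 (hs 0 (hp₂.2 0 a))
      intro a; exact Nat.lt_irrefl 0 (hs 0 (hp₁.2 0 a))
    · rw [← mul_left_inj' hi]
      rw [funext_iff] at h
      exact h.2 i
  · simp only [φ, mem_filter, mem_finsuppAntidiag, mem_univ, exists_prop, true_and, and_assoc]
    rintro f ⟨hf, hf₃, hf₄⟩
    have hf' : f ∈ finsuppAntidiag s n := mem_finsuppAntidiag.mpr ⟨hf, hf₃⟩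
    simp only [mem_finsuppAntidiag] at hf'
    refine ⟨⟨∑ i ∈ s, Multiset.replicate (f i / i) i, ?_, ?_⟩, ?_, ?_, ?_⟩
    · intro i hi
      simp only [exists_prop, Multiset.mem_sum, mem_map, Function.Embedding.coeFn_mk] at hi
      rcases hi with ⟨t, ht, z⟩
      apply hs
      rwa [Multiset.eq_of_mem_replicate z]
    · simp_rw [Multiset.sum_sum, Multiset.sum_replicate, Nat.nsmul_eq_mul]
      rw [← hf'.1]
      refine sum_congr rfl fun i hi => Nat.div_mul_cancel ?_
      rcases hf₄ i hi with ⟨w, _, hw₂⟩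
      rw [← hw₂]
      exact dvd_mul_left _ _
    · intro i
      simp_rw [Multiset.count_sum', Multiset.count_replicate, sum_ite_eq']
      split_ifs with h
      · rcases hf₄ i h with ⟨w, hw₁, hw₂⟩
        rwa [← hw₂, Nat.mul_div_cancel _ (hs i h)]
      · exact hc _ h
    · intro i hi
      rw [Multiset.mem_sum] at hi
      rcases hi with ⟨j, hj₁, hj₂⟩
      rwa [Multiset.eq_of_mem_replicate hj₂]
    · ext i
      simp_rw [Multiset.count_sum', Multiset.count_replicate, sum_ite_eq']
      simp only [ne_eq, Multiset.mem_toFinset, not_not, smul_eq_mul, ite_mul,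
        zero_mul, Finsupp.coe_mk]
      split_ifs with h
      · apply Nat.div_mul_cancel
        rcases hf₄ i h with ⟨w, _, hw₂⟩
        apply Dvd.intro_left _ hw₂
      · apply symm
        rw [← Finsupp.notMem_support_iff]
        exact notMem_mono hf'.2 h

theorem partialOddGF_prop [Field α] (n m : ℕ) :
    #{p : n.Partition | ∀ j ∈ p.parts, j ∈ (range m).map mkOdd} = coeff (R := α) n (partialOddGF m) := by
  rw [partialOddGF]
  convert partialGF_prop α n
    ((range m).map mkOdd) _ (fun _ => Set.univ) (fun _ _ => trivial) using 2
  · congr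
    simp only [true_and, forall_const, Set.mem_univ]
  · rw [Finset.prod_map]
    simp_rw [num_series']
    congr! 2 with x
    ext k
    constructor
    · rintro ⟨p, rfl⟩
      refine ⟨p, ⟨⟩, ?_⟩
      apply mul_comm
    rintro ⟨a_w, -, rfl⟩
    apply Dvd.intro_left a_w rfl
  · intro i
    rw [mem_map]
    rintro ⟨a, -, rfl⟩
    exact Nat.succ_pos _

/-- If m is big enough, the partial product's coefficient counts the number of odd partitions -/
theorem oddGF_prop [Field α] (n m : ℕ) (h : n < m * 2) :
    #(Nat.Partition.odds n) = coeff (R := α) n (partialOddGF m) := by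
  rw [← partialOddGF_prop, Nat.Partition.odds, Nat.Partition.restricted]
  congr 2; ext p; simp only [mem_filter, mem_univ, true_and]
  apply forall₂_congr
  intro i hi
  have hin : i ≤ n := by
    simpa [p.parts_sum] using Multiset.single_le_sum (fun _ _ => Nat.zero_le _) _ hi
  simp only [mkOdd, exists_prop, mem_range, Function.Embedding.coeFn_mk, mem_map]
  constructor
  · intro hi₂
    have := Nat.mod_add_div i 2
    rw [Nat.not_even_iff] at hi₂
    rw [hi₂, add_comm] at this
    refine ⟨i / 2, ?_, this⟩
    rw [Nat.div_lt_iff_lt_mul zero_lt_two]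
    exact lt_of_le_of_lt hin h
  · rintro ⟨a, -, rfl⟩
    rw [even_iff_two_dvd]
    apply Nat.two_not_dvd_two_mul_add_one

theorem partialDistinctGF_prop [CommSemiring α] (n m : ℕ) :
    #{p : n.Partition |
        p.parts.Nodup ∧ ∀ j ∈ p.parts, j ∈ (range m).map ⟨Nat.succ, Nat.succ_injective⟩} =
      coeff (R := α) n (partialDistinctGF m) := by
  rw [partialDistinctGF]
  convert partialGF_prop α n
    ((range m).map ⟨Nat.succ, Nat.succ_injective⟩) _ (fun _ => {0, 1}) (fun _ _ => Or.inl rfl)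
    using 2
  · congr! with p
    rw [Multiset.nodup_iff_count_le_one]
    congr! 1 with i
    rcases Multiset.count i p.parts with (_ | _ | ms) <;> simp
  · simp_rw [Finset.prod_map, two_series]
    congr with i
    simp [Set.image_pair]
  · simp only [mem_map, Function.Embedding.coeFn_mk]
    rintro i ⟨_, _, rfl⟩
    apply Nat.succ_pos

/-- If m is big enough, the partial product's coefficient counts the number of distinct partitions
-/
theorem distinctGF_prop [CommSemiring α] (n m : ℕ) (h : n < m + 1) :
    #(Nat.Partition.distincts n) = coeff (R := α) n (partialDistinctGF m) := by
  rw [← partialDistinctGF_prop, Nat.Partition.distincts]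
  congr with p
  apply (and_iff_left _).symm
  intro i hi
  have : i ≤ n := by
    simpa [p.parts_sum] using Multiset.single_le_sum (fun _ _ => Nat.zero_le _) _ hi
  simp only [mkOdd, exists_prop, mem_range, Function.Embedding.coeFn_mk, mem_map]
  refine ⟨i - 1, ?_, Nat.succ_pred_eq_of_pos (p.parts_pos hi)⟩
  rw [tsub_lt_iff_right (Nat.one_le_iff_ne_zero.mpr (p.parts_pos hi).ne')]
  exact lt_of_le_of_lt this h

/-- The key proof idea for the partition theorem, showing that the generating functions for both
sequences are ultimately the same (since the factor converges to 0 as m tends to infinity).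
It's enough to not take the limit though, and just consider large enough `m`.
-/
theorem same_gf [Field α] (m : ℕ) :
    (partialOddGF m * (range m).prod fun i => 1 - (X : PowerSeries α) ^ (m + i + 1)) =
      partialDistinctGF m := by
  rw [partialOddGF, partialDistinctGF]
  induction' m with m ih
  · simp
  set! π₀ : PowerSeries α := ∏ i ∈ range m, (1 - X ^ (m + 1 + i + 1)) with hπ₀
  set! π₁ : PowerSeries α := ∏ i ∈ range m, (1 - X ^ (2 * i + 1))⁻¹ with hπ₁
  set! π₂ : PowerSeries α := ∏ i ∈ range m, (1 - X ^ (m + i + 1)) with hπ₂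
  set! π₃ : PowerSeries α := ∏ i ∈ range m, (1 + X ^ (i + 1)) with hπ₃
  rw [← hπ₃] at ih
  have h : constantCoeff (R := α) (1 - X ^ (2 * m + 1)) ≠ 0 := by
    rw [RingHom.map_sub, RingHom.map_pow, constantCoeff_one, constantCoeff_X,
      zero_pow (2 * m).succ_ne_zero, sub_zero]
    exact one_ne_zero
  calc
    (∏ i ∈ range (m + 1), (1 - X ^ (2 * i + 1))⁻¹) *
          ∏ i ∈ range (m + 1), (1 - X ^ (m + 1 + i + 1)) =
        π₁ * (1 - X ^ (2 * m + 1))⁻¹ * (π₀ * (1 - X ^ (m + 1 + m + 1))) := by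
      rw [prod_range_succ _ m, ← hπ₁, prod_range_succ _ m, ← hπ₀]
    _ = π₁ * (1 - X ^ (2 * m + 1))⁻¹ * (π₀ * ((1 + X ^ (m + 1)) * (1 - X ^ (m + 1)))) := by
      rw [← sq_sub_sq, one_pow, add_assoc _ m 1, ← two_mul (m + 1), pow_mul']
    _ = π₀ * (1 - X ^ (m + 1)) * (1 - X ^ (2 * m + 1))⁻¹ * (π₁ * (1 + X ^ (m + 1))) := by ring
    _ =
        (∏ i ∈ range (m + 1), (1 - X ^ (m + 1 + i))) * (1 - X ^ (2 * m + 1))⁻¹ *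
          (π₁ * (1 + X ^ (m + 1))) := by
      rw [prod_range_succ', add_zero, hπ₀]; simp_rw [← add_assoc]
    _ = π₂ * (1 - X ^ (m + 1 + m)) * (1 - X ^ (2 * m + 1))⁻¹ * (π₁ * (1 + X ^ (m + 1))) := by
      rw [add_right_comm, hπ₂, ← prod_range_succ]; simp_rw [add_right_comm]
    _ = π₂ * (1 - X ^ (2 * m + 1)) * (1 - X ^ (2 * m + 1))⁻¹ * (π₁ * (1 + X ^ (m + 1))) := by
      rw [two_mul, add_right_comm _ m 1]
    _ = (1 - X ^ (2 * m + 1)) * (1 - X ^ (2 * m + 1))⁻¹ * π₂ * (π₁ * (1 + X ^ (m + 1))) := by ring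
    _ = π₂ * (π₁ * (1 + X ^ (m + 1))) := by rw [PowerSeries.mul_inv_cancel _ h, one_mul]
    _ = π₁ * π₂ * (1 + X ^ (m + 1)) := by ring
    _ = π₃ * (1 + X ^ (m + 1)) := by rw [ih]
    _ = _ := by rw [prod_range_succ]

theorem same_coeffs [Field α] (m n : ℕ) (h : n ≤ m) :
    coeff (R := α) n (partialOddGF m) = coeff (R := α) n (partialDistinctGF m) := by
  rw [← same_gf, coeff_mul_prod_one_sub_of_lt_order]
  rintro i -
  rw [order_X_pow]
  exact mod_cast Nat.lt_succ_of_le (le_add_right h)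

end

end Theorems100
namespace LittleGlaisherAux

open Theorems100 PowerSeries Finset
open scoped Classical

noncomputable section

variable {α : Type*}

/-- Generalisation of `Theorems100.same_gf` to an arbitrary power series with zero
constant coefficient. -/
theorem same_gf' [Field α] (m : ℕ) (Y : PowerSeries α) (hY : constantCoeff (R := α) Y = 0) :
    ((∏ i ∈ range m, (1 - Y ^ (2 * i + 1))⁻¹) * ∏ i ∈ range m, (1 - Y ^ (m + i + 1))) =
      ∏ i ∈ range m, (1 + Y ^ (i + 1)) := by
  induction' m with m ih
  · simp
  set! π₀ : PowerSeries α := ∏ i ∈ range m, (1 - Y ^ (m + 1 + i + 1)) with hπ₀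
  set! π₁ : PowerSeries α := ∏ i ∈ range m, (1 - Y ^ (2 * i + 1))⁻¹ with hπ₁
  set! π₂ : PowerSeries α := ∏ i ∈ range m, (1 - Y ^ (m + i + 1)) with hπ₂
  set! π₃ : PowerSeries α := ∏ i ∈ range m, (1 + Y ^ (i + 1)) with hπ₃
  rw [← hπ₃] at ih
  have h : constantCoeff (R := α) (1 - Y ^ (2 * m + 1)) ≠ 0 := by
    rw [RingHom.map_sub, RingHom.map_pow, constantCoeff_one, hY,
      zero_pow (2 * m).succ_ne_zero, sub_zero]
    exact one_ne_zero
  calc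
    (∏ i ∈ range (m + 1), (1 - Y ^ (2 * i + 1))⁻¹) *
          ∏ i ∈ range (m + 1), (1 - Y ^ (m + 1 + i + 1)) =
        π₁ * (1 - Y ^ (2 * m + 1))⁻¹ * (π₀ * (1 - Y ^ (m + 1 + m + 1))) := by
      rw [prod_range_succ _ m, ← hπ₁, prod_range_succ _ m, ← hπ₀]
    _ = π₁ * (1 - Y ^ (2 * m + 1))⁻¹ * (π₀ * ((1 + Y ^ (m + 1)) * (1 - Y ^ (m + 1)))) := by
      rw [← sq_sub_sq, one_pow, add_assoc _ m 1, ← two_mul (m + 1), pow_mul']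
    _ = π₀ * (1 - Y ^ (m + 1)) * (1 - Y ^ (2 * m + 1))⁻¹ * (π₁ * (1 + Y ^ (m + 1))) := by ring
    _ =
        (∏ i ∈ range (m + 1), (1 - Y ^ (m + 1 + i))) * (1 - Y ^ (2 * m + 1))⁻¹ *
          (π₁ * (1 + Y ^ (m + 1))) := by
      rw [prod_range_succ', add_zero, hπ₀]; simp_rw [← add_assoc]
    _ = π₂ * (1 - Y ^ (m + 1 + m)) * (1 - Y ^ (2 * m + 1))⁻¹ * (π₁ * (1 + Y ^ (m + 1))) := by
      rw [add_right_comm, hπ₂, ← prod_range_succ]; simp_rw [add_right_comm]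
    _ = π₂ * (1 - Y ^ (2 * m + 1)) * (1 - Y ^ (2 * m + 1))⁻¹ * (π₁ * (1 + Y ^ (m + 1))) := by
      rw [two_mul, add_right_comm _ m 1]
    _ = (1 - Y ^ (2 * m + 1)) * (1 - Y ^ (2 * m + 1))⁻¹ * π₂ * (π₁ * (1 + Y ^ (m + 1))) := by ring
    _ = π₂ * (π₁ * (1 + Y ^ (m + 1))) := by rw [PowerSeries.mul_inv_cancel _ h, one_mul]
    _ = π₁ * π₂ * (1 + Y ^ (m + 1)) := by ring
    _ = π₃ * (1 + Y ^ (m + 1)) := by rw [ih]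
    _ = _ := by rw [prod_range_succ]

theorem indicator_geom [Field α] (i l : ℕ) (hi : 0 < i) (hl : 0 < l) :
    indicatorSeries α ((· * i) '' {t | t < l}) = (1 - X ^ (l * i)) * (1 - X ^ i)⁻¹ := by
  rw [PowerSeries.eq_mul_inv_iff_mul_eq (by simp [zero_pow hi.ne'])]
  have hsum : indicatorSeries α ((· * i) '' {t | t < l})
      = ∑ t ∈ range l, (X : PowerSeries α) ^ (t * i) := by
    ext k
    rw [coeff_indicator, map_sum]
    simp_rw [coeff_X_pow]
    rw [Finset.sum_boole]
    by_cases h : k ∈ (· * i) '' {t | t < l}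
    · rw [if_pos h]
      obtain ⟨t, ht, rfl⟩ := h
      have : Finset.filter (fun t' => t * i = t' * i) (range l) = {t} := by
        ext t'
        simp only [mem_filter, mem_range, mem_singleton]
        constructor
        · rintro ⟨_, h2⟩
          exact (Nat.eq_of_mul_eq_mul_right hi h2.symm)
        · rintro rfl
          exact ⟨ht, rfl⟩
      rw [this, card_singleton, Nat.cast_one]
    · rw [if_neg h]
      have : Finset.filter (fun t' => k = t' * i) (range l) = ∅ := by
        ext t'
        simp only [mem_filter, mem_range, notMem_empty, iff_false, not_and]
        intro ht' hk
        exact h ⟨t', ht', hk.symm⟩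
      rw [this, card_empty, Nat.cast_zero]
  rw [hsum]
  have hgeo := geom_sum_mul ((X : PowerSeries α) ^ i) l
  have hpow : ∑ t ∈ range l, (X : PowerSeries α) ^ (t * i)
      = ∑ t ∈ range l, ((X : PowerSeries α) ^ i) ^ t := by
    refine sum_congr rfl fun t _ => ?_
    rw [← pow_mul, mul_comm]
  rw [hpow, mul_comm l i, pow_mul]
  linear_combination -hgeo

end

end LittleGlaisherAux
namespace LittleGlaisherAux

open Theorems100 PowerSeries Finset
open scoped Classical

noncomputable section

theorem key_identity (l n : ℕ) (hl : 0 < l) (hn : 0 < n) :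
    (coeff (R := ℚ) n) ((∏ k ∈ range (n + 1), (1 - ((X : PowerSeries ℚ) ^ l) ^ (2 * k + 1))) *
        ∏ k ∈ range (n + 1), (1 - (X : PowerSeries ℚ) ^ (2 * k + 1))⁻¹) =
      (coeff (R := ℚ) n) (∏ k ∈ Finset.filter (fun k => ¬l ∣ (k + 1)) (range (n + 1)),
        (1 + (X : PowerSeries ℚ) ^ (k + 1))) := by
  set m := n + 1 with hm
  set M := m / l with hMdef
  set Y : PowerSeries ℚ := X ^ l with hY
  have hYc : constantCoeff (R := ℚ) Y = 0 := by simp [hY, zero_pow hl.ne']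
  have hMm : M ≤ m := Nat.div_le_self _ _
  have hlM : l * M ≤ m := by
    rw [mul_comm]; exact Nat.div_mul_le_self m l
  have hnlM : n < l * (M + 1) := by
    have : m < (M + 1) * l := by
      rw [← Nat.div_lt_iff_lt_mul hl]
      exact Nat.lt_succ_self M
    linarith
  set A : PowerSeries ℚ := ∏ k ∈ range m, (1 - Y ^ (2 * k + 1)) with hA
  set F : PowerSeries ℚ := ∏ k ∈ range m, (1 - (X : PowerSeries ℚ) ^ (2 * k + 1))⁻¹ with hF
  set G1 : PowerSeries ℚ := ∏ k ∈ range m, (1 - (X : PowerSeries ℚ) ^ (m + k + 1)) with hG1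
  set D : PowerSeries ℚ := ∏ k ∈ range m, (1 + (X : PowerSeries ℚ) ^ (k + 1)) with hD
  set AM : PowerSeries ℚ := ∏ k ∈ range M, (1 - Y ^ (2 * k + 1)) with hAM
  set FM : PowerSeries ℚ := ∏ k ∈ range M, (1 - Y ^ (2 * k + 1))⁻¹ with hFM
  set G2 : PowerSeries ℚ := ∏ k ∈ range M, (1 - Y ^ (M + k + 1)) with hG2
  set P : PowerSeries ℚ := ∏ k ∈ range M, (1 + Y ^ (k + 1)) with hP
  set R1 : PowerSeries ℚ := ∏ i ∈ range (m - M), (1 - Y ^ (2 * (M + i) + 1)) with hR1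
  set Q : PowerSeries ℚ :=
    ∏ k ∈ Finset.filter (fun k => ¬l ∣ (k + 1)) (range m), (1 + (X : PowerSeries ℚ) ^ (k + 1))
    with hQ
  -- Euler-style identities
  have e1 : F * G1 = D := same_gf' m X PowerSeries.constantCoeff_X
  have e2 : FM * G2 = P := same_gf' M Y hYc
  -- split A
  have e3 : A = AM * R1 := by
    rw [hA, hAM, hR1, ← prod_range_add]
    have hmM : M + (m - M) = m := by omega
    rw [hmM]
  -- AM * FM = 1
  have e4 : AM * FM = 1 := by
    rw [hAM, hFM, ← prod_mul_distrib]
    refine prod_eq_one fun k _ => PowerSeries.mul_inv_cancel _ ?_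
    rw [RingHom.map_sub, RingHom.map_pow, constantCoeff_one, hYc,
      zero_pow (2 * k).succ_ne_zero, sub_zero]
    exact one_ne_zero
  -- D = P * Q
  have e5 : D = P * Q := by
    rw [hD, hQ, ← Finset.prod_filter_mul_prod_filter_not (range m) (fun k => l ∣ (k + 1))]
    congr 1
    have himg : Finset.filter (fun k => l ∣ (k + 1)) (range m)
        = Finset.image (fun t => l * (t + 1) - 1) (range M) := by
      ext k
      simp only [mem_filter, mem_range, mem_image]
      constructor
      · rintro ⟨hk1, t, ht⟩
        have ht1 : 1 ≤ t := by
          rcases Nat.eq_zero_or_pos t with h | h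
          · subst h; omega
          · exact h
        have htM : t ≤ M := by
          rw [hMdef, Nat.le_div_iff_mul_le hl]
          have : t * l = l * t := mul_comm _ _
          omega
        refine ⟨t - 1, by omega, ?_⟩
        have : l * (t - 1 + 1) = l * t := by
          congr 1
          omega
        omega
      · rintro ⟨t, ht, rfl⟩
        have h1 : 1 ≤ l * (t + 1) := Nat.one_le_iff_ne_zero.mpr (by positivity)
        have h2 : l * (t + 1) ≤ l * M := Nat.mul_le_mul_left l (by omega)
        constructor
        · omega
        · refine ⟨t + 1, ?_⟩
          omega
    rw [himg, Finset.prod_image ?inj]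
    case inj =>
      intro a _ b _ hab
      simp only at hab
      have ha : 1 ≤ l * (a + 1) := Nat.one_le_iff_ne_zero.mpr (by positivity)
      have hb : 1 ≤ l * (b + 1) := Nat.one_le_iff_ne_zero.mpr (by positivity)
      have : l * (a + 1) = l * (b + 1) := by omega
      have := Nat.eq_of_mul_eq_mul_left hl this
      omega
    rw [hP]
    refine prod_congr rfl fun t _ => ?_
    have h1 : 1 ≤ l * (t + 1) := Nat.one_le_iff_ne_zero.mpr (by positivity)
    rw [hY, ← pow_mul, show l * (t + 1) - 1 + 1 = l * (t + 1) by omega]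
  -- P ≠ 0
  have hPc : constantCoeff (R := ℚ) P = 1 := by
    rw [hP, map_prod]
    refine prod_eq_one fun k _ => ?_
    rw [RingHom.map_add, RingHom.map_pow, constantCoeff_one, hYc,
      zero_pow k.succ_ne_zero, add_zero]
  have hPne : P ≠ 0 := fun h => by
    rw [h, map_zero] at hPc
    exact one_ne_zero hPc.symm
  -- the key cancellation
  have key : A * F * G1 = Q * R1 * G2 := by
    have key' : A * F * G1 * P = Q * R1 * G2 * P := by
      linear_combination (A * P) * e1 + (A * P) * e5 + (P * P * Q) * e3 -
        (AM * R1 * Q * P) * e2 + (R1 * G2 * Q * P) * e4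
    exact mul_right_cancel₀ hPne key'
  -- now compare coefficients
  have horder : ∀ e : ℕ, n < e → (n : ℕ∞) < ((X : PowerSeries ℚ) ^ e).order := by
    intro e he
    rw [order_X_pow]
    exact_mod_cast he
  have step1 : coeff (R := ℚ) n (A * F) = coeff (R := ℚ) n (A * F * G1) := by
    rw [hG1]
    exact (coeff_mul_prod_one_sub_of_lt_order n (range m) (A * F)
      (fun k => (X : PowerSeries ℚ) ^ (m + k + 1))
      (fun k _ => horder _ (by omega))).symm
  have step2 : coeff (R := ℚ) n (Q * R1 * G2) = coeff (R := ℚ) n (Q * R1) := by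
    rw [hG2]
    refine coeff_mul_prod_one_sub_of_lt_order n (range M) (Q * R1)
      (fun k => Y ^ (M + k + 1)) fun k _ => ?_
    show (n : ℕ∞) < (((X : PowerSeries ℚ) ^ l) ^ (M + k + 1)).order
    rw [← pow_mul]
    refine horder _ ?_
    have : l * (M + 1) ≤ l * (M + k + 1) := Nat.mul_le_mul_left l (by omega)
    omega
  have step3 : coeff (R := ℚ) n (Q * R1) = coeff (R := ℚ) n Q := by
    rw [hR1]
    refine coeff_mul_prod_one_sub_of_lt_order n (range (m - M)) Q
      (fun i => Y ^ (2 * (M + i) + 1)) fun i _ => ?_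
    show (n : ℕ∞) < (((X : PowerSeries ℚ) ^ l) ^ (2 * (M + i) + 1)).order
    rw [← pow_mul]
    refine horder _ ?_
    have : l * (M + 1) ≤ l * (2 * (M + i) + 1) := Nat.mul_le_mul_left l (by omega)
    omega
  calc coeff (R := ℚ) n (A * F) = coeff (R := ℚ) n (A * F * G1) := step1
    _ = coeff (R := ℚ) n (Q * R1 * G2) := by rw [key]
    _ = coeff (R := ℚ) n Q := by rw [step2, step3]

end

end LittleGlaisherAux
namespace LittleGlaisherAux

open Theorems100 PowerSeries Finset
open scoped Classical

noncomputable section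

theorem count_LHS (l n : ℕ) (hl : 0 < l) (hn : 0 < n) :
    (Nat.card {p : n.Partition //
      (∀ j ∈ p.parts, Odd j) ∧ (∀ i : ℕ, 1 ≤ i → Multiset.count i p.parts < l)} : ℚ) =
    (coeff (R := ℚ) n) ((∏ k ∈ range (n + 1), (1 - ((X : PowerSeries ℚ) ^ l) ^ (2 * k + 1))) *
        ∏ k ∈ range (n + 1), (1 - (X : PowerSeries ℚ) ^ (2 * k + 1))⁻¹) := by
  set m := n + 1 with hm
  have hprop := partialGF_prop ℚ n ((range m).map mkOdd)
    (by
      intro i hi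
      rw [mem_map] at hi
      obtain ⟨a, -, rfl⟩ := hi
      exact Nat.succ_pos _)
    (fun _ => {t | t < l}) (fun _ _ => hl)
  have hsets : Nat.card {p : n.Partition //
      (∀ j ∈ p.parts, Odd j) ∧ (∀ i : ℕ, 1 ≤ i → Multiset.count i p.parts < l)} =
      #{p : n.Partition |
        (∀ j, p.parts.count j ∈ {t | t < l}) ∧ ∀ j ∈ p.parts, j ∈ (range m).map mkOdd} := by
    rw [Nat.card_eq_fintype_card, Fintype.card_subtype]
    congr 1
    apply Finset.filter_congr
    intro p _
    constructor
    · rintro ⟨hodd, hcnt⟩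
      constructor
      · intro j
        show p.parts.count j < l
        rcases Nat.eq_zero_or_pos j with rfl | hj
        · rw [Multiset.count_eq_zero_of_notMem fun h => lt_irrefl 0 (p.parts_pos h)]
          exact hl
        · exact hcnt j hj
      · intro j hj
        have hjn : j ≤ n := by
          simpa [p.parts_sum] using Multiset.single_le_sum (fun _ _ => Nat.zero_le _) _ hj
        have hodd' := (Nat.odd_iff).mp (hodd j hj)
        simp only [mem_map, mem_range, mkOdd, Function.Embedding.coeFn_mk]
        exact ⟨j / 2, by omega, show 2 * (j / 2) + 1 = j by omega⟩
    · rintro ⟨hcnt, hmem⟩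
      refine ⟨fun j hj => ?_, fun i _ => hcnt i⟩
      obtain ⟨r, -, rfl⟩ := mem_map.mp (hmem j hj)
      simp only [mkOdd, Function.Embedding.coeFn_mk]
      rw [Nat.odd_iff]
      show (2 * r + 1) % 2 = 1
      omega
  rw [hsets, hprop]
  rw [Finset.prod_map]
  simp only [mkOdd, Function.Embedding.coeFn_mk]
  show coeff n (∏ x ∈ range m, indicatorSeries ℚ ((· * (2 * x + 1)) '' {t | t < l})) = _
  have : ∀ k ∈ range m, indicatorSeries ℚ ((· * (2 * k + 1)) '' {t | t < l}) =
      (1 - (X : PowerSeries ℚ) ^ (l * (2 * k + 1))) * (1 - (X : PowerSeries ℚ) ^ (2 * k + 1))⁻¹ :=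
    fun k _ => indicator_geom (2 * k + 1) l (Nat.succ_pos _) hl
  rw [Finset.prod_congr rfl this, Finset.prod_mul_distrib]
  simp_rw [pow_mul]

theorem count_RHS (l n : ℕ) (hl : 0 < l) (hn : 0 < n) :
    (Nat.card {p : n.Partition //
      (∀ i : ℕ, 1 ≤ i → Multiset.count i p.parts ≤ 1) ∧ (∀ j ∈ p.parts, ¬ l ∣ j)} : ℚ) =
    (coeff (R := ℚ) n) (∏ k ∈ Finset.filter (fun k => ¬l ∣ (k + 1)) (range (n + 1)),
        (1 + (X : PowerSeries ℚ) ^ (k + 1))) := by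
  set m := n + 1 with hm
  set s : Finset ℕ :=
    Finset.filter (fun j => ¬ l ∣ j) ((range m).map ⟨Nat.succ, Nat.succ_injective⟩) with hs
  have hprop := partialGF_prop ℚ n s
    (by
      intro i hi
      rw [hs, mem_filter, mem_map] at hi
      obtain ⟨⟨a, -, rfl⟩, -⟩ := hi
      exact Nat.succ_pos _)
    (fun _ => ({0, 1} : Set ℕ)) (fun _ _ => Or.inl rfl)
  have hsets : Nat.card {p : n.Partition //
      (∀ i : ℕ, 1 ≤ i → Multiset.count i p.parts ≤ 1) ∧ (∀ j ∈ p.parts, ¬ l ∣ j)} =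
      #{p : n.Partition |
        (∀ j, p.parts.count j ∈ ({0, 1} : Set ℕ)) ∧ ∀ j ∈ p.parts, j ∈ s} := by
    rw [Nat.card_eq_fintype_card, Fintype.card_subtype]
    congr 1
    apply Finset.filter_congr
    intro p _
    constructor
    · rintro ⟨hcnt, hdvd⟩
      constructor
      · intro j
        show p.parts.count j = 0 ∨ p.parts.count j = 1
        rcases Nat.eq_zero_or_pos j with rfl | hj
        · left
          exact Multiset.count_eq_zero_of_notMem fun h => lt_irrefl 0 (p.parts_pos h)
        · have := hcnt j hj
          omega
      · intro j hj
        have hjn : j ≤ n := by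
          simpa [p.parts_sum] using Multiset.single_le_sum (fun _ _ => Nat.zero_le _) _ hj
        have hjp : 0 < j := p.parts_pos hj
        rw [hs, mem_filter, mem_map]
        exact ⟨⟨j - 1, mem_range.mpr (by omega),
          by simp only [Function.Embedding.coeFn_mk]; omega⟩, hdvd j hj⟩
    · rintro ⟨hcnt, hmem⟩
      constructor
      · intro i _
        have := hcnt i
        simp only [Set.mem_insert_iff, Set.mem_singleton_iff] at this
        omega
      · intro j hj
        have := hmem j hj
        rw [hs, mem_filter] at this
        exact this.2
  rw [hsets, hprop]
  have hfac : ∀ i ∈ s, indicatorSeries ℚ ((· * i) '' ({0, 1} : Set ℕ)) =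
      1 + (X : PowerSeries ℚ) ^ i := by
    intro i hi
    rw [hs, mem_filter, mem_map] at hi
    obtain ⟨⟨a, -, rfl⟩, -⟩ := hi
    simp only [Function.Embedding.coeFn_mk]
    rw [two_series]
    congr 1
    simp [Set.image_pair]
  rw [Finset.prod_congr rfl hfac]
  rw [hs, Finset.filter_map, Finset.prod_map]
  rfl

theorem little_glaisher_main (l n : ℕ) (hl : 0 < l) (hn : 0 < n) :
    Nat.card {p : n.Partition //
      (∀ j ∈ p.parts, Odd j) ∧ (∀ i : ℕ, 1 ≤ i → Multiset.count i p.parts < l)} =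
    Nat.card {p : n.Partition //
      (∀ i : ℕ, 1 ≤ i → Multiset.count i p.parts ≤ 1) ∧ (∀ j ∈ p.parts, ¬ l ∣ j)} := by
  have h := (count_LHS l n hl hn).trans
    ((key_identity l n hl hn).trans (count_RHS l n hl hn).symm)
  exact_mod_cast h

end

end LittleGlaisherAux

/-- **Little Glaisher theorem, case `k = 2`.** For all positive integers `l` and `n`, the
number of partitions of `n` into odd parts in which every part occurs fewer than `l`
times equals the number of partitions of `n` into distinct parts none of which is
divisible by `l`. -/
theorem little_glaisher_k_two (l n : ℕ) (hl : 0 < l) (hn : 0 < n) :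
    Nat.card {p : n.Partition //
      (∀ j ∈ p.parts, Odd j) ∧ (∀ i : ℕ, 1 ≤ i → Multiset.count i p.parts < l)} =
    Nat.card {p : n.Partition //
      (∀ i : ℕ, 1 ≤ i → Multiset.count i p.parts ≤ 1) ∧ (∀ j ∈ p.parts, ¬ l ∣ j)} :=
  LittleGlaisherAux.little_glaisher_main l n hl hn
end

section
/- Let k and l be positive integers with gcd(k, l) = 1. For every nonnegative integer n, the number of partitions of n into parts not divisible by l in which every part occurs fewer than k times equals the number of partitions of n into parts divisible neither by k nor by l. -/
open PowerSeries Finset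
open scoped Classical

namespace CRP

noncomputable section

variable {α : Type*}

/-- A convenience constructor for the power series whose coefficients indicate a subset. -/
def indicatorSeries (α : Type*) [Semiring α] (s : Set ℕ) : PowerSeries α :=
  PowerSeries.mk fun n => if n ∈ s then 1 else 0

theorem coeff_indicator (s : Set ℕ) [Semiring α] (n : ℕ) :
    coeff (R := α) n (indicatorSeries _ s) = if n ∈ s then 1 else 0 :=
  coeff_mk _ _

theorem coeff_indicator_pos (s : Set ℕ) [Semiring α] (n : ℕ) (h : n ∈ s) :
    coeff (R := α) n (indicatorSeries _ s) = 1 := by rw [coeff_indicator, if_pos h]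

theorem coeff_indicator_neg (s : Set ℕ) [Semiring α] (n : ℕ) (h : n ∉ s) :
    coeff (R := α) n (indicatorSeries _ s) = 0 := by rw [coeff_indicator, if_neg h]

-- The main workhorse (copied from Archive.Wiedijk100Theorems.Partition).
theorem partialGF_prop (α : Type*) [CommSemiring α] (n : ℕ) (s : Finset ℕ) (hs : ∀ i ∈ s, 0 < i)
    (c : ℕ → Set ℕ) (hc : ∀ i, i ∉ s → 0 ∈ c i) :
    #{p : n.Partition | (∀ j, p.parts.count j ∈ c j) ∧ ∀ j ∈ p.parts, j ∈ s} =
      coeff (R := α) n (∏ i ∈ s, indicatorSeries α ((· * i) '' c i)) := by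
  simp_rw [coeff_prod, coeff_indicator, prod_boole, sum_boole]
  apply congr_arg
  simp only [mem_univ, forall_true_left, not_and, not_forall, exists_prop,
    Set.mem_image, not_exists]
  set φ : (a : Nat.Partition n) →
    a ∈ filter (fun p ↦ (∀ (j : ℕ), Multiset.count j p.parts ∈ c j) ∧ ∀ j ∈ p.parts, j ∈ s) univ →
    ℕ →₀ ℕ := fun p _ => {
      toFun := fun i => Multiset.count i p.parts • i
      support := Finset.filter (fun i => i ≠ 0) p.parts.toFinset
      mem_support_toFun := fun a => by
        simp only [smul_eq_mul, ne_eq, mul_eq_zero, Multiset.count_eq_zero]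
        rw [not_or, not_not]
        simp only [Multiset.mem_toFinset, not_not, mem_filter] }
  refine Finset.card_bij φ ?_ ?_ ?_
  · intro a ha
    simp only [φ, not_forall, not_exists, not_and, exists_prop, mem_filter]
    rw [mem_finsuppAntidiag]
    dsimp only [ne_eq, smul_eq_mul, id_eq, eq_mpr_eq_cast, le_eq_subset, Finsupp.coe_mk]
    simp only [mem_univ, forall_true_left, not_and, not_forall, exists_prop,
      mem_filter, true_and] at ha
    refine ⟨⟨?_, fun i ↦ ?_⟩, fun i _ ↦ ⟨a.parts.count i, ha.1 i, rfl⟩⟩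
    · conv_rhs => simp [← a.parts_sum]
      rw [sum_multiset_count_of_subset _ s]
      · simp only [smul_eq_mul]
      · intro i
        simp only [Multiset.mem_toFinset, not_not, mem_filter]
        apply ha.2
    · simp only [ne_eq, Multiset.mem_toFinset, not_not, mem_filter, and_imp]
      exact fun hi _ ↦ ha.2 i hi
  · intro p₁ hp₁ p₂ hp₂ h
    apply Nat.Partition.ext
    simp only [true_and, mem_univ, mem_filter] at hp₁ hp₂
    ext i
    simp only [φ, ne_eq, Multiset.mem_toFinset, not_not, smul_eq_mul, Finsupp.mk.injEq] at h
    by_cases hi : i = 0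
    · rw [hi]
      rw [Multiset.count_eq_zero_of_notMem]
      · rw [Multiset.count_eq_zero_of_notMem]
        intro a; exact Nat.lt_irrefl 0 (hs 0 (hp₂.2 0 a))
      intro a; exact Nat.lt_irrefl 0 (hs 0 (hp₁.2 0 a))
    · rw [← mul_left_inj' hi]
      rw [funext_iff] at h
      exact h.2 i
  · simp only [φ, mem_filter, mem_finsuppAntidiag, mem_univ, exists_prop, true_and, and_assoc]
    rintro f ⟨hf, hf₃, hf₄⟩
    have hf' : f ∈ finsuppAntidiag s n := mem_finsuppAntidiag.mpr ⟨hf, hf₃⟩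
    simp only [mem_finsuppAntidiag] at hf'
    refine ⟨⟨∑ i ∈ s, Multiset.replicate (f i / i) i, ?_, ?_⟩, ?_, ?_, ?_⟩
    · intro i hi
      simp only [exists_prop, Multiset.mem_sum, mem_map, Function.Embedding.coeFn_mk] at hi
      rcases hi with ⟨t, ht, z⟩
      apply hs
      rwa [Multiset.eq_of_mem_replicate z]
    · simp_rw [Multiset.sum_sum, Multiset.sum_replicate, Nat.nsmul_eq_mul]
      rw [← hf'.1]
      refine sum_congr rfl fun i hi => Nat.div_mul_cancel ?_
      rcases hf₄ i hi with ⟨w, _, hw₂⟩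
      rw [← hw₂]
      exact dvd_mul_left _ _
    · intro i
      simp_rw [Multiset.count_sum', Multiset.count_replicate, sum_ite_eq']
      split_ifs with h
      · rcases hf₄ i h with ⟨w, hw₁, hw₂⟩
        rwa [← hw₂, Nat.mul_div_cancel _ (hs i h)]
      · exact hc _ h
    · intro i hi
      rw [Multiset.mem_sum] at hi
      rcases hi with ⟨j, hj₁, hj₂⟩
      rwa [Multiset.eq_of_mem_replicate hj₂]
    · ext i
      simp_rw [Multiset.count_sum', Multiset.count_replicate, sum_ite_eq']
      simp only [ne_eq, Multiset.mem_toFinset, not_not, smul_eq_mul, ite_mul,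
        zero_mul, Finsupp.coe_mk]
      split_ifs with h
      · apply Nat.div_mul_cancel
        rcases hf₄ i h with ⟨w, _, hw₂⟩
        apply Dvd.intro_left _ hw₂
      · apply symm
        rw [← Finsupp.notMem_support_iff]
        exact notMem_mono hf'.2 h


theorem constantCoeff_indicator (s : Set ℕ) [Semiring α] :
    constantCoeff (R := α) (indicatorSeries _ s) = if 0 ∈ s then 1 else 0 :=
  rfl

theorem num_series' [Field α] (i : ℕ) :
    (1 - (X : PowerSeries α) ^ (i + 1))⁻¹ = indicatorSeries α {k | i + 1 ∣ k} := by
  rw [PowerSeries.inv_eq_iff_mul_eq_one]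
  · ext n
    cases n with
    | zero => simp [mul_sub, zero_pow, constantCoeff_indicator]
    | succ n =>
      simp only [coeff_one, if_false, mul_sub, mul_one, coeff_indicator,
        LinearMap.map_sub, reduceCtorEq]
      simp_rw [coeff_mul, coeff_X_pow, coeff_indicator, @boole_mul _ _ _ _]
      erw [@sum_ite _ _ _ _ _ (fun _ => Classical.propDecidable _), sum_ite]
      simp_rw [@filter_filter _ _ _ _ _, sum_const_zero, add_zero, sum_const, nsmul_eq_mul, mul_one,
        sub_eq_iff_eq_add, zero_add]
      symm
      split_ifs with h
      · suffices #{a ∈ antidiagonal (n + 1) | i + 1 ∣ a.fst ∧ a.snd = i + 1} = 1 by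
          simp only [Set.mem_setOf_eq]; convert congr_arg ((↑) : ℕ → α) this; norm_cast
        rw [card_eq_one]
        cases' h with p hp
        refine ⟨((i + 1) * (p - 1), i + 1), ?_⟩
        ext ⟨a₁, a₂⟩
        simp only [mem_filter, Prod.mk.injEq, HasAntidiagonal.mem_antidiagonal, mem_singleton]
        constructor
        · rintro ⟨a_left, ⟨a, rfl⟩, rfl⟩
          refine ⟨?_, rfl⟩
          rw [Nat.mul_sub_left_distrib, ← hp, ← a_left, mul_one, Nat.add_sub_cancel]
        · rintro ⟨rfl, rfl⟩
          match p with
          | 0 => rw [mul_zero] at hp; cases hp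
          | p + 1 => rw [hp]; simp [mul_add]
      · suffices #{a ∈ antidiagonal (n + 1) | i + 1 ∣ a.fst ∧ a.snd = i + 1} = 0 by
          simp only [Set.mem_setOf_eq]; convert congr_arg ((↑) : ℕ → α) this; norm_cast
        rw [card_eq_zero]
        apply eq_empty_of_forall_notMem
        simp only [Prod.forall, mem_filter, not_and, HasAntidiagonal.mem_antidiagonal]
        rintro _ h₁ h₂ ⟨a, rfl⟩ rfl
        apply h
        simp [← h₂]
  · simp [zero_pow]

theorem num_series'' [Field α] {i : ℕ} (hi : 0 < i) :
    (1 - (X : PowerSeries α) ^ i)⁻¹ = indicatorSeries α {m | i ∣ m} := by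
  obtain ⟨j, rfl⟩ := Nat.exists_eq_add_of_lt hi
  rw [zero_add]
  exact num_series' j

theorem constCoeff_one_sub_X_pow [Field α] {i : ℕ} (hi : 0 < i) :
    constantCoeff (R := α) (1 - (X : PowerSeries α) ^ i) ≠ 0 := by
  rw [map_sub, map_pow, constantCoeff_one, constantCoeff_X, zero_pow hi.ne', sub_zero]
  exact one_ne_zero

theorem indicator_eq_geom [Field α] {i : ℕ} (hi : 0 < i) (k : ℕ) :
    indicatorSeries α ((· * i) '' Set.Iio k) = ∑ j ∈ range k, (X : PowerSeries α) ^ (j * i) := by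
  ext m
  rw [coeff_indicator, map_sum]
  simp_rw [coeff_X_pow]
  by_cases h : ∃ j, j ∈ range k ∧ m = j * i
  · obtain ⟨j₀, hj₀, rfl⟩ := h
    rw [if_pos ⟨j₀, mem_range.mp hj₀, rfl⟩, Finset.sum_eq_single j₀]
    · rw [if_pos rfl]
    · intro j hj hne
      rw [if_neg fun hc => hne (Nat.eq_of_mul_eq_mul_right hi hc.symm)]
    · exact fun h' => absurd hj₀ h'
  · push_neg at h
    rw [if_neg, Finset.sum_eq_zero]
    · intro j hj
      rw [if_neg (h j hj)]
    · rintro ⟨j, hj, rfl⟩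
      exact h j (mem_range.mpr hj) rfl

theorem one_sub_mul_geom [Field α] {i : ℕ} (k : ℕ) :
    (1 - (X : PowerSeries α) ^ i) * ∑ j ∈ range k, (X : PowerSeries α) ^ (j * i) =
      1 - X ^ (k * i) := by
  have h := geom_sum_mul ((X : PowerSeries α) ^ i) k
  simp_rw [← pow_mul, mul_comm i _] at h
  linear_combination -h

theorem indicator_Iio [Field α] {i : ℕ} (hi : 0 < i) (k : ℕ) :
    indicatorSeries α ((· * i) '' Set.Iio k) =
      (1 - (X : PowerSeries α) ^ i)⁻¹ * (1 - X ^ (k * i)) := by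
  rw [← one_sub_mul_geom (i := i) k, ← mul_assoc,
    PowerSeries.inv_mul_cancel _ (constCoeff_one_sub_X_pow hi), one_mul,
    indicator_eq_geom hi]

theorem indicator_univ [Field α] {i : ℕ} (hi : 0 < i) :
    indicatorSeries α ((· * i) '' Set.univ) = (1 - (X : PowerSeries α) ^ i)⁻¹ := by
  have hs : ((· * i) '' Set.univ) = {m | i ∣ m} := by
    ext m
    constructor
    · rintro ⟨j, -, rfl⟩; exact Dvd.intro_left j rfl
    · rintro ⟨j, rfl⟩; exact ⟨j, trivial, mul_comm j i⟩
  rw [hs, num_series'' hi]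

theorem key (k l : ℕ) (hk : 0 < k) (hcop : Nat.gcd k l = 1) (n : ℕ) :
    coeff (R := ℚ) n (∏ i ∈ (range (n + 1)).filter (fun i => ¬ l ∣ i),
        indicatorSeries ℚ ((· * i) '' Set.Iio k)) =
      coeff (R := ℚ) n (∏ i ∈ (range (n + 1)).filter (fun i => ¬ l ∣ i ∧ ¬ k ∣ i),
        indicatorSeries ℚ ((· * i) '' Set.univ)) := by
  set S₁ := (range (n + 1)).filter (fun i => ¬ l ∣ i) with hS₁
  set S₂ := (range (n + 1)).filter (fun i => ¬ l ∣ i ∧ ¬ k ∣ i) with hS₂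
  set A := (range (n + 1)).filter (fun i => ¬ l ∣ i ∧ k ∣ i) with hA
  set B := S₁.image (fun i => k * i) with hB
  have hpos : ∀ i ∈ S₁, 0 < i := by
    intro i hi
    rcases Nat.eq_zero_or_pos i with rfl | h
    · exact absurd (dvd_zero l) (mem_filter.mp hi).2
    · exact h
  have hposA : ∀ m ∈ A, 0 < m := by
    intro m hm
    rcases Nat.eq_zero_or_pos m with rfl | h
    · exact absurd (dvd_zero l) (mem_filter.mp hm).2.1
    · exact h
  have hsplit : S₂ ∪ A = S₁ := by
    ext i
    simp only [hS₁, hS₂, hA, mem_union, mem_filter]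
    tauto
  have hdisj : Disjoint S₂ A := by
    rw [Finset.disjoint_left]
    intro i h₂ hA'
    exact (mem_filter.mp h₂).2.2 (mem_filter.mp hA').2.2
  have hAB : A ⊆ B := by
    intro m hm
    obtain ⟨hmr, hml, hmk⟩ := mem_filter.mp hm
    refine mem_image.mpr ⟨m / k, mem_filter.mpr ⟨mem_range.mpr ?_, ?_⟩, Nat.mul_div_cancel' hmk⟩
    · exact lt_of_le_of_lt (Nat.div_le_self m k) (mem_range.mp hmr)
    · intro hld
      exact hml (hld.trans (Nat.div_dvd_of_dvd hmk))
  have hBgt : ∀ m ∈ B \ A, n < m := by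
    intro m hm
    obtain ⟨hmB, hmA⟩ := Finset.mem_sdiff.mp hm
    obtain ⟨i, hi, rfl⟩ := mem_image.mp hmB
    by_contra h
    push_neg at h
    apply hmA
    refine mem_filter.mpr ⟨mem_range.mpr (Nat.lt_succ_of_le h), ?_, Dvd.intro i rfl⟩
    intro hld
    exact (mem_filter.mp hi).2 ((Nat.Coprime.symm hcop).dvd_of_dvd_mul_left hld)
  calc
    coeff (R := ℚ) n (∏ i ∈ S₁, indicatorSeries ℚ ((· * i) '' Set.Iio k)) =
        coeff (R := ℚ) n ((∏ i ∈ S₁, (1 - (X : PowerSeries ℚ) ^ i)⁻¹) *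
          ∏ i ∈ S₁, (1 - (X : PowerSeries ℚ) ^ (k * i))) := by
      rw [← prod_mul_distrib]
      congr 1
      exact prod_congr rfl fun i hi => indicator_Iio (hpos i hi) k
    _ = coeff (R := ℚ) n (((∏ i ∈ S₂, (1 - (X : PowerSeries ℚ) ^ i)⁻¹) *
          ∏ m ∈ A, (1 - (X : PowerSeries ℚ) ^ m)⁻¹) *
          ((∏ m ∈ B \ A, (1 - (X : PowerSeries ℚ) ^ m)) *
            ∏ m ∈ A, (1 - (X : PowerSeries ℚ) ^ m))) := by
      have h1 : (∏ i ∈ S₁, (1 - (X : PowerSeries ℚ) ^ i)⁻¹) =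
          (∏ i ∈ S₂, (1 - (X : PowerSeries ℚ) ^ i)⁻¹) *
            ∏ m ∈ A, (1 - (X : PowerSeries ℚ) ^ m)⁻¹ := by
        rw [← hsplit, prod_union hdisj]
      have h2 : (∏ i ∈ S₁, (1 - (X : PowerSeries ℚ) ^ (k * i))) =
          (∏ m ∈ B \ A, (1 - (X : PowerSeries ℚ) ^ m)) *
            ∏ m ∈ A, (1 - (X : PowerSeries ℚ) ^ m) := by
        rw [prod_sdiff hAB, hB,
          prod_image fun x _ y _ h => Nat.eq_of_mul_eq_mul_left hk h]
      rw [h1, h2]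
    _ = coeff (R := ℚ) n ((∏ i ∈ S₂, (1 - (X : PowerSeries ℚ) ^ i)⁻¹) *
          ∏ m ∈ B \ A, (1 - (X : PowerSeries ℚ) ^ m)) := by
      congr 1
      have : (∏ m ∈ A, (1 - (X : PowerSeries ℚ) ^ m)⁻¹) *
          (∏ m ∈ A, (1 - (X : PowerSeries ℚ) ^ m)) = 1 := by
        rw [← prod_mul_distrib]
        refine prod_eq_one fun m hm => ?_
        exact PowerSeries.inv_mul_cancel _ (constCoeff_one_sub_X_pow (hposA m hm))
      calc (∏ i ∈ S₂, (1 - (X : PowerSeries ℚ) ^ i)⁻¹) *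
            (∏ m ∈ A, (1 - (X : PowerSeries ℚ) ^ m)⁻¹) *
            ((∏ m ∈ B \ A, (1 - (X : PowerSeries ℚ) ^ m)) *
              ∏ m ∈ A, (1 - (X : PowerSeries ℚ) ^ m)) =
          (∏ i ∈ S₂, (1 - (X : PowerSeries ℚ) ^ i)⁻¹) *
            (∏ m ∈ B \ A, (1 - (X : PowerSeries ℚ) ^ m)) *
            ((∏ m ∈ A, (1 - (X : PowerSeries ℚ) ^ m)⁻¹) *
              ∏ m ∈ A, (1 - (X : PowerSeries ℚ) ^ m)) := by ring
        _ = _ := by rw [this, mul_one]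
    _ = coeff (R := ℚ) n (∏ i ∈ S₂, (1 - (X : PowerSeries ℚ) ^ i)⁻¹) := by
      apply coeff_mul_prod_one_sub_of_lt_order
      intro m hm
      rw [order_X_pow]
      exact_mod_cast hBgt m hm
    _ = _ := by
      congr 1
      exact (prod_congr rfl fun i hi => indicator_univ (hpos i (hsplit ▸ mem_union_left A hi))).symm

end

end CRP

set_option maxHeartbeats 800000 in
/-- For coprime positive integers `k` and `l` and every `n`, the number of partitions of
`n` into parts not divisible by `l` in which every part occurs fewer than `k` times
equals the number of partitions of `n` into parts divisible neither by `k` nor by `l`. -/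
theorem coprime_regular_partitions (k l : ℕ) (hk : 0 < k) (hl : 0 < l)
    (hcop : Nat.gcd k l = 1) (n : ℕ) :
    Nat.card {p : n.Partition //
      (∀ i : ℕ, 1 ≤ i → Multiset.count (i * l) p.parts = 0) ∧
      (∀ i : ℕ, 1 ≤ i → Multiset.count i p.parts < k)} =
    Nat.card {p : n.Partition //
      ∀ i : ℕ, 1 ≤ i → (k ∣ i ∨ l ∣ i) → Multiset.count i p.parts = 0} := by
  have hmem : ∀ (p : n.Partition), ∀ j ∈ p.parts, j < n + 1 := by
    intro p j hj
    have : j ≤ n := by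
      conv_rhs => rw [← p.parts_sum]
      exact Multiset.single_le_sum (fun _ _ => Nat.zero_le _) _ hj
    omega
  have e1 : ∀ (p : n.Partition),
      ((∀ i : ℕ, 1 ≤ i → Multiset.count (i * l) p.parts = 0) ∧
        (∀ i : ℕ, 1 ≤ i → Multiset.count i p.parts < k)) ↔
      ((∀ j, p.parts.count j ∈ Set.Iio k) ∧
        ∀ j ∈ p.parts, j ∈ (range (n + 1)).filter (fun i => ¬ l ∣ i)) := by
    intro p
    constructor
    · rintro ⟨h1, h2⟩
      constructor
      · intro j
        rcases Nat.eq_zero_or_pos j with rfl | hj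
        · have : Multiset.count 0 p.parts = 0 :=
            Multiset.count_eq_zero_of_notMem fun h => (p.parts_pos h).ne' rfl
          simpa [this] using hk
        · exact h2 j hj
      · intro j hj
        refine mem_filter.mpr ⟨mem_range.mpr (hmem p j hj), ?_⟩
        rintro ⟨c, rfl⟩
        have hc : 1 ≤ c := by
          rcases Nat.eq_zero_or_pos c with rfl | h
          · exact absurd (p.parts_pos hj) (by simp)
          · exact h
        have := h1 c hc
        rw [Multiset.count_eq_zero] at this
        exact this (by rwa [mul_comm] at hj)
    · rintro ⟨hq, hs⟩
      refine ⟨fun i hi => ?_, fun i hi => hq i⟩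
      rw [Multiset.count_eq_zero]
      intro hmem'
      exact (mem_filter.mp (hs _ hmem')).2 (dvd_mul_left l i)
  have e2 : ∀ (p : n.Partition),
      (∀ i : ℕ, 1 ≤ i → (k ∣ i ∨ l ∣ i) → Multiset.count i p.parts = 0) ↔
      ((∀ j, p.parts.count j ∈ (Set.univ : Set ℕ)) ∧
        ∀ j ∈ p.parts, j ∈ (range (n + 1)).filter (fun i => ¬ l ∣ i ∧ ¬ k ∣ i)) := by
    intro p
    constructor
    · intro h
      refine ⟨fun _ => trivial, fun j hj => ?_⟩
      have hj1 : 1 ≤ j := p.parts_pos hj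
      refine mem_filter.mpr ⟨mem_range.mpr (hmem p j hj), ?_, ?_⟩
      · intro hld
        exact absurd hj (Multiset.count_eq_zero.mp (h j hj1 (Or.inr hld)))
      · intro hkd
        exact absurd hj (Multiset.count_eq_zero.mp (h j hj1 (Or.inl hkd)))
    · rintro ⟨-, hs⟩ i hi hdvd
      rw [Multiset.count_eq_zero]
      intro hmem'
      obtain ⟨-, hl', hk'⟩ := mem_filter.mp (hs _ hmem')
      rcases hdvd with h | h
      · exact hk' h
      · exact hl' h
  rw [Nat.card_eq_fintype_card, Nat.card_eq_fintype_card, Fintype.card_subtype,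
    Fintype.card_subtype]
  suffices h : ((#(univ.filter fun p : n.Partition =>
        (∀ i : ℕ, 1 ≤ i → Multiset.count (i * l) p.parts = 0) ∧
        (∀ i : ℕ, 1 ≤ i → Multiset.count i p.parts < k)) : ℕ) : ℚ) =
      (#(univ.filter fun p : n.Partition =>
        ∀ i : ℕ, 1 ≤ i → (k ∣ i ∨ l ∣ i) → Multiset.count i p.parts = 0) : ℕ) by
    exact_mod_cast h
  have hpos : ∀ i ∈ (range (n + 1)).filter (fun i => ¬ l ∣ i), 0 < i := by
    intro i hi
    rcases Nat.eq_zero_or_pos i with rfl | h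
    · exact absurd (dvd_zero l) (mem_filter.mp hi).2
    · exact h
  have hpos₂ : ∀ i ∈ (range (n + 1)).filter (fun i => ¬ l ∣ i ∧ ¬ k ∣ i), 0 < i := by
    intro i hi
    rcases Nat.eq_zero_or_pos i with rfl | h
    · exact absurd (dvd_zero l) (mem_filter.mp hi).2.1
    · exact h
  rw [filter_congr (fun p _ => e1 p), filter_congr (fun p _ => e2 p)]
  calc ((#{p : n.Partition | (∀ j, p.parts.count j ∈ Set.Iio k) ∧
          ∀ j ∈ p.parts, j ∈ (range (n + 1)).filter (fun i => ¬ l ∣ i)} : ℕ) : ℚ)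
      = coeff (R := ℚ) n (∏ i ∈ (range (n + 1)).filter (fun i => ¬ l ∣ i),
          CRP.indicatorSeries ℚ ((· * i) '' Set.Iio k)) :=
        CRP.partialGF_prop ℚ n _ hpos _ (fun _ _ => hk)
    _ = coeff (R := ℚ) n (∏ i ∈ (range (n + 1)).filter (fun i => ¬ l ∣ i ∧ ¬ k ∣ i),
          CRP.indicatorSeries ℚ ((· * i) '' Set.univ)) := CRP.key k l hk hcop n
    _ = _ := (CRP.partialGF_prop ℚ n _ hpos₂ _ (fun _ _ => Set.mem_univ 0)).symm
end

section
/- Let k = k_1 · k_2 ⋯ k_r and l = l_1 · l_2 ⋯ l_s be products of positive integers, and set K_u = ∏_{x=1}^{u-1} k_x for 1 ≤ u ≤ r and L_v = ∏_{y=1}^{v-1} l_y for 1 ≤ v ≤ s (empty products equal 1). Then for every nonnegative integer n, the number of k,l-regular partitions of n equals the number of r·s-tuples (λ_{u,v})_{1≤u≤r, 1≤v≤s} such that each λ_{u,v} is a k_u,l_v-regular partition and Σ_{u=1}^{r} Σ_{v=1}^{s} K_u · L_v · |λ_{u,v}| = n, where |·| denotes the weight (sum of parts) of a partition. -/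
open Finset Multiset

namespace RegAux

/-- partial products of a base sequence -/
def PP (b : ℕ → ℕ) (j : ℕ) : ℕ := ∏ x ∈ Finset.range j, b x

theorem PP_succ (b : ℕ → ℕ) (j : ℕ) : PP b (j+1) = PP b j * b j := by
  simp [PP, Finset.prod_range_succ]

theorem PP_dvd (b : ℕ → ℕ) {i j : ℕ} (h : i ≤ j) : PP b i ∣ PP b j :=
  Finset.prod_dvd_prod_of_subset _ _ _ (Finset.range_subset_range.2 h)

theorem PP_pos {b : ℕ → ℕ} {j : ℕ} (hb : ∀ x < j, 0 < b x) : 0 < PP b j :=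
  Finset.prod_pos (fun x hx => hb x (Finset.mem_range.1 hx))

/-- digit extraction -/
def dig (b : ℕ → ℕ) (v x : ℕ) : ℕ := x / PP b v % b v

theorem M4 {b c : ℕ → ℕ} {s : ℕ} (h : ∀ i < s, c i < b i) :
    ∑ i ∈ Finset.range s, PP b i * c i < PP b s := by
  induction s with
  | zero => simp [PP]
  | succ s ih =>
    have hBs : 0 < PP b s := PP_pos (fun x hx => Nat.lt_of_le_of_lt (Nat.zero_le _) (h x (by omega)))
    rw [Finset.sum_range_succ, PP_succ]
    have h1 : ∑ i ∈ Finset.range s, PP b i * c i < PP b s := ih (fun i hi => h i (Nat.lt_succ_of_lt hi))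
    calc ∑ i ∈ Finset.range s, PP b i * c i + PP b s * c s
        < PP b s + PP b s * c s := by omega
      _ = PP b s * (c s + 1) := by ring
      _ ≤ PP b s * b s := Nat.mul_le_mul_left _ (h s (Nat.lt_succ_self s))

/-- splitting: for `j < s`, write `PP b s = PP b j * (b j * E)` -/
theorem PP_split {b : ℕ → ℕ} {j s : ℕ} (h : j < s) :
    ∃ E, PP b s = PP b j * (b j * E) := by
  obtain ⟨E, hE⟩ := PP_dvd b (show j + 1 ≤ s from h)
  exact ⟨E, by rw [hE, PP_succ]; ring⟩

theorem dig_add_high {b : ℕ → ℕ} {j s : ℕ} (h : j < s) (hBj : 0 < PP b j) (x t : ℕ) :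
    dig b j (x + PP b s * t) = dig b j x := by
  obtain ⟨E, hE⟩ := PP_split (b := b) h
  rw [dig, hE, show PP b j * (b j * E) * t = PP b j * (b j * E * t) by ring,
    Nat.add_mul_div_left _ _ hBj, show b j * E * t = E * t * b j by ring,
    Nat.add_mul_mod_self_right]
  rfl

theorem M2 {b c : ℕ → ℕ} {s : ℕ} (h : ∀ i < s, c i < b i) :
    ∀ j < s, dig b j (∑ i ∈ Finset.range s, PP b i * c i) = c j := by
  induction s with
  | zero => intro j hj; omega
  | succ s ih =>
    intro j hj
    have hb : ∀ i < s+1, 0 < b i := fun i hi => Nat.lt_of_le_of_lt (Nat.zero_le _) (h i hi)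
    have hBj : 0 < PP b j := PP_pos (fun x hx => hb x (by omega))
    rw [Finset.sum_range_succ]
    rcases Nat.lt_or_ge j s with hjs | hjs
    · rw [dig_add_high hjs hBj]
      exact ih (fun i hi => h i (by omega)) j hjs
    · have hj' : j = s := by omega
      rw [hj'] at hBj ⊢
      have hT : ∑ i ∈ Finset.range s, PP b i * c i < PP b s := M4 (fun i hi => h i (by omega))
      rw [dig, mul_comm (PP b s) (c s), Nat.add_mul_div_right _ _ hBj,
        Nat.div_eq_of_lt hT, zero_add, Nat.mod_eq_of_lt (h s (by omega))]

theorem M1 {b : ℕ → ℕ} {s x : ℕ} (h : x < PP b s) :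
    ∑ i ∈ Finset.range s, PP b i * dig b i x = x := by
  induction s generalizing x with
  | zero => simp [PP] at h; simp [h]
  | succ s ih =>
    have hb : ∀ i < s+1, 0 < b i := by
      intro i hi
      by_contra hbi
      have : b i = 0 := by omega
      have : PP b (s+1) = 0 := by
        refine Finset.prod_eq_zero (Finset.mem_range.2 hi) this
      omega
    have hBs : 0 < PP b s := PP_pos (fun x hx => hb x (by omega))
    rw [Finset.sum_range_succ]
    have hx : x = x % PP b s + PP b s * (x / PP b s) := (Nat.mod_add_div _ _).symm
    have hdig : ∀ i < s, dig b i x = dig b i (x % PP b s) := by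
      intro i hi
      conv_lhs => rw [hx]
      exact dig_add_high hi (PP_pos (fun y hy => hb y (by omega))) _ _
    rw [Finset.sum_congr rfl (fun i hi => by rw [hdig i (Finset.mem_range.1 hi)]),
      ih (Nat.mod_lt _ hBs)]
    have hq : x / PP b s < b s := by
      rw [Nat.div_lt_iff_lt_mul hBs]
      calc x < PP b (s+1) := h
        _ = b s * PP b s := by rw [PP_succ]; ring
    rw [dig, Nat.mod_eq_of_lt hq]
    omega

end RegAux

namespace RegAux

/-- the decomposition condition: `m = PP b j * a` with `b j ∤ a`. -/
def Cond (b : ℕ → ℕ) (j m : ℕ) : Prop := PP b j ∣ m ∧ ¬ b j ∣ m / PP b j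

theorem cond_unique {b : ℕ → ℕ} (hb : ∀ x, 0 < b x) {j j' m : ℕ}
    (h : Cond b j m) (h' : Cond b j' m) : j = j' := by
  rcases Nat.lt_trichotomy j j' with hlt | heq | hgt
  · exfalso
    obtain ⟨t, ht⟩ := (PP_dvd b (show j + 1 ≤ j' from hlt)).trans h'.1
    rw [PP_succ] at ht
    refine h.2 ⟨t, ?_⟩
    rw [ht, mul_assoc, Nat.mul_div_cancel_left _ (PP_pos (fun x _ => hb x))]
  · exact heq
  · exfalso
    obtain ⟨t, ht⟩ := (PP_dvd b (show j' + 1 ≤ j from hgt)).trans h.1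
    rw [PP_succ] at ht
    refine h'.2 ⟨t, ?_⟩
    rw [ht, mul_assoc, Nat.mul_div_cancel_left _ (PP_pos (fun x _ => hb x))]

theorem cond_exists {b : ℕ → ℕ} (hb : ∀ x, 0 < b x) {r m : ℕ} (h : ¬ PP b r ∣ m) :
    ∃ j < r, Cond b j m := by
  induction r with
  | zero => exact absurd (by simpa [PP] using (one_dvd m)) h
  | succ r ih =>
    by_cases hr : PP b r ∣ m
    · refine ⟨r, Nat.lt_succ_self r, hr, fun hd => h ?_⟩
      obtain ⟨t, ht⟩ := hd
      refine ⟨t, ?_⟩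
      rw [PP_succ, mul_assoc, ← ht, Nat.mul_div_cancel' hr]
    · obtain ⟨j, hj, hc⟩ := ih hr
      exact ⟨j, Nat.lt_succ_of_lt hj, hc⟩

/-- If the full product divides `m`, then no `j < r` satisfies the condition. -/
theorem not_cond_of_dvd {b : ℕ → ℕ} (hb : ∀ x, 0 < b x) {r m j : ℕ} (hj : j < r)
    (h : PP b r ∣ m) : ¬ Cond b j m := by
  intro hc
  obtain ⟨t, ht⟩ := (PP_dvd b (show j + 1 ≤ r from hj)).trans h
  rw [PP_succ] at ht
  refine hc.2 ⟨t, ?_⟩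
  rw [ht, mul_assoc, Nat.mul_div_cancel_left _ (PP_pos (fun x _ => hb x))]

end RegAux

namespace RegAux

/-- regularity for multisets -/
def Reg (a b : ℕ) (M : Multiset ℕ) : Prop :=
  (∀ i : ℕ, 1 ≤ i → Multiset.count (i * a) M = 0) ∧
  (∀ i : ℕ, 1 ≤ i → Multiset.count i M < b)

variable (bk bl : ℕ → ℕ) (r s : ℕ)

/-- the backward (recombination) map -/
def Mb (g : ℕ → ℕ → Multiset ℕ) : Multiset ℕ :=
  ∑ u ∈ Finset.range r, ∑ v ∈ Finset.range s,
    Multiset.map (fun x => PP bk u * x) (PP bl v • g u v)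

/-- the forward (splitting) map -/
def Mf (M : Multiset ℕ) (u v : ℕ) : Multiset ℕ :=
  ∑ a ∈ (M.toFinset.image (· / PP bk u)).filter (fun a => a ≠ 0 ∧ ¬ bk u ∣ a),
    dig bl v (Multiset.count (PP bk u * a) M) • ({a} : Multiset ℕ)

theorem count_map_mul {K : ℕ} (hK : 0 < K) (M : Multiset ℕ) (m : ℕ) :
    Multiset.count m (Multiset.map (fun x => K * x) M)
      = if K ∣ m then Multiset.count (m / K) M else 0 := by
  by_cases h : K ∣ m
  · obtain ⟨a, rfl⟩ := h
    rw [if_pos ⟨a, rfl⟩, Nat.mul_div_cancel_left _ hK,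
      Multiset.count_map_eq_count' _ _ (mul_right_injective₀ hK.ne') a]
  · rw [if_neg h, Multiset.count_eq_zero]
    intro hm
    obtain ⟨x, _, rfl⟩ := Multiset.mem_map.1 hm
    exact h ⟨x, rfl⟩

theorem count_Mf (hbk : ∀ x, 0 < bk x) (M : Multiset ℕ) (u v a : ℕ) :
    Multiset.count a (Mf bk bl M u v)
      = if a ≠ 0 ∧ ¬ bk u ∣ a then dig bl v (Multiset.count (PP bk u * a) M) else 0 := by
  rw [Mf, Multiset.count_sum']
  have : ∀ x ∈ (M.toFinset.image (· / PP bk u)).filter (fun a => a ≠ 0 ∧ ¬ bk u ∣ a),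
      Multiset.count a (dig bl v (Multiset.count (PP bk u * x) M) • ({x} : Multiset ℕ))
      = if a = x then dig bl v (Multiset.count (PP bk u * x) M) else 0 := by
    intro x _
    rw [Multiset.count_nsmul, Multiset.count_singleton]
    split <;> simp
  rw [Finset.sum_congr rfl this, Finset.sum_ite_eq]
  by_cases hmem : a ∈ (M.toFinset.image (· / PP bk u)).filter (fun a => a ≠ 0 ∧ ¬ bk u ∣ a)
  · rw [if_pos hmem, if_pos (Finset.mem_filter.1 hmem).2]
  · rw [if_neg hmem]
    by_cases hc : a ≠ 0 ∧ ¬ bk u ∣ a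
    · rw [if_pos hc]
      have hcount : Multiset.count (PP bk u * a) M = 0 := by
        rw [Multiset.count_eq_zero]
        intro hm
        refine hmem (Finset.mem_filter.2 ⟨Finset.mem_image.2 ⟨PP bk u * a, Multiset.mem_toFinset.2 hm, ?_⟩, hc⟩)
        exact Nat.mul_div_cancel_left _ (PP_pos (fun x _ => hbk x))
      rw [hcount]
      simp [dig]
    · rw [if_neg hc]

theorem count_Mb (hbk : ∀ x, 0 < bk x) (g : ℕ → ℕ → Multiset ℕ) (m : ℕ) :
    Multiset.count m (Mb bk bl r s g)
      = ∑ u ∈ Finset.range r, ∑ v ∈ Finset.range s,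
          (if PP bk u ∣ m then PP bl v * Multiset.count (m / PP bk u) (g u v) else 0) := by
  rw [Mb, Multiset.count_sum']
  refine Finset.sum_congr rfl (fun u _ => ?_)
  rw [Multiset.count_sum']
  refine Finset.sum_congr rfl (fun v _ => ?_)
  rw [count_map_mul (PP_pos (fun x _ => hbk x))]
  split
  · rw [Multiset.count_nsmul]
  · rfl

end RegAux

namespace RegAux

section Core

variable {bk bl : ℕ → ℕ} {r s : ℕ}

theorem count_g_zero {g : ℕ → ℕ → Multiset ℕ} {u v : ℕ}
    (hg : Reg (bk u) (bl v) (g u v)) (hgpos : ∀ x ∈ g u v, 0 < x)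
    {a : ℕ} (ha : bk u ∣ a) : Multiset.count a (g u v) = 0 := by
  rcases Nat.eq_zero_or_pos a with rfl | hapos
  · rw [Multiset.count_eq_zero]
    intro h0
    exact absurd (hgpos 0 h0) (lt_irrefl 0)
  · have h1 : 1 ≤ a / bk u := by
      rw [Nat.one_le_div_iff (Nat.pos_of_dvd_of_pos ha hapos)]
      exact Nat.le_of_dvd hapos ha
    have := hg.1 (a / bk u) h1
    rwa [Nat.div_mul_cancel ha] at this

theorem inner_zero (hbk : ∀ x, 0 < bk x) {g : ℕ → ℕ → Multiset ℕ} {u m : ℕ}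
    (hg : ∀ v < s, Reg (bk u) (bl v) (g u v))
    (hgpos : ∀ v < s, ∀ x ∈ g u v, 0 < x)
    (hnc : ¬ Cond bk u m) :
    ∑ v ∈ Finset.range s, (if PP bk u ∣ m then PP bl v * Multiset.count (m / PP bk u) (g u v) else 0) = 0 := by
  refine Finset.sum_eq_zero (fun v hv => ?_)
  by_cases hd : PP bk u ∣ m
  · rw [if_pos hd]
    have hdvd : bk u ∣ m / PP bk u := by
      by_contra hnd
      exact hnc ⟨hd, hnd⟩
    rw [count_g_zero (hg v (Finset.mem_range.1 hv)) (hgpos v (Finset.mem_range.1 hv)) hdvd, mul_zero]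
  · rw [if_neg hd]

theorem count_Mb_eq (hbk : ∀ x, 0 < bk x) {g : ℕ → ℕ → Multiset ℕ}
    (hg : ∀ u < r, ∀ v < s, Reg (bk u) (bl v) (g u v))
    (hgpos : ∀ u < r, ∀ v < s, ∀ x ∈ g u v, 0 < x)
    {u m : ℕ} (hu : u < r) (hc : Cond bk u m) :
    Multiset.count m (Mb bk bl r s g)
      = ∑ v ∈ Finset.range s, PP bl v * Multiset.count (m / PP bk u) (g u v) := by
  rw [count_Mb bk bl r s hbk]
  rw [Finset.sum_eq_single_of_mem u (Finset.mem_range.2 hu)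
    (fun u' hu' hne => inner_zero hbk (hg u' (Finset.mem_range.1 hu'))
      (hgpos u' (Finset.mem_range.1 hu'))
      (fun hc' => hne (cond_unique hbk hc' hc)))]
  exact Finset.sum_congr rfl (fun v _ => if_pos hc.1)

theorem count_Mb_zero_all (hbk : ∀ x, 0 < bk x) {g : ℕ → ℕ → Multiset ℕ}
    (hg : ∀ u < r, ∀ v < s, Reg (bk u) (bl v) (g u v))
    (hgpos : ∀ u < r, ∀ v < s, ∀ x ∈ g u v, 0 < x)
    {m : ℕ} (h : ∀ u < r, ¬ Cond bk u m) :
    Multiset.count m (Mb bk bl r s g) = 0 := by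
  rw [count_Mb bk bl r s hbk]
  exact Finset.sum_eq_zero (fun u hu => inner_zero hbk (hg u (Finset.mem_range.1 hu))
    (hgpos u (Finset.mem_range.1 hu)) (h u (Finset.mem_range.1 hu)))

theorem count_Mb_at_zero (hbk : ∀ x, 0 < bk x) {g : ℕ → ℕ → Multiset ℕ}
    (hgpos : ∀ u < r, ∀ v < s, ∀ x ∈ g u v, 0 < x) :
    Multiset.count 0 (Mb bk bl r s g) = 0 := by
  rw [count_Mb bk bl r s hbk]
  refine Finset.sum_eq_zero (fun u hu => Finset.sum_eq_zero (fun v hv => ?_))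
  rw [if_pos (dvd_zero _), Nat.zero_div]
  rw [Multiset.count_eq_zero.2 (fun h0 => absurd (hgpos u (Finset.mem_range.1 hu) v
    (Finset.mem_range.1 hv) 0 h0) (lt_irrefl 0)), mul_zero]

theorem Mb_pos (hbk : ∀ x, 0 < bk x) {g : ℕ → ℕ → Multiset ℕ}
    (hgpos : ∀ u < r, ∀ v < s, ∀ x ∈ g u v, 0 < x) :
    ∀ x ∈ Mb bk bl r s g, 0 < x := by
  intro x hx
  rcases Nat.eq_zero_or_pos x with rfl | h
  · rw [← Multiset.count_pos, count_Mb_at_zero hbk hgpos] at hx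
    omega
  · exact h

theorem Mb_reg (hbk : ∀ x, 0 < bk x) (hbl : ∀ x, 0 < bl x) {g : ℕ → ℕ → Multiset ℕ}
    (hg : ∀ u < r, ∀ v < s, Reg (bk u) (bl v) (g u v))
    (hgpos : ∀ u < r, ∀ v < s, ∀ x ∈ g u v, 0 < x) :
    Reg (PP bk r) (PP bl s) (Mb bk bl r s g) := by
  constructor
  · intro i hi
    exact count_Mb_zero_all hbk hg hgpos
      (fun u hu => not_cond_of_dvd hbk hu (dvd_mul_left _ _))
  · intro i hi
    by_cases hex : ∃ u < r, Cond bk u i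
    · obtain ⟨u, hu, hc⟩ := hex
      rw [count_Mb_eq hbk hg hgpos hu hc]
      refine M4 (fun v hv => ?_)
      have ha : 1 ≤ i / PP bk u := by
        rw [Nat.one_le_div_iff (PP_pos (fun x _ => hbk x))]
        exact Nat.le_of_dvd (by omega) hc.1
      exact (hg u hu v hv).2 _ ha
    · push_neg at hex
      rw [count_Mb_zero_all hbk hg hgpos hex]
      exact PP_pos (fun x _ => hbl x)

theorem Mb_sum (hbk : ∀ x, 0 < bk x) (g : ℕ → ℕ → Multiset ℕ) :
    (Mb bk bl r s g).sum
      = ∑ u ∈ Finset.range r, ∑ v ∈ Finset.range s, PP bk u * PP bl v * (g u v).sum := by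
  have hsum : ∀ {X : Type} (t : Finset X) (f : X → Multiset ℕ),
      (∑ i ∈ t, f i).sum = ∑ i ∈ t, (f i).sum := by
    intro X t f
    rw [← Multiset.coe_sumAddMonoidHom, map_sum]
  rw [Mb, hsum]
  refine Finset.sum_congr rfl (fun u _ => ?_)
  rw [hsum]
  refine Finset.sum_congr rfl (fun v _ => ?_)
  have h1 : (Multiset.map (fun x => PP bk u * x) (PP bl v • g u v)).sum
      = PP bk u * (PP bl v • g u v).sum := by
    have := Multiset.sum_map_mul_left (s := PP bl v • g u v) (a := PP bk u) (f := fun x => x)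
    simpa using this
  rw [h1]
  have h2 : (PP bl v • g u v).sum = PP bl v * (g u v).sum := by
    simpa using map_nsmul Multiset.sumAddMonoidHom (PP bl v) (g u v)
  rw [h2, mul_assoc]

theorem Mf_reg (hbl : ∀ x, 0 < bl x) (hbk : ∀ x, 0 < bk x) (M : Multiset ℕ) (u v : ℕ) :
    Reg (bk u) (bl v) (Mf bk bl M u v) := by
  constructor
  · intro i hi
    rw [count_Mf bk bl hbk]
    rw [if_neg (by
      intro h
      exact h.2 (dvd_mul_left _ _))]
  · intro i hi
    rw [count_Mf bk bl hbk]
    split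
    · exact Nat.mod_lt _ (hbl v)
    · exact hbl v

theorem Mf_pos (hbk : ∀ x, 0 < bk x) (M : Multiset ℕ) (u v : ℕ) :
    ∀ x ∈ Mf bk bl M u v, 0 < x := by
  intro x hx
  rcases Nat.eq_zero_or_pos x with rfl | h
  · rw [← Multiset.count_pos, count_Mf bk bl hbk, if_neg (by simp)] at hx
    omega
  · exact h

theorem Mb_Mf (hbk : ∀ x, 0 < bk x) (hbl : ∀ x, 0 < bl x) {M : Multiset ℕ}
    (hM : Reg (PP bk r) (PP bl s) M) (hMpos : ∀ x ∈ M, 0 < x) :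
    Mb bk bl r s (Mf bk bl M) = M := by
  have hg : ∀ u < r, ∀ v < s, Reg (bk u) (bl v) (Mf bk bl M u v) :=
    fun u _ v _ => Mf_reg hbl hbk M u v
  have hgpos : ∀ u < r, ∀ v < s, ∀ x ∈ Mf bk bl M u v, 0 < x :=
    fun u _ v _ => Mf_pos hbk M u v
  ext m
  rcases Nat.eq_zero_or_pos m with rfl | hm
  · rw [count_Mb_at_zero hbk hgpos, eq_comm, Multiset.count_eq_zero]
    intro h0
    exact absurd (hMpos 0 h0) (lt_irrefl 0)
  by_cases hdvd : PP bk r ∣ m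
  · rw [count_Mb_zero_all hbk hg hgpos (fun u hu => not_cond_of_dvd hbk hu hdvd), eq_comm]
    have h1 : 1 ≤ m / PP bk r := by
      rw [Nat.one_le_div_iff (PP_pos (fun x _ => hbk x))]
      exact Nat.le_of_dvd hm hdvd
    have := hM.1 (m / PP bk r) h1
    rwa [Nat.div_mul_cancel hdvd] at this
  · obtain ⟨u, hu, hc⟩ := cond_exists hbk hdvd
    rw [count_Mb_eq hbk hg hgpos hu hc]
    have ha0 : m / PP bk u ≠ 0 := by
      have : 1 ≤ m / PP bk u := by
        rw [Nat.one_le_div_iff (PP_pos (fun x _ => hbk x))]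
        exact Nat.le_of_dvd hm hc.1
      omega
    have hcongr : ∀ v ∈ Finset.range s,
        PP bl v * Multiset.count (m / PP bk u) (Mf bk bl M u v)
        = PP bl v * dig bl v (Multiset.count m M) := by
      intro v _
      rw [count_Mf bk bl hbk, if_pos ⟨ha0, hc.2⟩, Nat.mul_div_cancel' hc.1]
    rw [Finset.sum_congr rfl hcongr]
    exact M1 (hM.2 m hm)

theorem Mf_Mb (hbk : ∀ x, 0 < bk x) (hbl : ∀ x, 0 < bl x) {g : ℕ → ℕ → Multiset ℕ}
    (hg : ∀ u < r, ∀ v < s, Reg (bk u) (bl v) (g u v))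
    (hgpos : ∀ u < r, ∀ v < s, ∀ x ∈ g u v, 0 < x)
    {u v : ℕ} (hu : u < r) (hv : v < s) :
    Mf bk bl (Mb bk bl r s g) u v = g u v := by
  ext a
  rw [count_Mf bk bl hbk]
  by_cases hcond : a ≠ 0 ∧ ¬ bk u ∣ a
  · rw [if_pos hcond]
    have hc : Cond bk u (PP bk u * a) :=
      ⟨dvd_mul_right _ _, by
        rw [Nat.mul_div_cancel_left _ (PP_pos (fun x _ => hbk x))]
        exact hcond.2⟩
    rw [count_Mb_eq hbk hg hgpos hu hc]
    have hdc : PP bk u * a / PP bk u = a := Nat.mul_div_cancel_left _ (PP_pos (fun x _ => hbk x))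
    rw [hdc]
    exact M2 (fun v' hv' => (hg u hu v' hv').2 a (by omega)) v hv
  · rw [if_neg hcond, eq_comm]
    push_neg at hcond
    rcases Nat.eq_zero_or_pos a with rfl | ha
    · rw [Multiset.count_eq_zero]
      intro h0
      exact absurd (hgpos u hu v hv 0 h0) (lt_irrefl 0)
    · exact count_g_zero (hg u hu v hv) (hgpos u hu v hv) (hcond (by omega))

end Core

end RegAux

namespace RegAux

theorem conv_filter {r : ℕ} (kk : Fin r → ℕ) (u : Fin r) :
    ∏ x ∈ Finset.univ.filter (fun x => x < u), kk x
      = PP (fun j => if h : j < r then kk ⟨j, h⟩ else 1) u.val := by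
  rw [PP]
  refine Finset.prod_nbij' (fun x => x.val) (fun x => if h : x < r then ⟨x, h⟩ else u)
    ?_ ?_ ?_ ?_ ?_
  · intro a ha
    rw [Finset.mem_range]
    exact (Finset.mem_filter.1 ha).2
  · intro b hb
    have hb' : b < u.val := Finset.mem_range.1 hb
    have hbr : b < r := lt_trans hb' u.isLt
    rw [dif_pos hbr]
    exact Finset.mem_filter.2 ⟨Finset.mem_univ _, hb'⟩
  · intro a ha
    rw [dif_pos a.isLt]
  · intro b hb
    have hb' : b < u.val := Finset.mem_range.1 hb
    rw [dif_pos (lt_trans hb' u.isLt)]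
  · intro a ha
    rw [dif_pos a.isLt]

theorem conv_prod {r : ℕ} (kk : Fin r → ℕ) :
    ∏ u, kk u = PP (fun j => if h : j < r then kk ⟨j, h⟩ else 1) r := by
  rw [PP, ← Fin.prod_univ_eq_prod_range]
  refine Finset.prod_congr rfl (fun u _ => ?_)
  rw [dif_pos u.isLt]

theorem sigma_partition_ext {x y : Σ m : ℕ, m.Partition} (h : x.2.parts = y.2.parts) : x = y := by
  obtain ⟨m, p⟩ := x
  obtain ⟨m', p'⟩ := y
  have hm : m = m' := by rw [← p.parts_sum, ← p'.parts_sum]; exact congrArg _ h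
  subst hm
  exact congrArg _ (Nat.Partition.ext h)

end RegAux
theorem RegAux.Reg_congr {a a' b b' : ℕ} {M : Multiset ℕ} (ha : a = a') (hb : b = b')
    (h : RegAux.Reg a b M) : RegAux.Reg a' b' M := by subst ha; subst hb; exact h

/-- A partition is `a,b`-regular when no part is divisible by `a` and every part occurs
fewer than `b` times. -/
def IsRegularPartition {m : ℕ} (a b : ℕ) (p : m.Partition) : Prop :=
  (∀ i : ℕ, 1 ≤ i → Multiset.count (i * a) p.parts = 0) ∧
  (∀ i : ℕ, 1 ≤ i → Multiset.count i p.parts < b)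

open Finset

/-- If `k = k_1 ⋯ k_r` and `l = l_1 ⋯ l_s` are products of positive integers, with
partial products `K_u = k_1 ⋯ k_{u-1}` and `L_v = l_1 ⋯ l_{v-1}`, then the number of
`k,l`-regular partitions of `n` equals the number of tuples `(λ_{u,v})` of
`k_u,l_v`-regular partitions with `Σ_{u,v} K_u · L_v · |λ_{u,v}| = n`. -/
theorem regular_partition_decomposition (r s : ℕ) (kk : Fin r → ℕ) (ll : Fin s → ℕ)
    (hkk : ∀ u, 0 < kk u) (hll : ∀ v, 0 < ll v) (n : ℕ) :
    Nat.card {p : n.Partition // IsRegularPartition (∏ u, kk u) (∏ v, ll v) p} =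
    Nat.card {F : Fin r → Fin s → Σ m : ℕ, m.Partition //
      (∀ u v, IsRegularPartition (kk u) (ll v) (F u v).2) ∧
      (∑ u, ∑ v, (∏ x ∈ Finset.univ.filter (fun x => x < u), kk x) *
        (∏ y ∈ Finset.univ.filter (fun y => y < v), ll y) * (F u v).1) = n} := by
  classical
  apply Nat.card_congr
  set bk : ℕ → ℕ := fun j => if h : j < r then kk ⟨j, h⟩ else 1 with hbk_def
  set bl : ℕ → ℕ := fun j => if h : j < s then ll ⟨j, h⟩ else 1 with hbl_def
  have hbk : ∀ x, 0 < bk x := by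
    intro x; rw [hbk_def]; dsimp only; split
    · exact hkk _
    · exact one_pos
  have hbl : ∀ x, 0 < bl x := by
    intro x; rw [hbl_def]; dsimp only; split
    · exact hll _
    · exact one_pos
  have hbkval : ∀ u : Fin r, bk u.val = kk u := by
    intro u; rw [hbk_def]; exact dif_pos u.isLt
  have hblval : ∀ v : Fin s, bl v.val = ll v := by
    intro v; rw [hbl_def]; exact dif_pos v.isLt
  have hconvk : (∏ u, kk u) = RegAux.PP bk r := by rw [hbk_def]; exact RegAux.conv_prod kk
  have hconvl : (∏ v, ll v) = RegAux.PP bl s := by rw [hbl_def]; exact RegAux.conv_prod ll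
  have convsum : ∀ (w : Fin r → Fin s → ℕ) (w' : ℕ → ℕ → ℕ),
      (∀ u : Fin r, ∀ v : Fin s, w' u.val v.val = w u v) →
      (∑ u ∈ Finset.range r, ∑ v ∈ Finset.range s, RegAux.PP bk u * RegAux.PP bl v * w' u v)
      = ∑ u : Fin r, ∑ v : Fin s, (∏ x ∈ Finset.univ.filter (fun x => x < u), kk x) *
        (∏ y ∈ Finset.univ.filter (fun y => y < v), ll y) * w u v := by
    intro w w' hw
    rw [← Fin.sum_univ_eq_sum_range
      (fun j => ∑ v ∈ Finset.range s, RegAux.PP bk j * RegAux.PP bl v * w' j v) r]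
    refine Finset.sum_congr rfl fun u _ => ?_
    rw [← Fin.sum_univ_eq_sum_range (fun j => RegAux.PP bk u.val * RegAux.PP bl j * w' u.val j) s]
    refine Finset.sum_congr rfl fun v _ => ?_
    rw [RegAux.conv_filter kk u, RegAux.conv_filter ll v, hw u v, hbk_def, hbl_def]
  refine ⟨fun p => ⟨fun u v => ⟨(RegAux.Mf bk bl p.1.parts u.val v.val).sum,
      ⟨RegAux.Mf bk bl p.1.parts u.val v.val, ?_, rfl⟩⟩, ?_, ?_⟩,
    fun F => ⟨⟨RegAux.Mb bk bl r s (fun u v => if h : u < r ∧ v < s then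
        ((F.1 ⟨u, h.1⟩ ⟨v, h.2⟩).2.parts) else 0), ?_, ?_⟩, ?_⟩, ?_, ?_⟩
  · -- parts_pos of Mf
    intro i hi
    exact RegAux.Mf_pos hbk p.1.parts u.val v.val i hi
  · -- regularity of each Mf
    intro u v
    have h := RegAux.Mf_reg (bk := bk) (bl := bl) hbl hbk p.1.parts u.val v.val
    rw [hbkval u, hblval v] at h
    exact h
  · -- sum condition of toFun
    have hM : RegAux.Reg (RegAux.PP bk r) (RegAux.PP bl s) p.1.parts :=
      RegAux.Reg_congr hconvk hconvl p.2
    have hMpos : ∀ x ∈ p.1.parts, 0 < x := fun x hx => p.1.parts_pos hx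
    show (∑ u : Fin r, ∑ v : Fin s, (∏ x ∈ Finset.univ.filter (fun x => x < u), kk x) *
        (∏ y ∈ Finset.univ.filter (fun y => y < v), ll y) *
        (RegAux.Mf bk bl p.1.parts u.val v.val).sum) = n
    rw [← convsum (fun u v => (RegAux.Mf bk bl p.1.parts u.val v.val).sum)
      (fun u v => (RegAux.Mf bk bl p.1.parts u v).sum) (fun u v => rfl)]
    rw [← RegAux.Mb_sum (bl := bl) (r := r) (s := s) hbk (RegAux.Mf bk bl p.1.parts)]
    rw [RegAux.Mb_Mf hbk hbl hM hMpos]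
    exact p.1.parts_sum
  · -- parts_pos of Mb
    intro i hi
    have hGpos : ∀ u < r, ∀ v < s, ∀ x ∈ (if h : u < r ∧ v < s then
        ((F.1 ⟨u, h.1⟩ ⟨v, h.2⟩).2.parts) else (0 : Multiset ℕ)), 0 < x := by
      intro u hu v hv x hx
      rw [dif_pos ⟨hu, hv⟩] at hx
      exact (F.1 _ _).2.parts_pos hx
    exact RegAux.Mb_pos hbk hGpos i hi
  · -- parts_sum of Mb
    have hGpos : ∀ u < r, ∀ v < s, ∀ x ∈ (if h : u < r ∧ v < s then
        ((F.1 ⟨u, h.1⟩ ⟨v, h.2⟩).2.parts) else (0 : Multiset ℕ)), 0 < x := by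
      intro u hu v hv x hx
      rw [dif_pos ⟨hu, hv⟩] at hx
      exact (F.1 _ _).2.parts_pos hx
    rw [RegAux.Mb_sum hbk]
    refine Eq.trans (convsum (fun u v => (F.1 u v).1)
      (fun u v => (if h : u < r ∧ v < s then
        ((F.1 ⟨u, h.1⟩ ⟨v, h.2⟩).2.parts) else (0 : Multiset ℕ)).sum) ?_) F.2.2
    intro u v
    rw [dif_pos ⟨u.isLt, v.isLt⟩]
    exact (F.1 u v).2.parts_sum
  · -- regularity of Mb
    have hGpos : ∀ u < r, ∀ v < s, ∀ x ∈ (if h : u < r ∧ v < s then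
        ((F.1 ⟨u, h.1⟩ ⟨v, h.2⟩).2.parts) else (0 : Multiset ℕ)), 0 < x := by
      intro u hu v hv x hx
      rw [dif_pos ⟨hu, hv⟩] at hx
      exact (F.1 _ _).2.parts_pos hx
    have hGreg : ∀ u < r, ∀ v < s, RegAux.Reg (bk u) (bl v) (if h : u < r ∧ v < s then
        ((F.1 ⟨u, h.1⟩ ⟨v, h.2⟩).2.parts) else (0 : Multiset ℕ)) := by
      intro u hu v hv
      rw [dif_pos ⟨hu, hv⟩]
      have h := F.2.1 ⟨u, hu⟩ ⟨v, hv⟩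
      rw [show bk u = kk ⟨u, hu⟩ from by rw [hbk_def]; exact dif_pos hu,
        show bl v = ll ⟨v, hv⟩ from by rw [hbl_def]; exact dif_pos hv]
      exact h
    exact RegAux.Reg_congr hconvk.symm hconvl.symm (RegAux.Mb_reg hbk hbl hGreg hGpos)
  · -- left inverse
    intro p
    apply Subtype.ext
    apply Nat.Partition.ext
    have hM : RegAux.Reg (RegAux.PP bk r) (RegAux.PP bl s) p.1.parts :=
      RegAux.Reg_congr hconvk hconvl p.2
    have hMpos : ∀ x ∈ p.1.parts, 0 < x := fun x hx => p.1.parts_pos hx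
    refine Eq.trans ?_ (RegAux.Mb_Mf (r := r) (s := s) hbk hbl hM hMpos)
    dsimp only
    unfold RegAux.Mb
    refine Finset.sum_congr rfl fun u hu => ?_
    refine Finset.sum_congr rfl fun v hv => ?_
    refine congrArg _ (congrArg _ ?_)
    dsimp only
    rw [dif_pos ⟨Finset.mem_range.1 hu, Finset.mem_range.1 hv⟩]
  · -- right inverse
    intro F
    apply Subtype.ext
    funext u v
    apply RegAux.sigma_partition_ext
    have hGpos : ∀ u < r, ∀ v < s, ∀ x ∈ (if h : u < r ∧ v < s then
        ((F.1 ⟨u, h.1⟩ ⟨v, h.2⟩).2.parts) else (0 : Multiset ℕ)), 0 < x := by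
      intro u hu v hv x hx
      rw [dif_pos ⟨hu, hv⟩] at hx
      exact (F.1 _ _).2.parts_pos hx
    have hGreg : ∀ u < r, ∀ v < s, RegAux.Reg (bk u) (bl v) (if h : u < r ∧ v < s then
        ((F.1 ⟨u, h.1⟩ ⟨v, h.2⟩).2.parts) else (0 : Multiset ℕ)) := by
      intro u hu v hv
      rw [dif_pos ⟨hu, hv⟩]
      have h := F.2.1 ⟨u, hu⟩ ⟨v, hv⟩
      rw [show bk u = kk ⟨u, hu⟩ from by rw [hbk_def]; exact dif_pos hu,
        show bl v = ll ⟨v, hv⟩ from by rw [hbl_def]; exact dif_pos hv]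
      exact h
    have h := RegAux.Mf_Mb hbk hbl hGreg hGpos u.isLt v.isLt
    dsimp only
    rw [h, dif_pos ⟨u.isLt, v.isLt⟩]
end

section
/- Let k ≥ 2 be an integer and n a nonnegative integer. The map which sends a partition λ of n with frequency sequence (f_i)_{i≥1} satisfying f_{ik} = 0 for all i ≥ 1 to the partition μ whose frequency sequence (g_j)_{j≥1} is defined by: for every i not divisible by k and every u ≥ 0, g_{i·k^u} is the coefficient of k^u in the base-k expansion of f_i (so f_i = Σ_{u≥0} g_{i·k^u} · k^u with 0 ≤ g_{i·k^u} < k), is a well-defined weight-preserving bijection from the set of partitions of n into parts not divisible by k onto the set of partitions of n in which every part occurs fewer than k times. -/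
open Finset

namespace GlaisherAux

/-- Digit extraction: the `u`-th base-`k` digit of `m` is `m / k ^ u % k`. -/
lemma digit_getD {k : ℕ} (hk : 2 ≤ k) (m u : ℕ) :
    (Nat.digits k m).getD u 0 = m / k ^ u % k := by
  induction u generalizing m with
  | zero =>
    rcases Nat.eq_zero_or_pos m with h | h
    · subst h; simp
    · rw [Nat.digits_def' (by omega : 1 < k) h]
      simp
  | succ u ih =>
    rcases Nat.eq_zero_or_pos m with h | h
    · subst h; simp
    · rw [Nat.digits_def' (by omega : 1 < k) h, List.getD_cons_succ, ih,
        Nat.div_div_eq_div_mul, ← pow_succ']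

/-- Truncated re-evaluation of digits. -/
lemma sum_getD_mul (k : ℕ) (l : List ℕ) : ∀ L, l.length ≤ L →
    ∑ u ∈ range L, l.getD u 0 * k ^ u = Nat.ofDigits k l := by
  induction l with
  | nil => intro L _; simp [Nat.ofDigits]
  | cons a t ih =>
    intro L hL
    obtain ⟨L', rfl⟩ : ∃ L', L = L' + 1 := ⟨L - 1, by simp at hL; omega⟩
    rw [Finset.sum_range_succ']
    simp only [List.getD_cons_succ, List.getD_cons_zero, pow_zero, mul_one, pow_succ']
    have ht : t.length ≤ L' := by simp at hL; omega
    rw [Nat.ofDigits_cons]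
    rw [← ih L' ht, Finset.mul_sum, add_comm]
    congr 1
    apply Finset.sum_congr rfl
    intro x _
    ring

lemma sum_lt_pow {k : ℕ} (hk : 2 ≤ k) (g : ℕ → ℕ) (hg : ∀ u, g u < k) (L : ℕ) :
    ∑ u ∈ range L, g u * k ^ u < k ^ L := by
  induction L with
  | zero => simp
  | succ L ih =>
    rw [Finset.sum_range_succ, pow_succ]
    have h1 := hg L
    have h2 : 0 < k ^ L := pow_pos (by omega) L
    nlinarith

/-- The `u₀`-th digit of `∑_{u<L} g u * k^u` with all `g u < k`. -/
lemma digit_of_sum_s10 {k : ℕ} (hk : 2 ≤ k) (g : ℕ → ℕ) (hg : ∀ u, g u < k) (L u0 : ℕ) :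
    (Nat.digits k (∑ u ∈ range L, g u * k ^ u)).getD u0 0 = if u0 < L then g u0 else 0 := by
  rw [digit_getD hk]
  split_ifs with h
  · have hsplit : ∑ u ∈ range L, g u * k ^ u =
        ((∑ u ∈ range u0, g u * k ^ u) + g u0 * k ^ u0) + ∑ u ∈ Ico (u0 + 1) L, g u * k ^ u := by
      rw [← Finset.sum_range_succ]
      exact (Finset.sum_range_add_sum_Ico _ (by omega : u0 + 1 ≤ L)).symm
    have hdvd : (k : ℕ) ^ (u0 + 1) ∣ ∑ u ∈ Ico (u0 + 1) L, g u * k ^ u := by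
      apply Finset.dvd_sum
      intro u hu
      exact Dvd.dvd.mul_left (pow_dvd_pow k (Finset.mem_Ico.mp hu).1) _
    obtain ⟨c, hc⟩ := hdvd
    have hlo : ∑ u ∈ range u0, g u * k ^ u < k ^ u0 := sum_lt_pow hk g hg u0
    rw [hsplit, hc]
    have : (∑ u ∈ range u0, g u * k ^ u) + g u0 * k ^ u0 + k ^ (u0 + 1) * c =
        (∑ u ∈ range u0, g u * k ^ u) + k ^ u0 * (g u0 + k * c) := by ring
    rw [this, Nat.add_mul_div_left _ _ (pow_pos (by omega : 0 < k) u0),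
      Nat.div_eq_of_lt hlo, zero_add, Nat.add_mul_mod_self_left, Nat.mod_eq_of_lt (hg u0)]
  · have hlt : ∑ u ∈ range L, g u * k ^ u < k ^ u0 :=
      lt_of_lt_of_le (sum_lt_pow hk g hg L) (Nat.pow_le_pow_right (by omega) (by omega))
    rw [Nat.div_eq_of_lt hlt]
    simp

lemma digits_len_le {k m L : ℕ} (hk : 2 ≤ k) (h : m < k ^ L) :
    (Nat.digits k m).length ≤ L := by
  rcases Nat.eq_zero_or_pos m with rfl | hm
  · simp
  · rw [Nat.digits_len k m (by omega) (by omega)]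
    have := Nat.log_lt_of_lt_pow (by omega : m ≠ 0) h
    omega

lemma uniq_rep {k : ℕ} (hk : 2 ≤ k) : ∀ {u u' i i' : ℕ}, ¬ k ∣ i → ¬ k ∣ i' →
    i * k ^ u = i' * k ^ u' → i = i' ∧ u = u' := by
  intro u
  induction u with
  | zero =>
    intro u' i i' hi hi' h
    cases u' with
    | zero => simpa using h
    | succ u' =>
      exfalso; apply hi
      rw [pow_zero, mul_one] at h
      exact ⟨i' * k ^ u', by rw [h, pow_succ]; ring⟩
  | succ u ih =>
    intro u' i i' hi hi' h
    cases u' with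
    | zero =>
      exfalso; apply hi'
      rw [pow_zero, mul_one] at h
      exact ⟨i * k ^ u, by rw [← h, pow_succ]; ring⟩
    | succ u' =>
      have h' : i * k ^ u = i' * k ^ u' := by
        have hk0 : 0 < k := by omega
        apply Nat.eq_of_mul_eq_mul_right hk0
        rw [mul_assoc, mul_assoc, ← pow_succ, ← pow_succ]
        exact h
      obtain ⟨h1, h2⟩ := ih hi hi' h'
      exact ⟨h1, by omega⟩

lemma exists_rep {k : ℕ} (hk : 2 ≤ k) : ∀ j : ℕ, 1 ≤ j → ∃ i u, ¬ k ∣ i ∧ j = i * k ^ u := by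
  intro j
  induction j using Nat.strong_induction_on with
  | _ j ih =>
    intro hj
    by_cases h : k ∣ j
    · obtain ⟨j', rfl⟩ := h
      have hj' : 1 ≤ j' := by
        rcases Nat.eq_zero_or_pos j' with rfl | h; · simp at hj
        · exact h
      obtain ⟨i, u, hi, hrep⟩ := ih j' (by nlinarith) hj'
      exact ⟨i, u + 1, hi, by rw [hrep, pow_succ]; ring⟩
    · exact ⟨j, 0, h, by simp⟩

variable (k n : ℕ)

/-- Forward map on multisets: split each frequency into base-`k` digits. -/
def glA (s : Multiset ℕ) : Multiset ℕ :=
  ∑ i ∈ range (n + 1), ∑ u ∈ range (n + 1),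
    Multiset.replicate ((Nat.digits k (s.count i)).getD u 0) (i * k ^ u)

/-- Backward map on multisets: reassemble frequencies from digits. -/
def glB (t : Multiset ℕ) : Multiset ℕ :=
  ∑ i ∈ range (n + 1),
    if k ∣ i then 0 else
      Multiset.replicate (∑ u ∈ range (n + 1), t.count (i * k ^ u) * k ^ u) i

lemma multiset_sum_finset_sum {β : Type*} (s : Finset β) (f : β → Multiset ℕ) :
    (∑ b ∈ s, f b).sum = ∑ b ∈ s, (f b).sum :=
  map_sum Multiset.sumAddMonoidHom f s

lemma count_glA (hk : 2 ≤ k) (s : Multiset ℕ)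
    (hle : ∀ x ∈ s, x ≤ n)
    (h0 : ∀ i, k ∣ i → s.count i = 0)
    (hcnt : ∀ i, s.count i < k ^ (n + 1))
    {i : ℕ} (hi : ¬ k ∣ i) (u : ℕ) :
    (glA k n s).count (i * k ^ u) = (Nat.digits k (s.count i)).getD u 0 := by
  have hterm : ∀ i' u' : ℕ, (¬ (i' = i ∧ u' = u)) →
      (Multiset.replicate ((Nat.digits k (s.count i')).getD u' 0) (i' * k ^ u')).count
        (i * k ^ u) = 0 := by
    intro i' u' hne
    rw [Multiset.count_replicate]
    split_ifs with heq
    · by_cases hdi : k ∣ i'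
      · rw [h0 i' hdi]; simp
      · obtain ⟨h1, h2⟩ := uniq_rep hk hdi hi heq
        exact absurd ⟨h1, h2⟩ hne
    · rfl
  unfold glA
  rw [Multiset.count_sum']
  by_cases hin : i ≤ n ∧ u ≤ n
  · rw [Finset.sum_eq_single i]
    · rw [Multiset.count_sum']
      rw [Finset.sum_eq_single u]
      · rw [Multiset.count_replicate, if_pos rfl]
      · intro u' _ hne
        exact hterm i u' (by tauto)
      · intro hu; exact absurd (Finset.mem_range.mpr (by omega)) hu
    · intro i' _ hne
      rw [Multiset.count_sum']
      apply Finset.sum_eq_zero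
      intro u' _
      exact hterm i' u' (by tauto)
    · intro hi'; exact absurd (Finset.mem_range.mpr (by omega)) hi'
  · have hz : ∀ i' ∈ range (n + 1), (∑ u' ∈ range (n + 1),
        Multiset.replicate ((Nat.digits k (s.count i')).getD u' 0) (i' * k ^ u')).count
        (i * k ^ u) = 0 := by
      intro i' hi'
      rw [Multiset.count_sum']
      apply Finset.sum_eq_zero
      intro u' hu'
      apply hterm i' u'
      rintro ⟨rfl, rfl⟩
      simp only [Finset.mem_range] at hi' hu'
      omega
    rw [Finset.sum_eq_zero hz]
    rcases Nat.lt_or_ge n i with hni | hni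
    · rw [Multiset.count_eq_zero_of_notMem (fun hm => by have := hle i hm; omega)]
      simp
    · have hu : n < u := by omega
      rw [List.getD_eq_default]
      exact le_trans (digits_len_le hk (hcnt i)) (by omega)

lemma count_glB (t : Multiset ℕ) (j : ℕ) :
    (glB k n t).count j =
      if j ≤ n ∧ ¬ k ∣ j then ∑ u ∈ range (n + 1), t.count (j * k ^ u) * k ^ u else 0 := by
  unfold glB
  rw [Multiset.count_sum']
  by_cases hj : j ≤ n
  · rw [Finset.sum_eq_single j]
    · split_ifs with hd h
      · exact absurd hd h.2
      · simp
      · rw [Multiset.count_replicate, if_pos rfl]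
      · omega
    · intro i' _ hne
      split_ifs
      · simp
      · rw [Multiset.count_replicate, if_neg hne]
    · intro h; exact absurd (Finset.mem_range.mpr (by omega)) h
  · rw [if_neg (fun h => hj h.1), Finset.sum_eq_zero]
    intro i' hi'
    simp only [Finset.mem_range] at hi'
    split_ifs
    · simp
    · rw [Multiset.count_replicate, if_neg (by omega)]

lemma glA_pos (hk : 2 ≤ k) (s : Multiset ℕ) (h00 : s.count 0 = 0) :
    ∀ x ∈ glA k n s, 0 < x := by
  intro x hx
  unfold glA at hx
  obtain ⟨i, _, hx⟩ := Multiset.mem_sum.mp hx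
  obtain ⟨u, _, hx⟩ := Multiset.mem_sum.mp hx
  rcases Nat.eq_zero_or_pos i with rfl | hi
  · rw [h00] at hx; simp at hx
  · rw [Multiset.eq_of_mem_replicate hx]
    have : 0 < k ^ u := pow_pos (by omega) u
    positivity

lemma glB_mem (t : Multiset ℕ) : ∀ x ∈ glB k n t, 1 ≤ x ∧ x ≤ n := by
  intro x hx
  unfold glB at hx
  obtain ⟨i, hi, hx⟩ := Multiset.mem_sum.mp hx
  simp only [Finset.mem_range] at hi
  split_ifs at hx with hd
  · simp at hx
  · rw [Multiset.eq_of_mem_replicate hx]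
    constructor
    · rcases Nat.eq_zero_or_pos i with rfl | h
      · exact absurd (dvd_zero k) hd
      · exact h
    · omega

lemma sum_eq_sum_count_s10 (s : Multiset ℕ) (hle : ∀ x ∈ s, x ≤ n) :
    s.sum = ∑ i ∈ range (n + 1), s.count i * i := by
  nth_rewrite 1 [← Multiset.toFinset_sum_count_nsmul_eq s]
  rw [multiset_sum_finset_sum]
  simp only [Multiset.sum_nsmul, Multiset.sum_singleton, smul_eq_mul]
  apply Finset.sum_subset
  · intro x hx
    simp only [Multiset.mem_toFinset] at hx
    exact Finset.mem_range.mpr (by have := hle x hx; omega)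
  · intro x _ hx
    simp only [Multiset.mem_toFinset] at hx
    rw [Multiset.count_eq_zero_of_notMem hx, zero_mul]

lemma sum_glA (hk : 2 ≤ k) (s : Multiset ℕ) (hle : ∀ x ∈ s, x ≤ n)
    (hcnt : ∀ i, s.count i < k ^ (n + 1)) :
    (glA k n s).sum = s.sum := by
  unfold glA
  rw [multiset_sum_finset_sum]
  rw [sum_eq_sum_count_s10 n s hle]
  apply Finset.sum_congr rfl
  intro i _
  rw [multiset_sum_finset_sum]
  have : ∀ u ∈ range (n + 1),
      (Multiset.replicate ((Nat.digits k (s.count i)).getD u 0) (i * k ^ u)).sum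
      = ((Nat.digits k (s.count i)).getD u 0 * k ^ u) * i := by
    intro u _
    rw [Multiset.sum_replicate, smul_eq_mul]
    ring
  rw [Finset.sum_congr rfl this, ← Finset.sum_mul,
    sum_getD_mul k _ (n + 1) (digits_len_le hk (hcnt i)), Nat.ofDigits_digits]

lemma glB_glA (hk : 2 ≤ k) (s : Multiset ℕ) (hle : ∀ x ∈ s, x ≤ n)
    (h0 : ∀ i, k ∣ i → s.count i = 0) (hcnt : ∀ i, s.count i < k ^ (n + 1)) :
    glB k n (glA k n s) = s := by
  ext j
  rw [count_glB]
  split_ifs with h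
  · obtain ⟨hjn, hjk⟩ := h
    have hc : ∀ u : ℕ, (glA k n s).count (j * k ^ u) = (Nat.digits k (s.count j)).getD u 0 :=
      fun u => count_glA k n hk s hle h0 hcnt hjk u
    simp only [hc]
    rw [sum_getD_mul k _ (n + 1) (digits_len_le hk (hcnt j)), Nat.ofDigits_digits]
  · push_neg at h
    by_cases hd : k ∣ j
    · exact (h0 j hd).symm
    · have hjn : n < j := by
        by_contra hc
        exact hd (h (by omega))
      exact (Multiset.count_eq_zero_of_notMem fun hm => by have := hle j hm; omega).symm

lemma glB_count_lt (t : Multiset ℕ) (hk : 2 ≤ k) (hcnt : ∀ i, t.count i < k) (i : ℕ) :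
    (glB k n t).count i < k ^ (n + 1) := by
  rw [count_glB]
  split_ifs
  · exact sum_lt_pow hk _ (fun u => hcnt _) (n + 1)
  · exact pow_pos (by omega) _

lemma glB_h0 (t : Multiset ℕ) : ∀ i, k ∣ i → (glB k n t).count i = 0 := by
  intro i hd
  rw [count_glB, if_neg (fun h => h.2 hd)]

lemma glA_glB (hk : 2 ≤ k) (t : Multiset ℕ) (hpos : ∀ x ∈ t, 0 < x) (hle : ∀ x ∈ t, x ≤ n)
    (hcnt : ∀ i, t.count i < k) :
    glA k n (glB k n t) = t := by
  have hBle : ∀ x ∈ glB k n t, x ≤ n := fun x hx => (glB_mem k n t x hx).2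
  have hB0 := glB_h0 k n t
  have hBcnt := glB_count_lt k n t hk hcnt
  ext j
  rcases Nat.eq_zero_or_pos j with rfl | hj
  · rw [Multiset.count_eq_zero_of_notMem
        (fun hm => absurd (glA_pos k n hk _ (hB0 0 (dvd_zero k)) 0 hm) (lt_irrefl 0)),
      Multiset.count_eq_zero_of_notMem (fun hm => absurd (hpos 0 hm) (lt_irrefl 0))]
  · obtain ⟨i, u, hik, rfl⟩ := exists_rep hk j hj
    rw [count_glA k n hk _ hBle hB0 hBcnt hik u, count_glB]
    split_ifs with h
    · rw [digit_of_sum_s10 hk _ (fun u => hcnt _) (n + 1) u]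
      split_ifs with hu
      · rfl
      · symm
        apply Multiset.count_eq_zero_of_notMem
        intro hm
        have h1 := hle _ hm
        have h2 : n + 1 ≤ u := by omega
        have h3 : 2 ^ (n + 1) ≤ k ^ u :=
          le_trans (Nat.pow_le_pow_left hk (n + 1)) (Nat.pow_le_pow_right (by omega) h2)
        have h4 : n < 2 ^ (n + 1) := lt_of_lt_of_le (Nat.lt_two_pow_self (n := n))
          (Nat.pow_le_pow_right (by omega) (by omega))
        have hi1 : 1 ≤ i := by
          rcases Nat.eq_zero_or_pos i with rfl | h; · exact absurd (dvd_zero k) hik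
          · exact h
        nlinarith
    · push_neg at h
      have hin : n < i := by
        by_contra hc
        exact hik (h (by omega))
      have hi1 : 1 ≤ i := by omega
      have h1 : 0 < k ^ u := pow_pos (by omega) u
      simp only [Nat.digits_zero, List.getD_nil]
      symm
      apply Multiset.count_eq_zero_of_notMem
      intro hm
      have := hle _ hm
      nlinarith

end GlaisherAux

/-- **Glaisher's bijection via base-`k` digits of frequencies.** For `k ≥ 2`, the map
sending a partition of `n` with no part divisible by `k` (with frequencies `f_i`) to the
partition of `n` whose frequency at `i · k^u` (for `k ∤ i`, `u ≥ 0`) is the coefficient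
of `k^u` in the base-`k` expansion of `f_i` is a well-defined weight-preserving
bijection onto the set of partitions of `n` in which every part occurs fewer than `k`
times. (Weight preservation is encoded by both sides being partitions of `n`.) -/
theorem glaisher_bijection_digits (k : ℕ) (hk : 2 ≤ k) (n : ℕ) :
    ∃ Φ : {p : n.Partition // ∀ i : ℕ, 1 ≤ i → Multiset.count (i * k) p.parts = 0} →
          {p : n.Partition // ∀ i : ℕ, 1 ≤ i → Multiset.count i p.parts < k},
      Function.Bijective Φ ∧
      ∀ p : {p : n.Partition // ∀ i : ℕ, 1 ≤ i → Multiset.count (i * k) p.parts = 0},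
        ∀ i : ℕ, 1 ≤ i → ¬ k ∣ i → ∀ u : ℕ,
          Multiset.count (i * k ^ u) (Φ p).1.parts =
            (Nat.digits k (Multiset.count i p.1.parts)).getD u 0 := by
  classical
  open GlaisherAux in
  -- generic facts about partitions of n
  have hle : ∀ p : n.Partition, ∀ x ∈ p.parts, x ≤ n := by
    intro p x hx
    have := Multiset.single_le_sum (fun y _ => Nat.zero_le y) x hx
    rwa [p.parts_sum] at this
  have hcnt : ∀ p : n.Partition, ∀ i, p.parts.count i < k ^ (n + 1) := by
    intro p i
    have h1 : p.parts.count i ≤ Multiset.card p.parts := Multiset.count_le_card i _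
    have h2 : Multiset.card p.parts • 1 ≤ p.parts.sum :=
      Multiset.card_nsmul_le_sum (fun x hx => p.parts_pos hx)
    rw [smul_eq_mul, mul_one, p.parts_sum] at h2
    calc p.parts.count i ≤ n := le_trans h1 h2
    _ < 2 ^ (n + 1) := lt_of_lt_of_le (Nat.lt_two_pow_self (n := n))
        (Nat.pow_le_pow_right (by omega) (by omega))
    _ ≤ k ^ (n + 1) := Nat.pow_le_pow_left hk (n + 1)
  have h0 : ∀ p : {p : n.Partition // ∀ i : ℕ, 1 ≤ i → Multiset.count (i * k) p.parts = 0},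
      ∀ i, k ∣ i → p.1.parts.count i = 0 := by
    intro p i hd
    rcases Nat.eq_zero_or_pos i with rfl | hi
    · exact Multiset.count_eq_zero_of_notMem
        (fun hm => absurd (p.1.parts_pos hm) (lt_irrefl 0))
    · obtain ⟨m, rfl⟩ := hd
      have hm : 1 ≤ m := by
        rcases Nat.eq_zero_or_pos m with rfl | h; · simp at hi
        · exact h
      have := p.2 m hm
      rwa [mul_comm] at this
  -- forward map
  refine ⟨fun p => ⟨⟨glA k n p.1.parts,
      fun {x} hx => glA_pos k n hk _ (h0 p 0 (dvd_zero k)) x hx,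
      by rw [sum_glA k n hk _ (hle p.1) (hcnt p.1), p.1.parts_sum]⟩,
      ?_⟩, ?_, ?_⟩
  · -- counts < k
    intro j hj
    obtain ⟨i, u, hik, rfl⟩ := exists_rep hk j hj
    rw [count_glA k n hk _ (hle p.1) (h0 p) (hcnt p.1) hik u, digit_getD hk]
    exact Nat.mod_lt _ (by omega)
  · -- bijectivity via explicit inverse
    apply Function.bijective_iff_has_inverse.mpr
    refine ⟨fun q => ⟨⟨glB k n q.1.parts,
        fun {x} hx => (glB_mem k n q.1.parts x hx).1,
        ?_⟩, ?_⟩, ?_, ?_⟩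
    · -- sum of glB = n
      have hq : ∀ i, Multiset.count i (q.1.parts) < k := by
        intro i
        rcases Nat.eq_zero_or_pos i with rfl | hi
        · rw [Multiset.count_eq_zero_of_notMem
            (fun hm => absurd (q.1.parts_pos hm) (lt_irrefl 0))]
          omega
        · exact q.2 i hi
      have h1 : glA k n (glB k n q.1.parts) = q.1.parts :=
        glA_glB k n hk _ (fun x hx => q.1.parts_pos hx) (hle q.1) hq
      have h2 := sum_glA k n hk (glB k n q.1.parts)
        (fun x hx => (glB_mem k n q.1.parts x hx).2)
        (glB_count_lt k n q.1.parts hk hq)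
      rw [h1] at h2
      rw [← h2, q.1.parts_sum]
    · -- no parts divisible by k
      intro i hi
      exact glB_h0 k n q.1.parts (i * k) ⟨i, mul_comm i k⟩
    · -- left inverse
      intro p
      apply Subtype.ext
      apply Nat.Partition.ext
      exact glB_glA k n hk _ (hle p.1) (h0 p) (hcnt p.1)
    · -- right inverse
      intro q
      have hq : ∀ i, Multiset.count i (q.1.parts) < k := by
        intro i
        rcases Nat.eq_zero_or_pos i with rfl | hi
        · rw [Multiset.count_eq_zero_of_notMem
            (fun hm => absurd (q.1.parts_pos hm) (lt_irrefl 0))]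
          omega
        · exact q.2 i hi
      apply Subtype.ext
      apply Nat.Partition.ext
      exact glA_glB k n hk _ (fun x hx => q.1.parts_pos hx) (hle q.1) hq
  · -- the digit formula
    intro p i hi hik u
    exact count_glA k n hk _ (hle p.1) (h0 p) (hcnt p.1) hik u
end
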